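/- arXiv:2010.09995 — 13 statements merged into one kernel-verified Lean document; each statement's English description precedes it below -/
import Mathlib

section
/- Max-weight comparison lemma: Let Q^{(k)}_j ≥ 0, r̂_{i,j} ∈ ℝ, V ≥ 0 and ε ∈ ℝ be constants (i ∈ {1,…,N}, j ∈ {1,…,M}, k ∈ {1,…,K}). Let Λ = (Λ_i) be nonnegative random variables with Λ_i ≤ C_λ and E[Λ_i] = λ_i, and let w^{(k)}_{i,j}(t) and ρ^{(k)}_j(t) be integrable random variables, independent of Λ, with |w^{(k)}_{i,j}(t)| ≤ C_u, E[w^{(k)}_{i,j}(t)] = w^{(k)}_{i,j} and E[ρ^{(k)}_j(t)] = ρ^{(k)}_j. Let x(t) be a random N×M matrix that almost surely maximizes Σ_{i,j}(V·r̂_{i,j} − Σ_k w^{(k)}_{i,j}(t)Q^{(k)}_j)·x_{i,j} over matrices x ≥ 0 with Σ_j x_{i,j} = Λ_i for all i. Then for every deterministic matrix x_ε ≥ 0 with Σ_j x_{ε,i,j} = λ_i for all i: E[ Σ_{j,k} Q^{(k)}_j (Σ_i w^{(k)}_{i,j}(t)x_{i,j}(t) − ρ^{(k)}_j(t) + ε)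 − V·Σ_{i,j} r̂_{i,j}x_{i,j}(t) ] ≤ Σ_{j,k} Q^{(k)}_j (Σ_i w^{(k)}_{i,j}x_{ε,i,j} − ρ^{(k)}_j + ε) − V·Σ_{i,j} r̂_{i,j}x_{ε,i,j}. -/
/-!
Since `Λ` has mean `λ`, scaling each row of `x_ε` by `Λ i / λ i` gives a random allocation `y`
that is feasible for the max-weight problem, so the weight of `x` dominates that of `y` almost
surely. The weights depend only on `W`, hence are independent of `Λ`, and the expected weight of
`y` is the weight of `x_ε` under the mean weights. The objective is a constant minus the weight,
which turns this into the claimed inequality.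
-/

open MeasureTheory ProbabilityTheory Finset

section Allocation

variable {ι σ κ : Type*} [Fintype σ]

def IsAllocation (b : ι → ℝ) (X : ι → σ → ℝ) : Prop :=
  (∀ i j, 0 ≤ X i j) ∧ ∀ i, ∑ j, X i j = b i

namespace IsAllocation

variable {b : ι → ℝ} {X : ι → σ → ℝ}

lemma le_rowSum (h : IsAllocation b X) (i : ι) (j : σ) : X i j ≤ b i :=
  h.2 i ▸ single_le_sum (fun j _ => h.1 i j) (mem_univ j)

lemma rowSum_nonneg (h : IsAllocation b X) (i : ι) : 0 ≤ b i :=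
  h.2 i ▸ sum_nonneg fun j _ => h.1 i j

lemma abs_le (h : IsAllocation b X) {C : ℝ} (hC : ∀ i, b i ≤ C) (i : ι) (j : σ) :
    |X i j| ≤ C := by
  rw [abs_of_nonneg (h.1 i j)]
  exact (h.le_rowSum i j).trans (hC i)

lemma div_mul_cancel (h : IsAllocation b X) (i : ι) (j : σ) : X i j / b i * b i = X i j := by
  rcases eq_or_ne (b i) 0 with hb | hb
  · simp [le_antisymm (hb ▸ h.le_rowSum i j) (h.1 i j)]
  · exact div_mul_cancel₀ _ hb

lemma rescale (h : IsAllocation b X) {b' : ι → ℝ} (hb' : ∀ i, 0 ≤ b' i)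
    (hzero : ∀ i, b i = 0 → b' i = 0) : IsAllocation b' fun i j => X i j / b i * b' i := by
  refine ⟨fun i j => mul_nonneg (div_nonneg (h.1 i j) (h.rowSum_nonneg i)) (hb' i), fun i => ?_⟩
  rcases eq_or_ne (b i) 0 with hb | hb
  · simp [hb, hzero i hb]
  · rw [← sum_mul, ← sum_div, h.2 i, div_self hb, one_mul]

end IsAllocation

variable [Fintype ι]

variable [Fintype κ] in
lemma drift_plus_penalty_eq (Q : κ → σ → ℝ) (r : ι → σ → ℝ) (V ε : ℝ) (A : κ → ι → σ → ℝ)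
    (B : κ → σ → ℝ) (X : ι → σ → ℝ) :
    ∑ j, ∑ k, Q k j * (∑ i, A k i j * X i j - B k j + ε) - V * ∑ i, ∑ j, r i j * X i j =
      ∑ j, ∑ k, Q k j * (ε - B k j) - ∑ i, ∑ j, (V * r i j - ∑ k, A k i j * Q k j) * X i j := by
  have hswap : ∑ j, ∑ k, Q k j * ∑ i, A k i j * X i j =
      ∑ i, ∑ j, (∑ k, A k i j * Q k j) * X i j :=
    calc ∑ j, ∑ k, Q k j * ∑ i, A k i j * X i j
        = ∑ j, ∑ i, ∑ k, A k i j * Q k j * X i j := by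
          simp_rw [mul_sum, mul_left_comm (Q _ _), ← mul_assoc]
          exact sum_congr rfl fun j _ => sum_comm
      _ = ∑ i, ∑ j, (∑ k, A k i j * Q k j) * X i j := by
          simp_rw [sum_mul]
          exact sum_comm
  have hsplit : ∀ j k, Q k j * (∑ i, A k i j * X i j - B k j + ε) =
      Q k j * ∑ i, A k i j * X i j + Q k j * (ε - B k j) := fun _ _ => by ring
  simp_rw [hsplit, sub_mul, sum_add_distrib, sum_sub_distrib, hswap, mul_sum, mul_assoc]
  ring

section Expectation

variable {Ω : Type*} [MeasurableSpace Ω] {μ : Measure Ω}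

lemma integrable_sum_sum {f : ι → σ → Ω → ℝ} (hf : ∀ i j, Integrable (f i j) μ) :
    Integrable (fun ω => ∑ i, ∑ j, f i j ω) μ :=
  integrable_finsetSum _ fun i _ => integrable_finsetSum _ fun j _ => hf i j

lemma integral_sum_sum {f : ι → σ → Ω → ℝ} (hf : ∀ i j, Integrable (f i j) μ) :
    ∫ ω, ∑ i, ∑ j, f i j ω ∂μ = ∑ i, ∑ j, ∫ ω, f i j ω ∂μ := by
  rw [integral_finsetSum _ fun i _ => integrable_finsetSum _ fun j _ => hf i j]
  exact sum_congr rfl fun i _ => integral_finsetSum _ fun j _ => hf i j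

lemma integrable_sum_sum_mul_of_ae_isAllocation {c x : ι → σ → Ω → ℝ} {Λ : ι → Ω → ℝ} {C : ℝ}
    (hc : ∀ i j, Integrable (c i j) μ) (hx : ∀ i j, AEStronglyMeasurable (x i j) μ)
    (hΛ : ∀ i ω, Λ i ω ≤ C) (hxΛ : ∀ᵐ ω ∂μ, IsAllocation (Λ · ω) (x · · ω)) :
    Integrable (fun ω => ∑ i, ∑ j, c i j ω * x i j ω) μ :=
  integrable_sum_sum fun i j =>
    ((hc i j).bdd_mul (hx i j) (hxΛ.mono fun ω h => h.abs_le (hΛ · ω) i j)).congr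
      (ae_of_all _ fun _ => mul_comm _ _)

theorem sum_integral_mul_le_integral_of_ae_maximizer [IsFiniteMeasure μ]
    {c x : ι → σ → Ω → ℝ} {Λ : ι → Ω → ℝ} {C : ℝ} {xeps : ι → σ → ℝ}
    (hc : ∀ i j, Integrable (c i j) μ) (hΛ : ∀ i, AEStronglyMeasurable (Λ i) μ)
    (hΛnonneg : ∀ i ω, 0 ≤ Λ i ω) (hΛbdd : ∀ i ω, Λ i ω ≤ C)
    (hindep : ∀ i j, IndepFun (c i j) (Λ i) μ) (hx : ∀ i j, AEStronglyMeasurable (x i j) μ)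
    (hxmax : ∀ᵐ ω ∂μ, IsAllocation (Λ · ω) (x · · ω) ∧ ∀ y, IsAllocation (Λ · ω) y →
      ∑ i, ∑ j, c i j ω * y i j ≤ ∑ i, ∑ j, c i j ω * x i j ω)
    (hxeps : IsAllocation (fun i => ∫ ω, Λ i ω ∂μ) xeps) :
    ∑ i, ∑ j, (∫ ω, c i j ω ∂μ) * xeps i j ≤ ∫ ω, ∑ i, ∑ j, c i j ω * x i j ω ∂μ := by
  set lam := fun i => ∫ ω, Λ i ω ∂μ
  have hΛint : ∀ i, Integrable (Λ i) μ := fun i => .of_bound (hΛ i) C <| ae_of_all _ fun ω => by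
    rw [Real.norm_of_nonneg (hΛnonneg i ω)]
    exact hΛbdd i ω
  -- `x_ε / λ` is junk where `λ i = 0`, but there `Λ i` vanishes almost surely.
  have hzero : ∀ᵐ ω ∂μ, ∀ i, lam i = 0 → Λ i ω = 0 := ae_all_iff.2 fun i => by
    by_cases h : lam i = 0
    · filter_upwards [(integral_eq_zero_iff_of_nonneg (hΛnonneg i) (hΛint i)).1 h] with ω hω
      exact fun _ => hω
    · exact ae_of_all _ fun _ h' => absurd h' h
  have hyint : ∀ i j, Integrable (fun ω => c i j ω * (xeps i j / lam i * Λ i ω)) μ :=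
    fun i j => (((hindep i j).integrable_mul (hc i j) (hΛint i)).const_mul (xeps i j / lam i)).congr
      (ae_of_all _ fun ω => by simp only [Pi.mul_apply]; ring)
  have hymean : ∀ i j, ∫ ω, c i j ω * (xeps i j / lam i * Λ i ω) ∂μ =
      (∫ ω, c i j ω ∂μ) * xeps i j := by
    intro i j
    simp_rw [mul_left_comm (c i j _), integral_const_mul,
      (hindep i j).integral_fun_mul_eq_mul_integral (hc i j).1 (hΛ i)]
    linear_combination (∫ ω, c i j ω ∂μ) * hxeps.div_mul_cancel i j
  calc ∑ i, ∑ j, (∫ ω, c i j ω ∂μ) * xeps i j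
      = ∫ ω, ∑ i, ∑ j, c i j ω * (xeps i j / lam i * Λ i ω) ∂μ := by
        simp_rw [integral_sum_sum hyint, hymean]
    _ ≤ ∫ ω, ∑ i, ∑ j, c i j ω * x i j ω ∂μ := by
        refine integral_mono_ae (integrable_sum_sum hyint)
          (integrable_sum_sum_mul_of_ae_isAllocation hc hx hΛbdd (hxmax.mono fun _ h => h.1)) ?_
        filter_upwards [hxmax, hzero] with ω hmax hz
        exact hmax.2 _ (hxeps.rescale (hΛnonneg · ω) hz)

variable [IsProbabilityMeasure μ] [Fintype κ]

lemma integral_const_sub_sum_mul {A : κ → Ω → ℝ} (hA : ∀ k, Integrable (A k) μ) (a : ℝ)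
    (q : κ → ℝ) : ∫ ω, (a - ∑ k, A k ω * q k) ∂μ = a - ∑ k, (∫ ω, A k ω ∂μ) * q k := by
  rw [integral_sub (integrable_const a) (integrable_finsetSum _ fun k _ => (hA k).mul_const _),
    integral_finsetSum _ fun k _ => (hA k).mul_const _]
  simp [integral_mul_const]

lemma integral_drift_plus_penalty (Q : κ → σ → ℝ) (r : ι → σ → ℝ) (V ε : ℝ)
    {A : κ → ι → σ → Ω → ℝ} {B : κ → σ → Ω → ℝ} {X : ι → σ → Ω → ℝ}
    (hB : ∀ k j, Integrable (B k j) μ)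
    (hweight : Integrable (fun ω => ∑ i, ∑ j, (V * r i j - ∑ k, A k i j ω * Q k j) * X i j ω) μ) :
    ∫ ω, (∑ j, ∑ k, Q k j * (∑ i, A k i j ω * X i j ω - B k j ω + ε) -
        V * ∑ i, ∑ j, r i j * X i j ω) ∂μ =
      ∑ j, ∑ k, Q k j * (ε - ∫ ω, B k j ω ∂μ) -
        ∫ ω, ∑ i, ∑ j, (V * r i j - ∑ k, A k i j ω * Q k j) * X i j ω ∂μ := by
  have hBterm : ∀ j k, Integrable (fun ω => Q k j * (ε - B k j ω)) μ := fun j k =>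
    ((integrable_const ε).sub (hB k j)).const_mul (Q k j)
  simp_rw [drift_plus_penalty_eq]
  rw [integral_sub (integrable_sum_sum hBterm) hweight, integral_sum_sum hBterm]
  simp [integral_const_mul, integral_sub (integrable_const ε) (hB _ _)]

end Expectation

end Allocation

theorem maxweight_comparison_general (N M K : ℕ)
    {Ω : Type*} [MeasurableSpace Ω] (μ : Measure Ω) [IsProbabilityMeasure μ]
    (Q : Fin K → Fin M → ℝ)
    (rhat : Fin N → Fin M → ℝ) (V : ℝ) (ε : ℝ)
    (Clam Cu : ℝ)
    (Λ : Fin N → Ω → ℝ) (lam : Fin N → ℝ)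
    (hΛmeas : ∀ i, Measurable (Λ i))
    (hΛnonneg : ∀ i ω, 0 ≤ Λ i ω) (hΛbdd : ∀ i ω, Λ i ω ≤ Clam)
    (hΛmean : ∀ i, ∫ ω, Λ i ω ∂μ = lam i)
    (W : Fin K → Fin N → Fin M → Ω → ℝ) (P : Fin K → Fin M → Ω → ℝ)
    (w : Fin K → Fin N → Fin M → ℝ) (ρ : Fin K → Fin M → ℝ)
    (hWmeas : ∀ k i j, Measurable (W k i j))
    (hWbdd : ∀ k i j ω, |W k i j ω| ≤ Cu)
    (hPint : ∀ k j, Integrable (P k j) μ)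
    (hWmean : ∀ k i j, ∫ ω, W k i j ω ∂μ = w k i j)
    (hPmean : ∀ k j, ∫ ω, P k j ω ∂μ = ρ k j)
    (hindep : IndepFun
      (fun ω => ((fun k i j => W k i j ω : Fin K → Fin N → Fin M → ℝ),
                 (fun k j => P k j ω : Fin K → Fin M → ℝ)))
      (fun ω => (fun i => Λ i ω : Fin N → ℝ)) μ)
    (x : Fin N → Fin M → Ω → ℝ)
    (hxmeas : ∀ i j, Measurable (x i j))
    (hxmax : ∀ᵐ ω ∂μ, (∀ i j, 0 ≤ x i j ω) ∧ (∀ i, ∑ j, x i j ω = Λ i ω) ∧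
      ∀ y : Fin N → Fin M → ℝ, (∀ i j, 0 ≤ y i j) → (∀ i, ∑ j, y i j = Λ i ω) →
        ∑ i, ∑ j, (V * rhat i j - ∑ k, W k i j ω * Q k j) * y i j
          ≤ ∑ i, ∑ j, (V * rhat i j - ∑ k, W k i j ω * Q k j) * x i j ω)
    (xeps : Fin N → Fin M → ℝ)
    (hxeps_nonneg : ∀ i j, 0 ≤ xeps i j)
    (hxeps_rows : ∀ i, ∑ j, xeps i j = lam i) :
    ∫ ω, (∑ j, ∑ k, Q k j * (∑ i, W k i j ω * x i j ω - P k j ω + ε) -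
        V * ∑ i, ∑ j, rhat i j * x i j ω) ∂μ
      ≤ ∑ j, ∑ k, Q k j * (∑ i, w k i j * xeps i j - ρ k j + ε) -
        V * ∑ i, ∑ j, rhat i j * xeps i j := by
  set φ : Fin N → Fin M → Ω → ℝ := fun i j ω => V * rhat i j - ∑ k, W k i j ω * Q k j
  have hWint : ∀ k i j, Integrable (W k i j) μ := fun k i j =>
    .of_bound (hWmeas k i j).aestronglyMeasurable Cu <| ae_of_all _ fun ω =>
      (Real.norm_eq_abs _).trans_le (hWbdd k i j ω)
  have hφint : ∀ i j, Integrable (φ i j) μ := fun i j =>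
    (integrable_const _).sub (integrable_finsetSum _ fun k _ => (hWint k i j).mul_const _)
  have hφindep : ∀ i j, IndepFun (φ i j) (Λ i) μ := fun i j => by
    have hf : Measurable fun p : (Fin K → Fin N → Fin M → ℝ) × (Fin K → Fin M → ℝ) =>
        V * rhat i j - ∑ k, p.1 k i j * Q k j := by
      fun_prop
    exact hindep.comp hf (measurable_pi_apply i)
  have hφmax : ∀ᵐ ω ∂μ, IsAllocation (Λ · ω) (x · · ω) ∧ ∀ y, IsAllocation (Λ · ω) y →
      ∑ i, ∑ j, φ i j ω * y i j ≤ ∑ i, ∑ j, φ i j ω * x i j ω :=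
    hxmax.mono fun _ h => ⟨⟨h.1, h.2.1⟩, fun y hy => h.2.2 y hy.1 hy.2⟩
  have hcompare := sum_integral_mul_le_integral_of_ae_maximizer hφint
    (fun i => (hΛmeas i).aestronglyMeasurable) hΛnonneg hΛbdd hφindep
    (fun i j => (hxmeas i j).aestronglyMeasurable) hφmax
    ⟨hxeps_nonneg, fun i => (hxeps_rows i).trans (hΛmean i).symm⟩
  rw [integral_drift_plus_penalty Q rhat V ε hPint (integrable_sum_sum_mul_of_ae_isAllocation hφint
    (fun i j => (hxmeas i j).aestronglyMeasurable) hΛbdd (hφmax.mono fun _ h => h.1)),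
    drift_plus_penalty_eq]
  simp only [φ, integral_const_sub_sum_mul (hWint · _ _), hWmean, hPmean] at hcompare ⊢
  linarith

/-- **Max-weight comparison lemma.** With queue values `Q ≥ 0`, reward estimates `r̂`, `V ≥ 0`,
`ε ∈ ℝ` fixed, arrivals `Λ i ∈ [0, C_λ]` with means `λ i`, constraint data `(W, P)` bounded by
`C_u`, integrable, with means `(w, ρ)` and independent of `Λ`, and `x` a random nonnegative
matrix with row sums `Λ` that a.s. maximizes the weight
`∑_{i,j} (V r̂ i j - ∑ k W k i j · Q k j) x i j`, one has for every deterministic `x_ε ≥ 0`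
with row sums `λ`:
`E[∑_{j,k} Q k j (∑ i W k i j x i j - P k j + ε) - V ∑_{i,j} r̂ i j x i j]
  ≤ ∑_{j,k} Q k j (∑ i w k i j x_ε i j - ρ k j + ε) - V ∑_{i,j} r̂ i j x_ε i j`. -/
theorem maxweight_comparison (N M K : ℕ)
    {Ω : Type*} [MeasurableSpace Ω] (μ : Measure Ω) [IsProbabilityMeasure μ]
    (Q : Fin K → Fin M → ℝ) (hQ : ∀ k j, 0 ≤ Q k j)
    (rhat : Fin N → Fin M → ℝ) (V : ℝ) (hV : 0 ≤ V) (ε : ℝ)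
    (Clam Cu : ℝ)
    (Λ : Fin N → Ω → ℝ) (lam : Fin N → ℝ)
    (hΛmeas : ∀ i, Measurable (Λ i))
    (hΛnonneg : ∀ i ω, 0 ≤ Λ i ω) (hΛbdd : ∀ i ω, Λ i ω ≤ Clam)
    (hΛmean : ∀ i, ∫ ω, Λ i ω ∂μ = lam i)
    (W : Fin K → Fin N → Fin M → Ω → ℝ) (P : Fin K → Fin M → Ω → ℝ)
    (w : Fin K → Fin N → Fin M → ℝ) (ρ : Fin K → Fin M → ℝ)
    (hWmeas : ∀ k i j, Measurable (W k i j)) (hPmeas : ∀ k j, Measurable (P k j))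
    (hWbdd : ∀ k i j ω, |W k i j ω| ≤ Cu)
    (hPint : ∀ k j, Integrable (P k j) μ)
    (hWmean : ∀ k i j, ∫ ω, W k i j ω ∂μ = w k i j)
    (hPmean : ∀ k j, ∫ ω, P k j ω ∂μ = ρ k j)
    (hindep : IndepFun
      (fun ω => ((fun k i j => W k i j ω : Fin K → Fin N → Fin M → ℝ),
                 (fun k j => P k j ω : Fin K → Fin M → ℝ)))
      (fun ω => (fun i => Λ i ω : Fin N → ℝ)) μ)
    (x : Fin N → Fin M → Ω → ℝ)
    (hxmeas : ∀ i j, Measurable (x i j))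
    (hxmax : ∀ᵐ ω ∂μ, (∀ i j, 0 ≤ x i j ω) ∧ (∀ i, ∑ j, x i j ω = Λ i ω) ∧
      ∀ y : Fin N → Fin M → ℝ, (∀ i j, 0 ≤ y i j) → (∀ i, ∑ j, y i j = Λ i ω) →
        ∑ i, ∑ j, (V * rhat i j - ∑ k, W k i j ω * Q k j) * y i j
          ≤ ∑ i, ∑ j, (V * rhat i j - ∑ k, W k i j ω * Q k j) * x i j ω)
    (xeps : Fin N → Fin M → ℝ)
    (hxeps_nonneg : ∀ i j, 0 ≤ xeps i j)
    (hxeps_rows : ∀ i, ∑ j, xeps i j = lam i) :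
    ∫ ω, (∑ j, ∑ k, Q k j * (∑ i, W k i j ω * x i j ω - P k j ω + ε) -
        V * ∑ i, ∑ j, rhat i j * x i j ω) ∂μ
      ≤ ∑ j, ∑ k, Q k j * (∑ i, w k i j * xeps i j - ρ k j + ε) -
        V * ∑ i, ∑ j, rhat i j * xeps i j :=
  maxweight_comparison_general N M K μ Q rhat V ε Clam Cu Λ lam hΛmeas hΛnonneg hΛbdd hΛmean W P w ρ
    hWmeas hWbdd hPint hWmean hPmean hindep x hxmeas hxmax xeps hxeps_nonneg hxeps_rows
end

section
/- ε-tightening gap lemma: Let r_{i,j} ∈ [0,1], λ_i ≥ 0, w^{(k)}_{i,j} ∈ ℝ, ρ^{(k)}_j ∈ ℝ (i ∈ {1,…,N}, j ∈ {1,…,M}, k ∈ {1,…,K}), and let 0 ≤ ε ≤ δ. Suppose there exists x^{in} ≥ 0 with Σ_j x^{in}_{i,j} = λ_i for all i and Σ_i w^{(k)}_{i,j}x^{in}_{i,j} − ρ^{(k)}_j ≤ −δ for all j, k (Slater condition). Let x* be an optimal solution of the LP: maximize Σ_{i,j} r_{i,j}x_{i,j} over x ≥ 0 with Σ_j x_{i,j}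 = λ_i for all i and Σ_i w^{(k)}_{i,j}x_{i,j} ≤ ρ^{(k)}_j for all j, k; and let x*_ε be an optimal solution of the ε-tight LP, which is the same problem with constraints Σ_i w^{(k)}_{i,j}x_{i,j} + ε ≤ ρ^{(k)}_j. Then Σ_{i,j} r_{i,j}(x*_{i,j} − x*_{ε,i,j}) ≤ (ε/δ)·Σ_i λ_i; consequently, for any horizon T, T·Σ_{i,j} r_{i,j}x*_{i,j} − T·Σ_{i,j} r_{i,j}x*_{ε,i,j} ≤ (Tε/δ)·Σ_i λ_i. -/
/-!
Put `t = ε / δ ∈ [0, 1]`. The convex combination `y = (1 - t) x* + t x^in` of the optimum and the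
Slater point has the right row sums and slack `t δ = ε` in every constraint, so it is feasible for
the `ε`-tight LP. Its reward `(1 - t) r·x* + t r·x^in` is at least `r·x* - t r·x*`, and
`r·x* ≤ ∑ λ` because `r ≤ 1`. Optimality of `x*_ε` then gives the gap bound.
-/

open Finset

lemma sum_mul_convexCombo {ι : Type*} (s : Finset ι) (a x y : ι → ℝ) (t : ℝ) :
    ∑ i ∈ s, a i * ((1 - t) * x i + t * y i) =
      (1 - t) * ∑ i ∈ s, a i * x i + t * ∑ i ∈ s, a i * y i := by
  simp only [mul_add, mul_left_comm (a _), sum_add_distrib, ← mul_sum]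

section

variable {ι κ σ : Type*} [Fintype ι] [Fintype κ]

lemma sum_mul_convexCombo_add_le {c x y : ι → ℝ} {b δ t : ℝ}
    (hx : ∑ i, c i * x i ≤ b) (hy : ∑ i, c i * y i ≤ b - δ) (ht₀ : 0 ≤ t) (ht₁ : t ≤ 1) :
    ∑ i, c i * ((1 - t) * x i + t * y i) + t * δ ≤ b := by
  rw [sum_mul_convexCombo]
  linarith [mul_le_mul_of_nonneg_left hx (sub_nonneg.2 ht₁), mul_le_mul_of_nonneg_left hy ht₀]

lemma sum_sum_mul_le_sum_sum_of_le_one {r x : ι → κ → ℝ} (hr : ∀ i j, r i j ≤ 1)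
    (hx : ∀ i j, 0 ≤ x i j) : ∑ i, ∑ j, r i j * x i j ≤ ∑ i, ∑ j, x i j :=
  sum_le_sum fun i _ ↦ sum_le_sum fun j _ ↦ mul_le_of_le_one_left (hx i j) (hr i j)

theorem sum_sum_mul_sub_le_of_slater (r : ι → κ → ℝ) (hr : ∀ i j, r i j ∈ Set.Icc (0 : ℝ) 1)
    (lam : ι → ℝ) (w : σ → ι → κ → ℝ) (ρ : σ → κ → ℝ) {ε δ : ℝ} (hε : 0 ≤ ε) (hεδ : ε ≤ δ)
    {xin : ι → κ → ℝ} (hxin_nonneg : ∀ i j, 0 ≤ xin i j) (hxin_rows : ∀ i, ∑ j, xin i j = lam i)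
    (hxin_slater : ∀ j k, ∑ i, w k i j * xin i j - ρ k j ≤ -δ)
    {xstar : ι → κ → ℝ} (hxstar_nonneg : ∀ i j, 0 ≤ xstar i j)
    (hxstar_rows : ∀ i, ∑ j, xstar i j = lam i)
    (hxstar_cons : ∀ j k, ∑ i, w k i j * xstar i j ≤ ρ k j)
    {xeps : ι → κ → ℝ}
    (hxeps_opt : ∀ x : ι → κ → ℝ, (∀ i j, 0 ≤ x i j) →
      (∀ i, ∑ j, x i j = lam i) → (∀ j k, ∑ i, w k i j * x i j + ε ≤ ρ k j) →
      ∑ i, ∑ j, r i j * x i j ≤ ∑ i, ∑ j, r i j * xeps i j) :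
    ∑ i, ∑ j, r i j * xstar i j - ∑ i, ∑ j, r i j * xeps i j ≤ ε / δ * ∑ i, lam i := by
  set t := ε / δ
  have hδ : 0 ≤ δ := hε.trans hεδ
  have ht₀ : 0 ≤ t := div_nonneg hε hδ
  have ht₁ : t ≤ 1 := div_le_one_of_le₀ hεδ hδ
  -- also at `δ = 0`, where `ε = 0` and the junk value `ε / 0 = 0` is harmless
  have htδ : t * δ = ε := div_mul_cancel_of_imp fun h ↦ le_antisymm (h ▸ hεδ) hε
  set y : ι → κ → ℝ := fun i j ↦ (1 - t) * xstar i j + t * xin i j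
  have hy_nonneg : ∀ i j, 0 ≤ y i j := fun i j ↦
    add_nonneg (mul_nonneg (sub_nonneg.2 ht₁) (hxstar_nonneg i j)) (mul_nonneg ht₀ (hxin_nonneg i j))
  have hy_rows : ∀ i, ∑ j, y i j = lam i := fun i ↦ by
    simp only [y, sum_add_distrib, ← mul_sum, hxstar_rows, hxin_rows]
    ring
  have hy_cons : ∀ j k, ∑ i, w k i j * y i j + ε ≤ ρ k j := fun j k ↦
    htδ ▸ sum_mul_convexCombo_add_le (hxstar_cons j k) (by linarith [hxin_slater j k]) ht₀ ht₁
  have hy_reward : ∑ i, ∑ j, r i j * y i j =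
      (1 - t) * ∑ i, ∑ j, r i j * xstar i j + t * ∑ i, ∑ j, r i j * xin i j := by
    simp only [y, sum_mul_convexCombo, sum_add_distrib, ← mul_sum]
  have hxin_reward : 0 ≤ ∑ i, ∑ j, r i j * xin i j :=
    sum_nonneg fun i _ ↦ sum_nonneg fun j _ ↦ mul_nonneg (hr i j).1 (hxin_nonneg i j)
  have hxstar_reward : ∑ i, ∑ j, r i j * xstar i j ≤ ∑ i, lam i := by
    simpa only [hxstar_rows] using
      sum_sum_mul_le_sum_sum_of_le_one (fun i j ↦ (hr i j).2) hxstar_nonneg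
  have hopt := hy_reward ▸ hxeps_opt y hy_nonneg hy_rows hy_cons
  linarith [mul_le_mul_of_nonneg_left hxstar_reward ht₀, mul_nonneg ht₀ hxin_reward]

end

theorem epsilon_tightening_gap_general (N M K : ℕ)
    (r : Fin N → Fin M → ℝ) (hr : ∀ i j, r i j ∈ Set.Icc (0 : ℝ) 1)
    (lam : Fin N → ℝ)
    (w : Fin K → Fin N → Fin M → ℝ) (ρ : Fin K → Fin M → ℝ)
    (ε δ : ℝ) (hε : 0 ≤ ε) (hεδ : ε ≤ δ)
    (xin : Fin N → Fin M → ℝ)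
    (hxin_nonneg : ∀ i j, 0 ≤ xin i j)
    (hxin_rows : ∀ i, ∑ j, xin i j = lam i)
    (hxin_slater : ∀ j k, ∑ i, w k i j * xin i j - ρ k j ≤ -δ)
    (xstar : Fin N → Fin M → ℝ)
    (hxstar_nonneg : ∀ i j, 0 ≤ xstar i j)
    (hxstar_rows : ∀ i, ∑ j, xstar i j = lam i)
    (hxstar_cons : ∀ j k, ∑ i, w k i j * xstar i j ≤ ρ k j)
    (xeps : Fin N → Fin M → ℝ)
    (hxeps_opt : ∀ x : Fin N → Fin M → ℝ, (∀ i j, 0 ≤ x i j) →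
      (∀ i, ∑ j, x i j = lam i) → (∀ j k, ∑ i, w k i j * x i j + ε ≤ ρ k j) →
      ∑ i, ∑ j, r i j * x i j ≤ ∑ i, ∑ j, r i j * xeps i j) :
    (∑ i, ∑ j, r i j * (xstar i j - xeps i j) ≤ ε / δ * ∑ i, lam i) ∧
      ∀ T : ℕ, (T : ℝ) * (∑ i, ∑ j, r i j * xstar i j) -
          (T : ℝ) * (∑ i, ∑ j, r i j * xeps i j)
        ≤ (T : ℝ) * ε / δ * ∑ i, lam i := by
  have gap := sum_sum_mul_sub_le_of_slater r hr lam w ρ hε hεδ hxin_nonneg hxin_rows hxin_slater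
    hxstar_nonneg hxstar_rows hxstar_cons hxeps_opt
  refine ⟨?_, fun T ↦ ?_⟩
  · simpa only [mul_sub, sum_sub_distrib] using gap
  · rw [← mul_sub, mul_div_assoc, mul_assoc]
    exact mul_le_mul_of_nonneg_left gap T.cast_nonneg

/-- **ε-tightening gap lemma.** Let `r i j ∈ [0,1]`, `λ i ≥ 0`, constraint data `w, ρ`, and
`0 ≤ ε ≤ δ`.  Assume the Slater condition: some `x^in ≥ 0` with row sums `λ` satisfies
`∑ i w k i j * x^in i j - ρ k j ≤ -δ` for all `j, k`.  Let `x*` be an optimal solution of the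
offline LP and `x*_ε` an optimal solution of the `ε`-tight LP.  Then
`∑_{i,j} r i j (x* i j - x*_ε i j) ≤ (ε/δ)·∑ i λ i`, and consequently for any horizon `T`,
`T·∑ r x* - T·∑ r x*_ε ≤ (Tε/δ)·∑ λ`. -/
theorem epsilon_tightening_gap (N M K : ℕ)
    (r : Fin N → Fin M → ℝ) (hr : ∀ i j, r i j ∈ Set.Icc (0 : ℝ) 1)
    (lam : Fin N → ℝ) (hlam : ∀ i, 0 ≤ lam i)
    (w : Fin K → Fin N → Fin M → ℝ) (ρ : Fin K → Fin M → ℝ)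
    (ε δ : ℝ) (hε : 0 ≤ ε) (hεδ : ε ≤ δ)
    (xin : Fin N → Fin M → ℝ)
    (hxin_nonneg : ∀ i j, 0 ≤ xin i j)
    (hxin_rows : ∀ i, ∑ j, xin i j = lam i)
    (hxin_slater : ∀ j k, ∑ i, w k i j * xin i j - ρ k j ≤ -δ)
    (xstar : Fin N → Fin M → ℝ)
    (hxstar_nonneg : ∀ i j, 0 ≤ xstar i j)
    (hxstar_rows : ∀ i, ∑ j, xstar i j = lam i)
    (hxstar_cons : ∀ j k, ∑ i, w k i j * xstar i j ≤ ρ k j)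
    (hxstar_opt : ∀ x : Fin N → Fin M → ℝ, (∀ i j, 0 ≤ x i j) →
      (∀ i, ∑ j, x i j = lam i) → (∀ j k, ∑ i, w k i j * x i j ≤ ρ k j) →
      ∑ i, ∑ j, r i j * x i j ≤ ∑ i, ∑ j, r i j * xstar i j)
    (xeps : Fin N → Fin M → ℝ)
    (hxeps_nonneg : ∀ i j, 0 ≤ xeps i j)
    (hxeps_rows : ∀ i, ∑ j, xeps i j = lam i)
    (hxeps_cons : ∀ j k, ∑ i, w k i j * xeps i j + ε ≤ ρ k j)
    (hxeps_opt : ∀ x : Fin N → Fin M → ℝ, (∀ i j, 0 ≤ x i j) →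
      (∀ i, ∑ j, x i j = lam i) → (∀ j k, ∑ i, w k i j * x i j + ε ≤ ρ k j) →
      ∑ i, ∑ j, r i j * x i j ≤ ∑ i, ∑ j, r i j * xeps i j) :
    (∑ i, ∑ j, r i j * (xstar i j - xeps i j) ≤ ε / δ * ∑ i, lam i) ∧
      ∀ T : ℕ, (T : ℝ) * (∑ i, ∑ j, r i j * xstar i j) -
          (T : ℝ) * (∑ i, ∑ j, r i j * xeps i j)
        ≤ (T : ℝ) * ε / δ * ∑ i, lam i :=
  epsilon_tightening_gap_general N M K r hr lam w ρ ε δ hε hεδ xin hxin_nonneg hxin_rows hxin_slater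
    xstar hxstar_nonneg hxstar_rows hxstar_cons xeps hxeps_opt
end

section
/- Exponential moment bound from negative drift (Hajek/Neely lemma): Let (F_t)_{t≥0} be a filtration on a probability space and let (L_t)_{t≥0} be an adapted real-valued process with L_0 = 0 and L_t ≥ 0 for all t. Suppose there exist constants θ > 0 and 0 < γ ≤ ν_max such that: (i) E[L_{t+1} − L_t | F_t] ≤ −γ almost surely on the event {L_t ≥ θ}, for every t; and (ii) |L_{t+1} − L_t| ≤ ν_max almost surely, for every t. Then, with r = γ/(ν_max² + ν_max·γ/3), for every t ≥ 0: E[e^{r·L_t}] ≤ 1 + (2·e^{r(ν_max + θ)})/(r·γ). -/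
/-!
Let `M t = E[exp (r L t)]` and `K = exp (r (ν + θ))`. For `|y| ≤ b ≤ 1` the Taylor bound gives
`exp y ≤ 1 + y + 3 b² / (2 (3 - b))`, and `r = γ / (ν² + ν γ / 3)` is exactly the rate for which,
with `b = r ν`, this reads `exp (r Δ) ≤ 1 + r Δ + r γ / 2` for every increment `|Δ| ≤ ν`.
On `{L t ≥ θ}` write `exp (r L (t+1)) = exp (r L t) exp (r Δ)`; pulling the `F t`-measurable
factor out of the conditional expectation, the drift `-γ` turns the linear term into `-r γ`.
Off that event `L (t+1) < ν + θ`, so `exp (r L (t+1)) ≤ K`. Together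
`M (t+1) ≤ (1 - r γ / 2) M t + K`, and since `M 0 = 1` this recursion keeps `M t ≤ 1 + 2 K / (r γ)`.
-/

open MeasureTheory Real

namespace Real

theorem exp_le_quartic_of_abs_le_one {x : ℝ} (hx : |x| ≤ 1) :
    exp x ≤ 1 + x + x ^ 2 / 2 + x ^ 3 / 6 + 5 * x ^ 4 / 96 := by
  have h := exp_bound hx (n := 4) (by norm_num)
  have hx4 : |x| ^ 4 = x ^ 4 := by rw [← abs_pow, abs_of_nonneg (by positivity)]
  simp only [Finset.sum_range_succ, Finset.sum_range_zero, Nat.factorial, hx4] at h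
  norm_num at h
  linarith [(abs_le.1 h).2]

theorem exp_le_one_add_add_sq_div_of_abs_le {b y : ℝ} (hb : b ≤ 1) (hy : |y| ≤ b) :
    exp y ≤ 1 + y + 3 * b ^ 2 / (2 * (3 - b)) := by
  obtain ⟨hyl, hyu⟩ := abs_le.1 hy
  have hb0 : 0 ≤ b := (abs_nonneg y).trans hy
  have h3b : 0 < 3 - b := by linarith
  have hpoly : (3 - b) * (y ^ 2 + y ^ 3 / 3 + 5 * y ^ 4 / 48) ≤ 3 * b ^ 2 := by
    rcases le_or_gt 0 y with h0 | h0
    · nlinarith [mul_nonneg (sub_nonneg.2 hyu) (sq_nonneg y),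
        mul_nonneg (sub_nonneg.2 hyu) (pow_nonneg h0 3),
        mul_nonneg (sub_nonneg.2 hyu) (pow_nonneg h0 4),
        pow_nonneg h0 4, pow_nonneg h0 5]
    · have hy3 : y ^ 3 ≤ 0 := by nlinarith [sq_nonneg y]
      have hy31 : y ^ 3 * (y + 1) ≤ 0 := mul_nonpos_of_nonpos_of_nonneg hy3 (by linarith)
      nlinarith [mul_nonneg hb0 (sq_nonneg y), mul_nonpos_of_nonneg_of_nonpos hb0 hy3]
  have hquad : y ^ 2 / 2 + y ^ 3 / 6 + 5 * y ^ 4 / 96 ≤ 3 * b ^ 2 / (2 * (3 - b)) := by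
    rw [le_div_iff₀ (by positivity)]
    linarith
  linarith [exp_le_quartic_of_abs_le_one (hy.trans hb)]

end Real

theorem exp_mul_le_one_add_mul_add_of_abs_le {γ ν x : ℝ} (hγ : 0 < γ) (hγν : γ ≤ ν)
    (hx : |x| ≤ ν) :
    exp (γ / (ν ^ 2 + ν * γ / 3) * x)
      ≤ 1 + γ / (ν ^ 2 + ν * γ / 3) * x + γ / (ν ^ 2 + ν * γ / 3) * γ / 2 := by
  have hν : 0 < ν := hγ.trans_le hγν
  set r := γ / (ν ^ 2 + ν * γ / 3) with hr
  have hD : 0 < ν ^ 2 + ν * γ / 3 := by positivity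
  have hr0 : 0 < r := div_pos hγ hD
  have hrν : r * ν ≤ 1 := by
    rw [hr, div_mul_eq_mul_div, div_le_one hD]
    nlinarith
  have hrate : 3 * (r * ν) ^ 2 / (2 * (3 - r * ν)) = r * γ / 2 := by
    rw [hr]; field_simp; ring
  have hrx : |r * x| ≤ r * ν := by
    rw [abs_mul, abs_of_pos hr0]; exact mul_le_mul_of_nonneg_left hx hr0.le
  simpa [hrate] using Real.exp_le_one_add_add_sq_div_of_abs_le hrν hrx

theorem le_one_add_div_of_le_one_sub_mul_add {a : ℕ → ℝ} {c K : ℝ} (hc : 0 < c) (hc1 : c ≤ 1)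
    (h0 : a 0 ≤ 1) (hK : 0 ≤ K) (hstep : ∀ n, a (n + 1) ≤ (1 - c) * a n + K) (n : ℕ) :
    a n ≤ 1 + K / c := by
  induction n with
  | zero => linarith [div_nonneg hK hc.le]
  | succ n ih =>
    have hfix : (1 - c) * (1 + K / c) + K = 1 + K / c - c := by field_simp; ring
    nlinarith [mul_le_mul_of_nonneg_left ih (sub_nonneg.2 hc1), hstep n]

theorem integral_mul_le_mul_integral_of_condExp_le {Ω : Type*} {m m0 : MeasurableSpace Ω}
    {μ : Measure Ω} [IsFiniteMeasure μ] (hm : m ≤ m0) {g Δ : Ω → ℝ} {C c : ℝ}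
    (hg : StronglyMeasurable[m] g) (hg0 : 0 ≤ g) (hgC : ∀ᵐ ω ∂μ, ‖g ω‖ ≤ C)
    (hΔ : Integrable Δ μ) (hdrift : ∀ᵐ ω ∂μ, g ω ≠ 0 → μ[Δ | m] ω ≤ c) :
    ∫ ω, g ω * Δ ω ∂μ ≤ c * ∫ ω, g ω ∂μ := by
  have hgm : AEStronglyMeasurable g μ := (hg.mono hm).aestronglyMeasurable
  have hpull : ∫ ω, g ω * Δ ω ∂μ = ∫ ω, g ω * μ[Δ | m] ω ∂μ := by
    rw [← integral_condExp hm]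
    exact integral_congr_ae (condExp_stronglyMeasurable_mul_of_bound hm hg hΔ C hgC)
  rw [hpull, ← integral_const_mul]
  refine integral_mono_ae (integrable_condExp.bdd_mul hgm hgC)
    ((Integrable.of_bound hgm C hgC).const_mul c) ?_
  filter_upwards [hdrift] with ω hω
  rcases eq_or_ne (g ω) 0 with h | h
  · simp [h]
  · rw [mul_comm c]; exact mul_le_mul_of_nonneg_left (hω h) (hg0 ω)

theorem exp_mul_le_indicator_add {r γ θ ν a b : ℝ} (hr : 0 ≤ r)
    (hexp : ∀ x, |x| ≤ ν → exp (r * x) ≤ 1 + r * x + r * γ / 2) (hab : |b - a| ≤ ν) :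
    exp (r * b) ≤ (1 + r * γ / 2) * (Set.Ici θ).indicator (fun x => exp (r * x)) a
      + r * ((Set.Ici θ).indicator (fun x => exp (r * x)) a * (b - a)) + exp (r * (ν + θ)) := by
  by_cases ha : θ ≤ a
  · rw [Set.indicator_of_mem (Set.mem_Ici.2 ha)]
    have hsplit : exp (r * b) = exp (r * a) * exp (r * (b - a)) := by rw [← exp_add]; ring_nf
    nlinarith [mul_le_mul_of_nonneg_left (hexp _ hab) (exp_pos (r * a)).le,
      exp_pos (r * (ν + θ))]
  · rw [Set.indicator_of_notMem (fun h => ha (Set.mem_Ici.1 h))]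
    have hb : b ≤ ν + θ := by linarith [(abs_le.1 hab).2]
    simpa using exp_le_exp.2 (mul_le_mul_of_nonneg_left hb hr)

section DriftProcess

variable {Ω : Type*} {m0 : MeasurableSpace Ω} {μ : Measure Ω} {L : ℕ → Ω → ℝ} {ν : ℝ}

theorem ae_le_mul_of_abs_sub_le (hL0 : ∀ ω, L 0 ω = 0)
    (hbdd : ∀ t, ∀ᵐ ω ∂μ, |L (t + 1) ω - L t ω| ≤ ν) (n : ℕ) : ∀ᵐ ω ∂μ, L n ω ≤ n * ν := by
  induction n with
  | zero => exact .of_forall fun ω => by simp [hL0]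
  | succ n ih =>
    filter_upwards [ih, hbdd n] with ω hn hinc
    push_cast
    linarith [(abs_le.1 hinc).2]

theorem ae_norm_exp_mul_le (hL0 : ∀ ω, L 0 ω = 0)
    (hbdd : ∀ t, ∀ᵐ ω ∂μ, |L (t + 1) ω - L t ω| ≤ ν) {r : ℝ} (hr : 0 ≤ r) (n : ℕ) :
    ∀ᵐ ω ∂μ, ‖exp (r * L n ω)‖ ≤ exp (r * (n * ν)) := by
  filter_upwards [ae_le_mul_of_abs_sub_le hL0 hbdd n] with ω h
  rw [norm_of_nonneg (exp_pos _).le]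
  exact exp_le_exp.2 (mul_le_mul_of_nonneg_left h hr)

theorem integral_exp_mul_succ_le [IsProbabilityMeasure μ] (F : Filtration ℕ m0)
    (hadapted : Adapted F L) (hL0 : ∀ ω, L 0 ω = 0) {θ γ r : ℝ}
    (hdrift : ∀ t, ∀ᵐ ω ∂μ, θ ≤ L t ω →
      (μ[(fun ω' => L (t + 1) ω' - L t ω') | F t]) ω ≤ -γ)
    (hbdd : ∀ t, ∀ᵐ ω ∂μ, |L (t + 1) ω - L t ω| ≤ ν) (hr : 0 ≤ r) (hrγ : r * γ ≤ 2)
    (hexp : ∀ x, |x| ≤ ν → exp (r * x) ≤ 1 + r * x + r * γ / 2) (s : ℕ) :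
    ∫ ω, exp (r * L (s + 1) ω) ∂μ
      ≤ (1 - r * γ / 2) * ∫ ω, exp (r * L s ω) ∂μ + exp (r * (ν + θ)) := by
  have hmeas : ∀ n, Measurable (L n) := fun n => (hadapted n).mono (F.le n) le_rfl
  have hexp_int : ∀ n, Integrable (fun ω => exp (r * L n ω)) μ := fun n =>
    Integrable.of_bound (by fun_prop) _ (ae_norm_exp_mul_le hL0 hbdd hr n)
  set Δ : Ω → ℝ := fun ω => L (s + 1) ω - L s ω
  have hΔ : Integrable Δ μ :=
    Integrable.of_bound ((hmeas (s + 1)).sub (hmeas s)).aestronglyMeasurable ν (hbdd s)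
  set g : Ω → ℝ := fun ω => (Set.Ici θ).indicator (fun x => exp (r * x)) (L s ω)
  have hg0 : 0 ≤ g := fun ω => Set.indicator_nonneg (fun x _ => (exp_pos (r * x)).le) _
  have hgE : ∀ ω, g ω ≤ exp (r * L s ω) :=
    fun ω => Set.indicator_le_self' (fun x _ => (exp_pos (r * x)).le) _
  have hgC : ∀ᵐ ω ∂μ, ‖g ω‖ ≤ exp (r * (s * ν)) := by
    filter_upwards [ae_norm_exp_mul_le hL0 hbdd hr s] with ω h
    exact (norm_indicator_le_norm_self _ _).trans h
  have hgm : StronglyMeasurable[F s] g :=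
    (((measurable_const_mul r).exp.indicator measurableSet_Ici).comp
      (hadapted s)).stronglyMeasurable
  have hg_int : Integrable g μ :=
    Integrable.of_bound (hgm.mono (F.le s)).aestronglyMeasurable _ hgC
  have hgΔ : ∫ ω, g ω * Δ ω ∂μ ≤ -γ * ∫ ω, g ω ∂μ := by
    refine integral_mul_le_mul_integral_of_condExp_le (F.le s) hgm hg0 hgC hΔ ?_
    filter_upwards [hdrift s] with ω hω hgω
    exact hω (Set.mem_Ici.1 (Set.mem_of_indicator_ne_zero hgω))
  have hgΔ_int : Integrable (fun ω => g ω * Δ ω) μ := hΔ.bdd_mul hg_int.aestronglyMeasurable hgC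
  calc ∫ ω, exp (r * L (s + 1) ω) ∂μ
      ≤ ∫ ω, ((1 + r * γ / 2) * g ω + r * (g ω * Δ ω) + exp (r * (ν + θ))) ∂μ := by
        refine integral_mono_ae (hexp_int (s + 1)) ?_ ?_
        · exact ((hg_int.const_mul _).add (hgΔ_int.const_mul r)).add (integrable_const _)
        · filter_upwards [hbdd s] with ω hω
          exact exp_mul_le_indicator_add hr hexp hω
    _ = (1 + r * γ / 2) * ∫ ω, g ω ∂μ + r * ∫ ω, g ω * Δ ω ∂μ + exp (r * (ν + θ)) := by
        have hsum : Integrable (fun ω => (1 + r * γ / 2) * g ω + r * (g ω * Δ ω)) μ :=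
          (hg_int.const_mul (1 + r * γ / 2)).add (hgΔ_int.const_mul r)
        rw [integral_add hsum (integrable_const _),
          integral_add (hg_int.const_mul _) (hgΔ_int.const_mul r), integral_const_mul,
          integral_const_mul, integral_const, probReal_univ, one_smul]
    _ ≤ (1 - r * γ / 2) * ∫ ω, exp (r * L s ω) ∂μ + exp (r * (ν + θ)) := by
        have hgE_int := integral_mono hg_int (hexp_int s) hgE
        nlinarith [mul_le_mul_of_nonneg_left hgΔ hr,
          mul_le_mul_of_nonneg_left hgE_int (by linarith : (0 : ℝ) ≤ 1 - r * γ / 2)]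

theorem integral_exp_mul_le_of_drift [IsProbabilityMeasure μ] (F : Filtration ℕ m0)
    (hadapted : Adapted F L) (hL0 : ∀ ω, L 0 ω = 0) {θ γ r : ℝ}
    (hdrift : ∀ t, ∀ᵐ ω ∂μ, θ ≤ L t ω →
      (μ[(fun ω' => L (t + 1) ω' - L t ω') | F t]) ω ≤ -γ)
    (hbdd : ∀ t, ∀ᵐ ω ∂μ, |L (t + 1) ω - L t ω| ≤ ν) (hr : 0 < r) (hγ : 0 < γ)
    (hrγ : r * γ ≤ 2) (hexp : ∀ x, |x| ≤ ν → exp (r * x) ≤ 1 + r * x + r * γ / 2) (t : ℕ) :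
    ∫ ω, exp (r * L t ω) ∂μ ≤ 1 + 2 * exp (r * (ν + θ)) / (r * γ) := by
  have hstart : ∫ ω, exp (r * L 0 ω) ∂μ ≤ 1 := by simp [hL0]
  convert le_one_add_div_of_le_one_sub_mul_add (a := fun n => ∫ ω, exp (r * L n ω) ∂μ)
    (by positivity) (by linarith) hstart (exp_pos _).le
    (integral_exp_mul_succ_le F hadapted hL0 hdrift hbdd hr.le hrγ hexp) t using 2
  ring

end DriftProcess

theorem hajek_neely_exponential_moment_general
    {Ω : Type*} {m0 : MeasurableSpace Ω} {μ : Measure Ω} [IsProbabilityMeasure μ]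
    (F : Filtration ℕ m0) (L : ℕ → Ω → ℝ)
    (hadapted : Adapted F L)
    (hL0 : ∀ ω, L 0 ω = 0)
    (θ γ νmax : ℝ) (hγ : 0 < γ) (hγν : γ ≤ νmax)
    (hdrift : ∀ t, ∀ᵐ ω ∂μ, θ ≤ L t ω →
      (μ[(fun ω' => L (t + 1) ω' - L t ω') | F t]) ω ≤ -γ)
    (hbdd : ∀ t, ∀ᵐ ω ∂μ, |L (t + 1) ω - L t ω| ≤ νmax)
    (t : ℕ) :
    ∫ ω, Real.exp (γ / (νmax ^ 2 + νmax * γ / 3) * L t ω) ∂μ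
      ≤ 1 + 2 * Real.exp (γ / (νmax ^ 2 + νmax * γ / 3) * (νmax + θ)) /
          (γ / (νmax ^ 2 + νmax * γ / 3) * γ) := by
  have hD : 0 < νmax ^ 2 + νmax * γ / 3 := by nlinarith
  have hrγ : γ / (νmax ^ 2 + νmax * γ / 3) * γ ≤ 2 := by
    rw [div_mul_eq_mul_div, div_le_iff₀ hD]
    nlinarith
  exact integral_exp_mul_le_of_drift F hadapted hL0 hdrift hbdd (div_pos hγ hD) hγ hrγ
    (fun x hx => exp_mul_le_one_add_mul_add_of_abs_le hγ hγν hx) t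

/-- **Exponential moment bound from negative drift (Hajek/Neely).** Let `(F t)` be a filtration
and `(L t)` an adapted nonnegative process with `L 0 = 0`, such that (i) on `{L t ≥ θ}` the
conditional expected drift is at most `-γ`, and (ii) `|L (t+1) - L t| ≤ ν_max` a.s.
Then with `r = γ/(ν_max² + ν_max γ/3)`, for every `t`,
`E[e^{r L t}] ≤ 1 + 2 e^{r(ν_max + θ)}/(r γ)`. -/
theorem hajek_neely_exponential_moment
    {Ω : Type*} {m0 : MeasurableSpace Ω} {μ : Measure Ω} [IsProbabilityMeasure μ]
    (F : Filtration ℕ m0) (L : ℕ → Ω → ℝ)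
    (hadapted : Adapted F L)
    (hL0 : ∀ ω, L 0 ω = 0) (hLnonneg : ∀ t ω, 0 ≤ L t ω)
    (θ γ νmax : ℝ) (hθ : 0 < θ) (hγ : 0 < γ) (hγν : γ ≤ νmax)
    (hdrift : ∀ t, ∀ᵐ ω ∂μ, θ ≤ L t ω →
      (μ[(fun ω' => L (t + 1) ω' - L t ω') | F t]) ω ≤ -γ)
    (hbdd : ∀ t, ∀ᵐ ω ∂μ, |L (t + 1) ω - L t ω| ≤ νmax)
    (t : ℕ) :
    ∫ ω, Real.exp (γ / (νmax ^ 2 + νmax * γ / 3) * L t ω) ∂μ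
      ≤ 1 + 2 * Real.exp (γ / (νmax ^ 2 + νmax * γ / 3) * (νmax + θ)) /
          (γ / (νmax ^ 2 + νmax * γ / 3) * γ) :=
  hajek_neely_exponential_moment_general F L hadapted hL0 θ γ νmax hγ hγν hdrift hbdd t
end

section
/- Maximal Hoeffding inequality: Let X_1, X_2, …, X_m be i.i.d. random variables with X_i ∈ [0,1] and E[X_i] = μ. Then for every y > 0, P( ∃ s with 1 ≤ s ≤ m such that Σ_{i=1}^{s}(μ − X_i) > y ) ≤ e^{−2y²/m}. -/
/-!
For `t ≥ 0` the process `k ↦ exp (t * S k)`, with `S k = ∑ i < k, (μ₀ - X i)`, is a nonnegative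
submartingale for the filtration of the strict past: the increment `μ₀ - X k` is independent of
that past and, being centred, has `E[exp (t * (μ₀ - X k))] ≥ exp 0 = 1` by Jensen. Doob's maximal
inequality then bounds `P(max_{k ≤ m} S k ≥ y)` by `exp (-t * y) * E[exp (t * S m)]`, Hoeffding's
lemma bounds the last expectation by `exp (m * t ^ 2 / 8)`, and `t = 4 * y / m` gives the claim.
-/

open MeasureTheory ProbabilityTheory Real
open scoped NNReal

namespace ProbabilityTheory

variable {Ω : Type*} {mΩ : MeasurableSpace Ω} {μ : Measure Ω}

lemma exp_mul_integral_le_mgf [IsProbabilityMeasure μ] {X : Ω → ℝ} {t : ℝ}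
    (hX : Integrable X μ) (h_int : Integrable (fun ω ↦ exp (t * X ω)) μ) :
    exp (t * μ[X]) ≤ mgf X μ t := by
  rw [← integral_const_mul]
  exact convexOn_exp.map_integral_le continuous_exp.continuousOn isClosed_univ
    (ae_of_all _ fun _ ↦ Set.mem_univ _) (hX.const_mul t) h_int

lemma HasSubgaussianMGF.integral_eq_zero [IsProbabilityMeasure μ] {X : Ω → ℝ} {c : ℝ≥0}
    (h : HasSubgaussianMGF X c μ) : μ[X] = 0 := by
  have h_le (t : ℝ) : t * μ[X] ≤ c * t ^ 2 / 2 :=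
    exp_le_exp.1 ((exp_mul_integral_le_mgf h.integrable (h.integrable_exp_mul t)).trans
      (h.mgf_le t))
  have hc : (0 : ℝ) ≤ c := c.2
  -- testing at `t = μ[X] / (c + 1)` gives `μ[X] ^ 2 * (c + 2) ≤ 0`
  have key := h_le (μ[X] / (c + 1))
  field_simp at key
  nlinarith [sq_nonneg (μ[X]), mul_nonneg hc (sq_nonneg (μ[X]))]

lemma HasSubgaussianMGF.one_le_mgf [IsProbabilityMeasure μ] {X : Ω → ℝ} {c : ℝ≥0}
    (h : HasSubgaussianMGF X c μ) (t : ℝ) : 1 ≤ mgf X μ t := by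
  simpa [h.integral_eq_zero] using
    exp_mul_integral_le_mgf (t := t) h.integrable (h.integrable_exp_mul t)

section Past

variable {β : Type*} [mβ : MeasurableSpace β] {Y : ℕ → Ω → β} (hY : ∀ i, Measurable (Y i))

def pastFiltration : Filtration ℕ mΩ where
  seq n := ⨆ i ∈ Set.Iio n, mβ.comap (Y i)
  mono' _ _ hnm := biSup_mono fun _ hi ↦ lt_of_lt_of_le hi hnm
  le' _ := iSup₂_le fun i _ ↦ (hY i).comap_le

lemma comap_le_pastFiltration {i n : ℕ} (hin : i < n) :
    mβ.comap (Y i) ≤ pastFiltration hY n :=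
  le_biSup (fun i ↦ mβ.comap (Y i)) hin

lemma indep_comap_pastFiltration (h_indep : iIndepFun Y μ) (n : ℕ) :
    Indep (mβ.comap (Y n)) (pastFiltration hY n) μ := by
  have := indep_iSup_of_disjoint (fun i ↦ (hY i).comap_le) h_indep
    (S := {n}) (T := Set.Iio n) (by simp)
  rwa [iSup_singleton] at this

end Past

lemma submartingale_exp_mul_sum_range [IsFiniteMeasure μ] {Y : ℕ → Ω → ℝ}
    (hY : ∀ i, Measurable (Y i)) (h_indep : iIndepFun Y μ) {t : ℝ}
    (h_int : ∀ i, Integrable (fun ω ↦ exp (t * Y i ω)) μ)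
    (h_mgf : ∀ i, 1 ≤ mgf (Y i) μ t) :
    Submartingale (fun n ω ↦ exp (t * ∑ i ∈ Finset.range n, Y i ω)) (pastFiltration hY) μ := by
  set f : ℕ → Ω → ℝ := fun n ω ↦ exp (t * ∑ i ∈ Finset.range n, Y i ω)
  have h_meas (n : ℕ) : Measurable[pastFiltration hY n] (f n) :=
    ((Finset.measurable_sum _ fun i hi ↦ (comap_measurable (Y i)).mono
      (comap_le_pastFiltration hY (Finset.mem_range.1 hi)) le_rfl).const_mul t).exp
  have hf_int (n : ℕ) : Integrable (f n) μ := by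
    simpa [f, Finset.sum_apply] using
      h_indep.integrable_exp_mul_sum hY (s := Finset.range n) fun i _ ↦ h_int i
  have h_succ (n : ℕ) : f (n + 1) = f n * fun ω ↦ exp (t * Y n ω) := by
    ext ω
    simp only [f, Pi.mul_apply, Finset.sum_range_succ, mul_add, exp_add]
  refine submartingale_nat (fun n ↦ (h_meas n).stronglyMeasurable) hf_int fun n ↦ ?_
  have h_pull : μ[f (n + 1) | pastFiltration hY n]
      =ᵐ[μ] f n * μ[fun ω ↦ exp (t * Y n ω) | pastFiltration hY n] := by
    rw [h_succ]
    exact condExp_mul_of_stronglyMeasurable_left (h_meas n).stronglyMeasurable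
      (h_succ n ▸ hf_int (n + 1)) (h_int n)
  have h_indep_step : μ[fun ω ↦ exp (t * Y n ω) | pastFiltration hY n]
      =ᵐ[μ] fun _ ↦ mgf (Y n) μ t :=
    condExp_indep_eq (hY n).comap_le ((pastFiltration hY).le n)
      ((comap_measurable (Y n)).const_mul t).exp.stronglyMeasurable
      (indep_comap_pastFiltration hY h_indep n)
  filter_upwards [h_pull, h_indep_step] with ω h_pull h_indep_step
  rw [h_pull, Pi.mul_apply, h_indep_step]
  exact le_mul_of_one_le_right (exp_pos _).le (h_mgf n)

lemma measureReal_exists_sum_range_ge_le_exp_mul_mgf [IsFiniteMeasure μ] {Y : ℕ → Ω → ℝ}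
    (hY : ∀ i, Measurable (Y i)) (h_indep : iIndepFun Y μ) {t : ℝ} (ht : 0 ≤ t)
    (h_int : ∀ i, Integrable (fun ω ↦ exp (t * Y i ω)) μ) (h_mgf : ∀ i, 1 ≤ mgf (Y i) μ t)
    (ε : ℝ) (n : ℕ) :
    μ.real {ω | ∃ k ≤ n, ε ≤ ∑ i ∈ Finset.range k, Y i ω}
      ≤ exp (-t * ε) * mgf (fun ω ↦ ∑ i ∈ Finset.range n, Y i ω) μ t := by
  have h_sub := submartingale_exp_mul_sum_range hY h_indep h_int h_mgf
  set f : ℕ → Ω → ℝ := fun n ω ↦ exp (t * ∑ i ∈ Finset.range n, Y i ω)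
  set a : ℝ≥0 := (exp (t * ε)).toNNReal
  have ha : (a : ℝ) = exp (t * ε) := coe_toNNReal _ (exp_pos _).le
  set B := {ω | (a : ℝ) ≤ (Finset.range (n + 1)).sup' Finset.nonempty_range_add_one
    fun k ↦ f k ω}
  have h_subset : {ω | ∃ k ≤ n, ε ≤ ∑ i ∈ Finset.range k, Y i ω} ⊆ B := by
    rintro ω ⟨k, hkn, hk⟩
    refine le_trans ?_ (Finset.le_sup' (fun k ↦ f k ω) (Finset.mem_range.2 (Nat.lt_succ_of_le hkn)))
    rw [ha]
    exact exp_le_exp.2 (mul_le_mul_of_nonneg_left hk ht)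
  have h_doob : exp (t * ε) * μ.real B ≤ ∫ ω in B, f n ω ∂μ := by
    rw [← ha, measureReal_def, ← ENNReal.coe_toReal, ← ENNReal.toReal_mul]
    exact ENNReal.toReal_le_of_le_ofReal (integral_nonneg fun _ ↦ (exp_pos _).le)
      (maximal_ineq h_sub (fun _ _ ↦ (exp_pos _).le) n)
  calc μ.real {ω | ∃ k ≤ n, ε ≤ ∑ i ∈ Finset.range k, Y i ω}
      ≤ μ.real B := measureReal_mono h_subset
    _ = exp (-t * ε) * (exp (t * ε) * μ.real B) := by
      rw [← mul_assoc, ← exp_add, neg_mul, neg_add_cancel, exp_zero, one_mul]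
    _ ≤ exp (-t * ε) * ∫ ω, f n ω ∂μ := by
      gcongr
      exact h_doob.trans (setIntegral_le_integral (h_sub.integrable n)
        (ae_of_all _ fun _ ↦ (exp_pos _).le))
    _ = exp (-t * ε) * mgf (fun ω ↦ ∑ i ∈ Finset.range n, Y i ω) μ t := rfl

lemma measureReal_exists_sum_range_ge_le_of_iIndepFun [IsProbabilityMeasure μ] {Y : ℕ → Ω → ℝ}
    (hY : ∀ i, Measurable (Y i)) (h_indep : iIndepFun Y μ) {c : ℝ≥0}
    (h_subG : ∀ i, HasSubgaussianMGF (Y i) c μ) {ε : ℝ} (hε : 0 ≤ ε) (n : ℕ) :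
    μ.real {ω | ∃ k ≤ n, ε ≤ ∑ i ∈ Finset.range k, Y i ω} ≤ exp (-ε ^ 2 / (2 * n * c)) := by
  set t : ℝ := ε / (n * c)
  have h_sum := HasSubgaussianMGF.sum_of_iIndepFun h_indep (s := Finset.range n)
    fun i _ ↦ h_subG i
  calc μ.real {ω | ∃ k ≤ n, ε ≤ ∑ i ∈ Finset.range k, Y i ω}
      ≤ exp (-t * ε) * mgf (fun ω ↦ ∑ i ∈ Finset.range n, Y i ω) μ t :=
        measureReal_exists_sum_range_ge_le_exp_mul_mgf hY h_indep (by positivity)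
          (fun i ↦ (h_subG i).integrable_exp_mul t) (fun i ↦ (h_subG i).one_le_mgf t) ε n
    _ ≤ exp (-t * ε) * exp (n * c * t ^ 2 / 2) := by
        gcongr
        simpa using h_sum.mgf_le t
    _ = exp (-ε ^ 2 / (2 * n * c)) := by
        rw [← exp_add]
        congr 1
        rcases eq_or_ne ((n : ℝ) * c) 0 with h | h
        · simp [t, h, mul_assoc]
        · simp only [t]
          field_simp
          ring

end ProbabilityTheory

theorem maximal_hoeffding_general
    {Ω : Type*} [MeasurableSpace Ω] (μ : Measure Ω) [IsProbabilityMeasure μ]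
    (m : ℕ) (X : ℕ → Ω → ℝ) (μ₀ : ℝ)
    (hmeas : ∀ i, Measurable (X i))
    (hindep : iIndepFun X μ)
    (hbound : ∀ i ω, X i ω ∈ Set.Icc (0 : ℝ) 1)
    (hmean : ∀ i, ∫ ω, X i ω ∂μ = μ₀)
    (y : ℝ) (hy : 0 < y) :
    (μ {ω | ∃ s, 1 ≤ s ∧ s ≤ m ∧ y < ∑ i ∈ Finset.range s, (μ₀ - X i ω)}).toReal
      ≤ Real.exp (-2 * y ^ 2 / m) := by
  set Y : ℕ → Ω → ℝ := fun i ω ↦ μ₀ - X i ω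
  have hY (i : ℕ) : Measurable (Y i) := measurable_const.sub (hmeas i)
  have h_indep : iIndepFun Y μ := hindep.comp _ fun _ ↦ measurable_const.sub measurable_id
  have h_subG (i : ℕ) : HasSubgaussianMGF (Y i) (1 / 4) μ := by
    have h_range : ∀ᵐ ω ∂μ, Y i ω ∈ Set.Icc (μ₀ - 1) μ₀ :=
      ae_of_all _ fun ω ↦ ⟨by linarith [(hbound i ω).2], by linarith [(hbound i ω).1]⟩
    have h_centred : μ[Y i] = 0 := by
      rw [integral_sub (integrable_const μ₀) (Integrable.of_mem_Icc 0 1 (hmeas i).aemeasurable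
        (ae_of_all _ (hbound i))), hmean i]
      simp
    convert hasSubgaussianMGF_of_mem_Icc_of_integral_eq_zero (hY i).aemeasurable h_range
      h_centred using 1
    norm_num
  calc (μ {ω | ∃ s, 1 ≤ s ∧ s ≤ m ∧ y < ∑ i ∈ Finset.range s, (μ₀ - X i ω)}).toReal
      ≤ μ.real {ω | ∃ k ≤ m, y ≤ ∑ i ∈ Finset.range k, Y i ω} :=
        measureReal_mono fun ω ⟨s, _, hsm, hs⟩ ↦ ⟨s, hsm, hs.le⟩
    _ ≤ exp (-y ^ 2 / (2 * m * (1 / 4 : ℝ≥0))) :=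
        measureReal_exists_sum_range_ge_le_of_iIndepFun hY h_indep h_subG hy.le m
    _ = exp (-2 * y ^ 2 / m) := by
        congr 1
        norm_num
        ring

/-- **Maximal Hoeffding inequality.** Let `X 0, …, X (m-1)` be i.i.d. random variables with
values in `[0,1]` and mean `μ₀`.  Then for every `y > 0`,
`P(∃ s, 1 ≤ s ≤ m, ∑_{i<s} (μ₀ - X i) > y) ≤ e^{-2y²/m}`. -/
theorem maximal_hoeffding
    {Ω : Type*} [MeasurableSpace Ω] (μ : Measure Ω) [IsProbabilityMeasure μ]
    (m : ℕ) (hm : 1 ≤ m) (X : ℕ → Ω → ℝ) (μ₀ : ℝ)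
    (hmeas : ∀ i, Measurable (X i))
    (hindep : iIndepFun X μ)
    (hident : ∀ i j, IdentDistrib (X i) (X j) μ μ)
    (hbound : ∀ i ω, X i ω ∈ Set.Icc (0 : ℝ) 1)
    (hmean : ∀ i, ∫ ω, X i ω ∂μ = μ₀)
    (y : ℝ) (hy : 0 < y) :
    (μ {ω | ∃ s, 1 ≤ s ∧ s ≤ m ∧ y < ∑ i ∈ Finset.range s, (μ₀ - X i ω)}).toReal
      ≤ Real.exp (-2 * y ^ 2 / m) :=
  maximal_hoeffding_general μ m X μ₀ hmeas hindep hbound hmean y hy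
end

section
/- MOSS anytime confidence-bound tail: Let (X_k)_{k≥1} be i.i.d. random variables with X_k ∈ [0,1] and mean μ, and let X̄_s = (1/s)Σ_{k=1}^{s} X_k. Let M > 0 and T > 0 be reals, m ≥ 1 an integer, and define ζ = μ − min_{1 ≤ s ≤ m} ( X̄_s + √( (2/s)·max( log(T/(M·s)), 0 ) ) ). Then for every y > 0: P(ζ > y) ≤ (9/y² + 6/y⁴)·(M²/T²). -/
/-!
Split `1 ≤ s ≤ m` into the blocks `r ^ j ≤ s < r ^ (j + 1)`, `r = 3/2`. If the index at some `s`
of block `j` drops below `μ₀ - y`, the centred partial sum `∑ k < s, (μ₀ - X k)` exceeds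
`t_j = r ^ j y + √(2 r ^ j L_j)`, where `L_j` is the logarithmic term taken at the right end of
the block. As `exp (l * ∑ k < s, (μ₀ - X k))` is a nonnegative submartingale, Doob's maximal
inequality and Hoeffding's lemma bound the probability of this within block `j` by
`exp (-2 t_j² / r ^ (j + 1)) ≤ r² (M/T)² r ^ (2j) exp (-(2/r) y² r ^ j)`.
Summing over the blocks, `v² e^{-v}` telescopes against `H (w) = (1 + w) e^{-w}`:
`(r - 1) v² e^{-v} ≤ r² (H (v/r) - H v)`, so the total is at most `(729/128) M² / (T² y⁴)`.
-/

open MeasureTheory ProbabilityTheory Real Finset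
open scoped NNReal

lemma one_add_mul_exp_neg_le_one (w : ℝ) : (1 + w) * exp (-w) ≤ 1 := by
  rw [exp_neg, ← div_eq_mul_inv, div_le_one (exp_pos w)]
  linarith [add_one_le_exp w]

lemma sub_one_mul_sq_mul_exp_neg_le {r v : ℝ} (hr : 0 < r) (hv : 0 ≤ v) :
    (r - 1) * (v ^ 2 * exp (-v)) ≤
      r ^ 2 * ((1 + v / r) * exp (-(v / r)) - (1 + v) * exp (-v)) := by
  have hexp : exp (-v) * (v - v / r + 1) ≤ exp (-(v / r)) := by
    rw [show -(v / r) = -v + (v - v / r) by ring, exp_add]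
    gcongr
    exact add_one_le_exp _
  have hpoly : r ^ 2 * ((1 + v / r) * (v - v / r + 1) - (1 + v)) = (r - 1) * v ^ 2 := by
    field_simp
    ring
  calc (r - 1) * (v ^ 2 * exp (-v))
      = r ^ 2 * ((1 + v / r) * (exp (-v) * (v - v / r + 1)) - (1 + v) * exp (-v)) := by
        linear_combination (-exp (-v)) * hpoly
    _ ≤ r ^ 2 * ((1 + v / r) * exp (-(v / r)) - (1 + v) * exp (-v)) := by gcongr

theorem sub_one_mul_sum_sq_mul_exp_neg_le {b r : ℝ} (hb : 0 ≤ b) (hr : 1 < r) (J : ℕ) :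
    (r - 1) * ∑ j ∈ range J, (b * r ^ j) ^ 2 * exp (-(b * r ^ j)) ≤ r ^ 2 := by
  set g : ℕ → ℝ := fun j => (1 + b * r ^ j / r) * exp (-(b * r ^ j / r))
  have hg : ∀ j, g (j + 1) = (1 + b * r ^ j) * exp (-(b * r ^ j)) := fun j => by
    simp only [g, pow_succ, mul_div_assoc, div_self (by positivity : r ≠ 0), mul_one]
  calc (r - 1) * ∑ j ∈ range J, (b * r ^ j) ^ 2 * exp (-(b * r ^ j))
      ≤ ∑ j ∈ range J, r ^ 2 * (g j - g (j + 1)) := by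
        rw [mul_sum]
        refine sum_le_sum fun j _ => ?_
        rw [hg]
        exact sub_one_mul_sq_mul_exp_neg_le (by linarith) (by positivity)
    _ = r ^ 2 * (g 0 - g J) := by rw [← mul_sum, sum_range_sub']
    _ ≤ r ^ 2 * 1 := by
        gcongr
        have : 0 ≤ g J := by positivity
        linarith [one_add_mul_exp_neg_le_one (b * r ^ 0 / r)]
    _ = r ^ 2 := mul_one _

theorem sum_sq_pow_mul_exp_neg_mul_pow_le {a r : ℝ} (ha : 0 < a) (hr : 1 < r) (J : ℕ) :
    ∑ j ∈ range J, (r ^ j) ^ 2 * exp (-(a * r ^ j)) ≤ r ^ 2 / ((r - 1) * a ^ 2) := by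
  have h := sub_one_mul_sum_sq_mul_exp_neg_le ha.le hr J
  simp only [mul_pow, mul_assoc, ← mul_sum] at h
  rw [le_div_iff₀ (mul_pos (sub_pos.mpr hr) (pow_pos ha 2))]
  linarith

section PartialSums

variable {Ω : Type*} {mΩ : MeasurableSpace Ω} {μ : Measure Ω} {Z : ℕ → Ω → ℝ}

lemma one_le_integral_exp_mul_of_integral_eq_zero [IsProbabilityMeasure μ] {W : Ω → ℝ} (l : ℝ)
    (hW : Integrable W μ) (hexp : Integrable (fun ω => exp (l * W ω)) μ) (hmean : μ[W] = 0) :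
    1 ≤ ∫ ω, exp (l * W ω) ∂μ := by
  have h := integral_mono ((integrable_const 1).add (hW.const_mul l)) hexp
    fun ω => by simpa [add_comm] using add_one_le_exp (l * W ω)
  simpa [integral_add, integral_const_mul, hW.const_mul l, hmean] using h

noncomputable def partialSumFiltration (hZ : ∀ k, Measurable (Z k)) : Filtration ℕ mΩ :=
  Filtration.natural (fun s ω => ∑ k ∈ range s, Z k ω)
    fun _ => (Finset.measurable_sum _ fun k _ => hZ k).stronglyMeasurable

lemma stronglyAdapted_partialSumFiltration (hZ : ∀ k, Measurable (Z k)) :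
    StronglyAdapted (partialSumFiltration hZ) fun s ω => ∑ k ∈ range s, Z k ω :=
  Filtration.stronglyAdapted_natural _

lemma partialSumFiltration_le_iSup_comap (hZ : ∀ k, Measurable (Z k)) (s : ℕ) :
    partialSumFiltration hZ s ≤ ⨆ k ∈ Set.Iio s, MeasurableSpace.comap (Z k) inferInstance := by
  refine iSup₂_le fun j hj => Measurable.comap_le ?_
  refine Finset.measurable_sum _ fun k hk => ?_
  exact (comap_measurable (Z k)).mono
    (le_iSup₂ (f := fun k (_ : k ∈ Set.Iio s) => MeasurableSpace.comap (Z k) inferInstance) k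
      (lt_of_lt_of_le (mem_range.mp hk) hj)) le_rfl

lemma indep_comap_partialSumFiltration (hZ : ∀ k, Measurable (Z k)) (hindep : iIndepFun Z μ)
    (s : ℕ) : Indep (MeasurableSpace.comap (Z s) inferInstance) (partialSumFiltration hZ s) μ := by
  have h := indep_iSup_of_disjoint (fun k => (hZ k).comap_le)
    ((iIndepFun_iff_iIndep _ _ _).mp hindep) (S := {s}) (T := Set.Iio s)
    (Set.disjoint_singleton_left.mpr (lt_irrefl s))
  refine indep_of_indep_of_le_right (indep_of_indep_of_le_left h ?_)
    (partialSumFiltration_le_iSup_comap hZ s)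
  exact le_iSup₂ (f := fun k (_ : k ∈ ({s} : Set ℕ)) => MeasurableSpace.comap (Z k) inferInstance)
    s rfl

theorem submartingale_exp_mul_partialSum [IsProbabilityMeasure μ] (hZ : ∀ k, Measurable (Z k))
    (hindep : iIndepFun Z μ) (l : ℝ) (hint : ∀ k, Integrable (Z k) μ)
    (hexp : ∀ k, Integrable (fun ω => exp (l * Z k ω)) μ) (hmean : ∀ k, μ[Z k] = 0) :
    Submartingale (fun s ω => exp (l * ∑ k ∈ range s, Z k ω)) (partialSumFiltration hZ) μ := by
  set f : ℕ → Ω → ℝ := fun s ω => exp (l * ∑ k ∈ range s, Z k ω)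
  have hf_adapted : StronglyAdapted (partialSumFiltration hZ) f := fun s =>
    (continuous_exp.comp (continuous_const_mul l)).comp_stronglyMeasurable
      (stronglyAdapted_partialSumFiltration hZ s)
  have hf_int : ∀ s, Integrable (f s) μ := fun s => by
    simpa [f, Finset.sum_apply] using
      hindep.integrable_exp_mul_sum hZ (s := range s) fun k _ => hexp k
  refine submartingale_of_condExp_sub_nonneg_nat hf_adapted hf_int fun i => ?_
  set g : Ω → ℝ := fun ω => exp (l * Z i ω) - 1
  have hg_int : Integrable g μ := (hexp i).sub (integrable_const 1)
  have hstep : f (i + 1) - f i = f i * g := by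
    funext ω
    simp only [f, g, Pi.sub_apply, Pi.mul_apply, sum_range_succ, mul_add, exp_add]
    ring
  have hg_meas : StronglyMeasurable[MeasurableSpace.comap (Z i) inferInstance] g :=
    (((comap_measurable (Z i)).const_mul l).exp.sub_const 1).stronglyMeasurable
  have hg_mean : 0 ≤ μ[g] := by
    rw [integral_sub (hexp i) (integrable_const 1)]
    simpa using one_le_integral_exp_mul_of_integral_eq_zero l (hint i) (hexp i) (hmean i)
  rw [hstep]
  filter_upwards [condExp_mul_of_stronglyMeasurable_left (hf_adapted i)
      (hstep ▸ (hf_int _).sub (hf_int _)) hg_int,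
    condExp_indep_eq (hZ i).comap_le ((partialSumFiltration hZ).le i) hg_meas
      (indep_comap_partialSumFiltration hZ hindep i)] with ω h_pull h_indep
  rw [h_pull, Pi.mul_apply, h_indep]
  exact mul_nonneg (exp_pos _).le hg_mean

theorem exp_mul_measureReal_exists_partialSum_ge_le [IsProbabilityMeasure μ]
    (hZ : ∀ k, Measurable (Z k)) (hindep : iIndepFun Z μ) (hint : ∀ k, Integrable (Z k) μ)
    {l : ℝ} (hl : 0 ≤ l) (hexp : ∀ k, Integrable (fun ω => exp (l * Z k ω)) μ)
    (hmean : ∀ k, μ[Z k] = 0) (n : ℕ) (t : ℝ) :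
    exp (l * t) * μ.real {ω | ∃ s ≤ n, t ≤ ∑ k ∈ range s, Z k ω} ≤
      ∫ ω, exp (l * ∑ k ∈ range n, Z k ω) ∂μ := by
  set f : ℕ → Ω → ℝ := fun s ω => exp (l * ∑ k ∈ range s, Z k ω)
  set A := {ω | exp (l * t) ≤ (range (n + 1)).sup' nonempty_range_add_one fun k => f k ω}
  have hf := submartingale_exp_mul_partialSum hZ hindep l hint hexp hmean
  have hdoob := ENNReal.toReal_mono ENNReal.ofReal_ne_top
    (maximal_ineq (ε := ⟨exp (l * t), (exp_pos _).le⟩) hf (fun s ω => (exp_pos _).le) n)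
  rw [ENNReal.toReal_mul, ENNReal.toReal_ofReal (integral_nonneg fun ω => (exp_pos _).le)]
    at hdoob
  have hsubset : {ω | ∃ s ≤ n, t ≤ ∑ k ∈ range s, Z k ω} ⊆ A := by
    rintro ω ⟨s, hs, hts⟩
    exact le_sup'_of_le (fun k => f k ω) (mem_range.mpr (Nat.lt_succ_of_le hs))
      (exp_le_exp.mpr (mul_le_mul_of_nonneg_left hts hl))
  calc exp (l * t) * μ.real {ω | ∃ s ≤ n, t ≤ ∑ k ∈ range s, Z k ω}
      ≤ exp (l * t) * μ.real A :=
        mul_le_mul_of_nonneg_left (measureReal_mono hsubset (measure_ne_top μ A)) (exp_pos _).le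
    _ ≤ ∫ ω in A, f n ω ∂μ := hdoob
    _ ≤ ∫ ω, f n ω ∂μ :=
        setIntegral_le_integral (hf.integrable n) (ae_of_all _ fun ω => (exp_pos _).le)

theorem measureReal_exists_partialSum_ge_le [IsProbabilityMeasure μ] (hZ : ∀ k, Measurable (Z k))
    (hindep : iIndepFun Z μ) {c : ℝ≥0} (hsub : ∀ k, HasSubgaussianMGF (Z k) c μ)
    (hmean : ∀ k, μ[Z k] = 0) (n : ℕ) {t : ℝ} (ht : 0 ≤ t) :
    μ.real {ω | ∃ s ≤ n, t ≤ ∑ k ∈ range s, Z k ω} ≤ exp (-t ^ 2 / (2 * n * c)) := by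
  rcases eq_or_lt_of_le (by positivity : (0 : ℝ) ≤ n * c) with hnc | hnc
  · rw [mul_assoc, ← hnc, mul_zero, div_zero, exp_zero]
    exact measureReal_le_one
  set l := t / (n * c)
  have hmgf : ∫ ω, exp (l * ∑ k ∈ range n, Z k ω) ∂μ ≤ exp (n * c * l ^ 2 / 2) := by
    simpa [mgf] using
      (HasSubgaussianMGF.sum_of_iIndepFun hindep (s := range n) fun k _ => hsub k).mgf_le l
  have hbound := (exp_mul_measureReal_exists_partialSum_ge_le hZ hindep
    (fun k => (hsub k).integrable) (by positivity) (fun k => (hsub k).integrable_exp_mul l)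
    hmean n t).trans hmgf
  rw [← le_div_iff₀' (exp_pos _), ← exp_sub] at hbound
  refine hbound.trans_eq (congrArg exp ?_)
  simp only [l]
  field_simp
  ring

end PartialSums

lemma hasSubgaussianMGF_integral_sub_of_mem_Icc {Ω : Type*} {mΩ : MeasurableSpace Ω}
    {μ : Measure Ω} [IsProbabilityMeasure μ] {W : Ω → ℝ} (hW : Measurable W)
    (hb : ∀ ω, W ω ∈ Set.Icc (0 : ℝ) 1) :
    HasSubgaussianMGF (fun ω => μ[W] - W ω) (1 / 4) μ := by
  have h := (hasSubgaussianMGF_of_mem_Icc (μ := μ) hW.aemeasurable (ae_of_all _ hb)).neg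
  norm_num at h
  convert h using 1
  funext ω
  simp

theorem measureReal_exists_sum_sub_ge_le {Ω : Type*} {mΩ : MeasurableSpace Ω} {μ : Measure Ω}
    [IsProbabilityMeasure μ] {X : ℕ → Ω → ℝ} {μ₀ : ℝ} (hmeas : ∀ k, Measurable (X k))
    (hindep : iIndepFun X μ) (hbound : ∀ k ω, X k ω ∈ Set.Icc (0 : ℝ) 1)
    (hmean : ∀ k, μ[X k] = μ₀) (n : ℕ) {t : ℝ} (ht : 0 ≤ t) :
    μ.real {ω | ∃ s ≤ n, t ≤ ∑ k ∈ range s, (μ₀ - X k ω)} ≤ exp (-2 * t ^ 2 / n) := by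
  have hsub : ∀ k, HasSubgaussianMGF (fun ω => μ₀ - X k ω) (1 / 4) μ := fun k =>
    hmean k ▸ hasSubgaussianMGF_integral_sub_of_mem_Icc (hmeas k) (hbound k)
  have hcentred : ∀ k, μ[fun ω => μ₀ - X k ω] = 0 := fun k => by
    rw [integral_sub (integrable_const _)
      (Integrable.of_mem_Icc 0 1 (hmeas k).aemeasurable (ae_of_all _ (hbound k)))]
    simp [hmean k]
  convert measureReal_exists_partialSum_ge_le (Z := fun k ω => μ₀ - X k ω)
    (fun k => measurable_const.sub (hmeas k))
    (hindep.comp (fun _ x => μ₀ - x) fun _ => measurable_const.sub measurable_id) hsub hcentred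
    n ht using 2
  simp only [NNReal.coe_div, NNReal.coe_one, NNReal.coe_ofNat]
  ring

noncomputable def blockThreshold (r y M T : ℝ) (j : ℕ) : ℝ :=
  r ^ j * y + √(2 * r ^ j * max (log (T / (M * r ^ (j + 1)))) 0)

lemma exp_neg_two_mul_max_log_le {x : ℝ} (hx : 0 < x) :
    exp (-(2 * max (log x) 0)) ≤ (x ^ 2)⁻¹ := by
  rcases le_total (log x) 0 with h | h
  · rw [max_eq_right h, mul_zero, neg_zero, exp_zero]
    exact one_le_inv₀ (by positivity) |>.mpr (pow_le_one₀ hx.le ((log_nonpos_iff hx.le).mp h))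
  · rw [max_eq_left h, exp_neg, ← exp_log (by positivity : (0 : ℝ) < x ^ 2), log_pow]
    push_cast
    rfl

lemma blockThreshold_le_sum_sub {x : ℕ → ℝ} {μ₀ y M T r : ℝ} {s j : ℕ} (hy : 0 ≤ y)
    (hM : 0 < M) (hT : 0 < T) (hr : 0 < r) (hjs : r ^ j ≤ s) (hsj : s < r ^ (j + 1))
    (h : (∑ k ∈ range s, x k) / s + √((2 / s) * max (log (T / (M * s))) 0) < μ₀ - y) :
    blockThreshold r y M T j ≤ ∑ k ∈ range s, (μ₀ - x k) := by
  have hs : 0 < (s : ℝ) := (pow_pos hr j).trans_le hjs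
  set L := max (log (T / (M * s))) 0
  have hL : max (log (T / (M * r ^ (j + 1)))) 0 ≤ L :=
    max_le_max (log_le_log (by positivity) (by gcongr)) le_rfl
  have hsqrt : s * √((2 / s) * L) = √(2 * s * L) := by
    rw [show 2 * s * L = s ^ 2 * ((2 / s) * L) by field_simp, sqrt_mul (sq_nonneg _),
      sqrt_sq hs.le]
  rw [div_add' _ _ _ hs.ne', div_lt_iff₀ hs] at h
  rw [sum_sub_distrib, sum_const, card_range, nsmul_eq_mul]
  calc blockThreshold r y M T j ≤ s * y + √(2 * s * L) := by
        unfold blockThreshold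
        gcongr
    _ ≤ s * μ₀ - ∑ k ∈ range s, x k := by nlinarith

lemma exists_block_of_lt_sub_inf' {x : ℕ → ℝ} {μ₀ y M T r : ℝ} {m : ℕ} (hm : 1 ≤ m)
    (hy : 0 ≤ y) (hM : 0 < M) (hT : 0 < T) (hr : 1 < r)
    (h : y < μ₀ - (Icc 1 m).inf' (nonempty_Icc.mpr hm)
      (fun s => (∑ k ∈ range s, x k) / s + √((2 / s) * max (log (T / (M * s))) 0))) :
    ∃ j, r ^ j ≤ m ∧
      ∃ s ≤ ⌊r ^ (j + 1)⌋₊, blockThreshold r y M T j ≤ ∑ k ∈ range s, (μ₀ - x k) := by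
  obtain ⟨s, hs, hlt⟩ := (inf'_lt_iff _).mp (by linarith : _ < μ₀ - y)
  obtain ⟨hs1, hsm⟩ := mem_Icc.mp hs
  obtain ⟨j, hjs, hsj⟩ := exists_nat_pow_near (Nat.one_le_cast.mpr hs1) hr
  exact ⟨j, hjs.trans (Nat.cast_le.mpr hsm), s, Nat.le_floor hsj.le,
    blockThreshold_le_sum_sub hy hM hT (by linarith) hjs hsj hlt⟩

lemma exp_neg_two_mul_blockThreshold_sq_div_le {r y M T : ℝ} (hr1 : 1 ≤ r) (hr2 : r ≤ 2)
    (hy : 0 ≤ y) (hM : 0 < M) (hT : 0 < T) (j : ℕ) :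
    exp (-2 * blockThreshold r y M T j ^ 2 / ⌊r ^ (j + 1)⌋₊) ≤
      r ^ 2 * (M / T) ^ 2 * ((r ^ j) ^ 2 * exp (-(2 / r * y ^ 2 * r ^ j))) := by
  set P := r ^ j
  set L := max (log (T / (M * r ^ (j + 1)))) 0
  have hP : 0 < P := by positivity
  have hn : (0 : ℝ) < ⌊r ^ (j + 1)⌋₊ := by
    exact_mod_cast Nat.floor_pos.mpr (one_le_pow₀ hr1)
  have hnP : (⌊r ^ (j + 1)⌋₊ : ℝ) ≤ r * P := by
    rw [mul_comm, ← pow_succ]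
    exact Nat.floor_le (by positivity)
  have hsq : P ^ 2 * y ^ 2 + 2 * P * L ≤ blockThreshold r y M T j ^ 2 := by
    have := sq_sqrt (by positivity : 0 ≤ 2 * P * L)
    rw [show blockThreshold r y M T j = P * y + √(2 * P * L) from rfl]
    nlinarith [mul_nonneg (mul_nonneg hP.le hy) (sqrt_nonneg (2 * P * L))]
  have hexponent : -2 * blockThreshold r y M T j ^ 2 / ⌊r ^ (j + 1)⌋₊ ≤
      -(2 / r * y ^ 2 * P) + -(2 * L) := by
    rw [neg_mul, neg_div, ← neg_add, neg_le_neg_iff, le_div_iff₀ hn]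
    calc (2 / r * y ^ 2 * P + 2 * L) * ⌊r ^ (j + 1)⌋₊
        ≤ (2 / r * y ^ 2 * P + 2 * L) * (r * P) := by gcongr
      _ = 2 * (P ^ 2 * y ^ 2) + r * (2 * P * L) := by field_simp
      _ ≤ 2 * (P ^ 2 * y ^ 2) + 2 * (2 * P * L) := by gcongr
      _ ≤ 2 * blockThreshold r y M T j ^ 2 := by linarith
  calc exp (-2 * blockThreshold r y M T j ^ 2 / ⌊r ^ (j + 1)⌋₊)
      ≤ exp (-(2 / r * y ^ 2 * P)) * exp (-(2 * L)) := by
        rw [← exp_add]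
        exact exp_le_exp.mpr hexponent
    _ ≤ exp (-(2 / r * y ^ 2 * P)) * ((T / (M * r ^ (j + 1))) ^ 2)⁻¹ := by
        gcongr
        exact exp_neg_two_mul_max_log_le (by positivity)
    _ = r ^ 2 * (M / T) ^ 2 * (P ^ 2 * exp (-(2 / r * y ^ 2 * P))) := by
        rw [show r ^ (j + 1) = r * P by rw [pow_succ, mul_comm]]
        field_simp

theorem moss_confidence_tail_general
    {Ω : Type*} [MeasurableSpace Ω] (μ : Measure Ω) [IsProbabilityMeasure μ]
    (X : ℕ → Ω → ℝ) (μ₀ : ℝ)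
    (hmeas : ∀ k, Measurable (X k))
    (hindep : iIndepFun X μ)
    (hbound : ∀ k ω, X k ω ∈ Set.Icc (0 : ℝ) 1)
    (hmean : ∀ k, ∫ ω, X k ω ∂μ = μ₀)
    (M T : ℝ) (hM : 0 < M) (hT : 0 < T)
    (m : ℕ) (hm : 1 ≤ m)
    (y : ℝ) (hy : 0 < y) :
    (μ {ω | y < μ₀ - (Finset.Icc 1 m).inf' (Finset.nonempty_Icc.mpr hm)
        (fun s => (∑ k ∈ Finset.range s, X k ω) / s +
          Real.sqrt ((2 / s) * max (Real.log (T / (M * s))) 0))}).toReal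
      ≤ (9 / y ^ 2 + 6 / y ^ 4) * (M ^ 2 / T ^ 2) := by
  set r : ℝ := 3 / 2
  set B : ℕ → Set Ω := fun j =>
    {ω | ∃ s ≤ ⌊r ^ (j + 1)⌋₊, blockThreshold r y M T j ≤ ∑ k ∈ range s, (μ₀ - X k ω)}
  calc μ.real _ ≤ μ.real (⋃ j ∈ range (2 * m), B j) := by
        refine measureReal_mono (fun ω hω => ?_) (measure_ne_top μ _)
        obtain ⟨j, hjm, hj⟩ := exists_block_of_lt_sub_inf' (r := r) hm hy.le hM hT (by norm_num) hω
        -- Bernoulli: `1 + j / 2 ≤ (3/2) ^ j ≤ m`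
        have hbern := one_add_mul_le_pow (by norm_num : (-2 : ℝ) ≤ 1 / 2) j
        norm_num at hbern
        exact Set.mem_biUnion (mem_range.mpr (by exact_mod_cast (by linarith : (j : ℝ) < 2 * m))) hj
    _ ≤ ∑ j ∈ range (2 * m), μ.real (B j) := measureReal_biUnion_finset_le _ _
    _ ≤ ∑ j ∈ range (2 * m),
          r ^ 2 * (M / T) ^ 2 * ((r ^ j) ^ 2 * exp (-(2 / r * y ^ 2 * r ^ j))) :=
        sum_le_sum fun j _ =>
          (measureReal_exists_sum_sub_ge_le hmeas hindep hbound hmean _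
            (add_nonneg (by positivity) (sqrt_nonneg _))).trans
            (exp_neg_two_mul_blockThreshold_sq_div_le (by norm_num) (by norm_num) hy.le hM hT j)
    _ ≤ r ^ 2 * (M / T) ^ 2 * (r ^ 2 / ((r - 1) * (2 / r * y ^ 2) ^ 2)) := by
        rw [← mul_sum]
        gcongr
        exact sum_sq_pow_mul_exp_neg_mul_pow_le (by positivity) (by norm_num) _
    _ = 729 / 128 / y ^ 4 * (M ^ 2 / T ^ 2) := by
        simp only [r]
        field_simp
        ring
    _ ≤ (9 / y ^ 2 + 6 / y ^ 4) * (M ^ 2 / T ^ 2) := by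
        gcongr
        have : 729 / 128 / y ^ 4 ≤ 6 / y ^ 4 := by gcongr; norm_num
        linarith [(by positivity : 0 ≤ 9 / y ^ 2)]

/-- **MOSS anytime confidence-bound tail.** Let `(X k)` be i.i.d. `[0,1]`-valued with mean `μ₀`,
`X̄ s` the empirical mean of the first `s` samples, `M, T > 0` reals, `m ≥ 1`, and
`ζ = μ₀ - min_{1 ≤ s ≤ m} (X̄ s + √((2/s)·max(log(T/(M·s)), 0)))`.
Then for every `y > 0`, `P(ζ > y) ≤ (9/y² + 6/y⁴)·M²/T²`. -/
theorem moss_confidence_tail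
    {Ω : Type*} [MeasurableSpace Ω] (μ : Measure Ω) [IsProbabilityMeasure μ]
    (X : ℕ → Ω → ℝ) (μ₀ : ℝ)
    (hmeas : ∀ k, Measurable (X k))
    (hindep : iIndepFun X μ)
    (hident : ∀ k l, IdentDistrib (X k) (X l) μ μ)
    (hbound : ∀ k ω, X k ω ∈ Set.Icc (0 : ℝ) 1)
    (hmean : ∀ k, ∫ ω, X k ω ∂μ = μ₀)
    (M T : ℝ) (hM : 0 < M) (hT : 0 < T)
    (m : ℕ) (hm : 1 ≤ m)
    (y : ℝ) (hy : 0 < y) :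
    (μ {ω | y < μ₀ - (Finset.Icc 1 m).inf' (Finset.nonempty_Icc.mpr hm)
        (fun s => (∑ k ∈ Finset.range s, X k ω) / s +
          Real.sqrt ((2 / s) * max (Real.log (T / (M * s))) 0))}).toReal
      ≤ (9 / y ^ 2 + 6 / y ^ 4) * (M ^ 2 / T ^ 2) :=
  moss_confidence_tail_general μ X μ₀ hmeas hindep hbound hmean M T hM hT m hm y hy
end

section
/- Expected MOSS underestimation bound: Let (X_k)_{k≥1} be i.i.d. random variables with X_k ∈ [0,1] and mean μ, and let X̄_s = (1/s)Σ_{k=1}^{s} X_k. Let M and T be reals with 0 < M ≤ T, m ≥ 1 an integer, and define ζ = μ − min_{1 ≤ s ≤ m} ( X̄_s + √( (2/s)·max( log(T/(M·s)), 0 ) ) ). Then E[max(ζ, 0)] ≤ 3√(M/T) + 6M/T. -/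
/-!
Write `N = T / M` and `S s = ∑_{k<s} (μ₀ - X k)`. By Hoeffding's lemma the increments of `S` are
`1/4`-sub-Gaussian, so `exp (l S s - s l² / 8)` is a supermartingale, and Ville's maximal inequality
bounds the probability that `S` ever crosses a line: `P(∃ s ≤ m, α + β s ≤ S s) ≤ exp (-8 α β)`.
The event `ζ > t` forces `S s ≥ s t + √(2 s log⁺ (N / s))` for some `s ≤ m`. Choosing
`N / 2 ≤ 2 ^ j₁ ≤ N` and splitting the times into the dyadic blocks `[2 ^ j, 2 ^ (j + 1))`,
`j < j₁`, and `[2 ^ j₁, m]`, each block lies in a single line-crossing event, whence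
`P(ζ > t) ≤ exp (-2 · 2 ^ j₁ t²) + ∑_{j < j₁} (2 ^ (j + 1) / N)² exp (-2 ^ j t²)`.
Integrating these Gaussian tails over `t > 0` gives `E[max(ζ, 0)] ≤ 3 √(M / T)`.
-/

open MeasureTheory ProbabilityTheory Real Finset
open scoped NNReal

namespace ProbabilityTheory

variable {Ω : Type*} {mΩ : MeasurableSpace Ω} {μ : Measure Ω} {Y : ℕ → Ω → ℝ}

abbrev pastSigma (Y : ℕ → Ω → ℝ) (n : ℕ) : MeasurableSpace Ω :=
  ⨆ k ∈ Set.Iio n, MeasurableSpace.comap (Y k) inferInstance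

lemma pastSigma_le (hmeas : ∀ k, Measurable (Y k)) (n : ℕ) : pastSigma Y n ≤ mΩ :=
  iSup₂_le fun k _ => (hmeas k).comap_le

lemma measurable_pastSigma_sum {s n : ℕ} (hsn : s ≤ n) :
    Measurable[pastSigma Y n] fun ω => ∑ k ∈ range s, Y k ω :=
  Finset.measurable_sum _ fun k hk => (comap_measurable (Y k)).mono
    (le_iSup₂ (f := fun k (_ : k ∈ Set.Iio n) => MeasurableSpace.comap (Y k) inferInstance) k
      (Set.mem_Iio.2 ((mem_range.1 hk).trans_le hsn))) le_rfl

lemma iIndepFun.indepFun_of_measurable_pastSigma (hindep : iIndepFun Y μ)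
    (hmeas : ∀ k, Measurable (Y k)) {n : ℕ} {F : Ω → ℝ} (hF : Measurable[pastSigma Y n] F) :
    IndepFun F (Y n) μ := by
  have h := indep_iSup_of_disjoint (fun k => (hmeas k).comap_le) hindep
    (S := Set.Iio n) (T := {n}) (by simp)
  rw [_root_.iSup_singleton] at h
  rw [IndepFun_iff_Indep]
  exact indep_of_indep_of_le_left h hF.comap_le

noncomputable def hoeffdingProcess (Y : ℕ → Ω → ℝ) (c : ℝ≥0) (l : ℝ) (s : ℕ) (ω : Ω) : ℝ :=
  exp (l * ∑ k ∈ range s, Y k ω - s * (c * l ^ 2 / 2))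

variable {c : ℝ≥0} {l : ℝ}

lemma hoeffdingProcess_zero (ω : Ω) : hoeffdingProcess Y c l 0 ω = 1 := by
  simp [hoeffdingProcess]

lemma hoeffdingProcess_succ (n : ℕ) (ω : Ω) :
    hoeffdingProcess Y c l (n + 1) ω =
      hoeffdingProcess Y c l n ω * exp (l * Y n ω - c * l ^ 2 / 2) := by
  simp only [hoeffdingProcess, sum_range_succ, ← exp_add]
  push_cast
  ring_nf

lemma measurable_hoeffdingProcess_of_le {s n : ℕ} (hsn : s ≤ n) :
    Measurable[pastSigma Y n] (hoeffdingProcess Y c l s) :=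
  (((measurable_pastSigma_sum hsn).const_mul l).sub_const _).exp

lemma integrable_hoeffdingProcess (hindep : iIndepFun Y μ)
    (hY : ∀ k, HasSubgaussianMGF (Y k) c μ) (s : ℕ) :
    Integrable (hoeffdingProcess Y c l s) μ := by
  have h := (HasSubgaussianMGF.sum_of_iIndepFun hindep fun k (_ : k ∈ range s) => hY k)
    |>.integrable_exp_mul l |>.mul_const (exp (-(s * (c * l ^ 2 / 2))))
  refine h.congr (ae_of_all _ fun ω => ?_)
  simp only [hoeffdingProcess, ← exp_add, sub_eq_add_neg]

/-- The supermartingale property of `hoeffdingProcess`, tested on events of the past. -/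
lemma setIntegral_hoeffdingProcess_succ_le [IsProbabilityMeasure μ] (hindep : iIndepFun Y μ)
    (hmeas : ∀ k, Measurable (Y k)) (hY : ∀ k, HasSubgaussianMGF (Y k) c μ) {n : ℕ}
    {A : Set Ω} (hA : MeasurableSet[pastSigma Y n] A) :
    ∫ ω in A, hoeffdingProcess Y c l (n + 1) ω ∂μ ≤ ∫ ω in A, hoeffdingProcess Y c l n ω ∂μ := by
  set F := A.indicator (hoeffdingProcess Y c l n)
  have hF : Measurable[pastSigma Y n] F :=
    (measurable_hoeffdingProcess_of_le le_rfl).indicator hA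
  have hindepF : IndepFun F (fun ω => exp (l * Y n ω - c * l ^ 2 / 2)) μ :=
    (hindep.indepFun_of_measurable_pastSigma hmeas hF).comp (φ := id)
      (ψ := fun y => exp (l * y - c * l ^ 2 / 2)) measurable_id (by fun_prop)
  have hstep : ∫ ω, exp (l * Y n ω - c * l ^ 2 / 2) ∂μ ≤ 1 := by
    have h := (hY n).mgf_le l
    simp only [mgf] at h
    simp only [sub_eq_add_neg, exp_add, integral_mul_const]
    rw [exp_neg, ← div_eq_mul_inv]
    exact div_le_one_of_le₀ h (exp_pos _).le
  have hFnn : 0 ≤ ∫ ω, F ω ∂μ :=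
    integral_nonneg (Set.indicator_nonneg fun ω _ => (exp_pos _).le)
  calc ∫ ω in A, hoeffdingProcess Y c l (n + 1) ω ∂μ
      = ∫ ω, F ω * exp (l * Y n ω - c * l ^ 2 / 2) ∂μ := by
        rw [← integral_indicator (pastSigma_le hmeas n _ hA)]
        congr with ω
        by_cases hω : ω ∈ A <;> simp [F, hω, hoeffdingProcess_succ]
    _ = (∫ ω, F ω ∂μ) * ∫ ω, exp (l * Y n ω - c * l ^ 2 / 2) ∂μ :=
        hindepF.integral_mul_eq_mul_integral
          (hF.mono (pastSigma_le hmeas n) le_rfl).aestronglyMeasurable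
          (by fun_prop)
    _ ≤ ∫ ω, F ω ∂μ := mul_le_of_le_one_right hFnn hstep
    _ = ∫ ω in A, hoeffdingProcess Y c l n ω ∂μ := integral_indicator (pastSigma_le hmeas n _ hA)

lemma measurableSet_pastSigma_forall_hoeffdingProcess_lt (n : ℕ) (ε : ℝ) :
    MeasurableSet[pastSigma Y n] {ω | ∀ s ∈ Icc 1 n, hoeffdingProcess Y c l s ω < ε} := by
  have h : {ω | ∀ s ∈ Icc 1 n, hoeffdingProcess Y c l s ω < ε} =
      ⋂ s ∈ Icc 1 n, {ω | hoeffdingProcess Y c l s ω < ε} := by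
    ext; simp
  rw [h]
  exact Finset.measurableSet_biInter _ fun s hs =>
    measurableSet_lt (measurable_hoeffdingProcess_of_le (mem_Icc.1 hs).2) measurable_const

/-- `hoeffdingProcess` stopped at its first passage above `ε` has expectation at most `1`. -/
lemma mul_measureReal_add_setIntegral_hoeffdingProcess_le_one [IsProbabilityMeasure μ]
    (hindep : iIndepFun Y μ) (hmeas : ∀ k, Measurable (Y k))
    (hY : ∀ k, HasSubgaussianMGF (Y k) c μ) (ε : ℝ) (n : ℕ) :
    ε * μ.real {ω | ∀ s ∈ Icc 1 n, hoeffdingProcess Y c l s ω < ε}ᶜ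
      + ∫ ω in {ω | ∀ s ∈ Icc 1 n, hoeffdingProcess Y c l s ω < ε},
          hoeffdingProcess Y c l n ω ∂μ ≤ 1 := by
  induction n with
  | zero => simp [hoeffdingProcess_zero]
  | succ n ih =>
    set C := {ω | ∀ s ∈ Icc 1 n, hoeffdingProcess Y c l s ω < ε}
    set H := {ω | ε ≤ hoeffdingProcess Y c l (n + 1) ω}
    have hCpast : MeasurableSet[pastSigma Y n] C :=
      measurableSet_pastSigma_forall_hoeffdingProcess_lt n ε
    have hC : MeasurableSet C := pastSigma_le hmeas n _ hCpast
    have hH : MeasurableSet H :=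
      measurableSet_le measurable_const
        ((measurable_hoeffdingProcess_of_le le_rfl).mono (pastSigma_le hmeas _) le_rfl)
    have hsucc : {ω | ∀ s ∈ Icc 1 (n + 1), hoeffdingProcess Y c l s ω < ε} = C \ H := by
      ext ω
      simp only [C, H, Set.mem_ofPred_eq, Set.mem_sdiff, mem_Icc, not_le]
      refine ⟨fun h => ⟨fun s hs => h s ⟨hs.1, hs.2.trans n.le_succ⟩, h _ ⟨n.succ_pos, le_rfl⟩⟩,
        fun h s hs => ?_⟩
      rcases hs.2.lt_or_eq with hlt | rfl
      exacts [h.1 s ⟨hs.1, Nat.lt_succ_iff.1 hlt⟩, h.2]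
    have hcompl : (C \ H)ᶜ = Cᶜ ∪ (C ∩ H) := by
      ext ω; by_cases ω ∈ C <;> by_cases ω ∈ H <;> simp_all
    have hint := (integrable_hoeffdingProcess (l := l) hindep hY (n + 1)).integrableOn (s := C)
    have hcross : ε * μ.real (C ∩ H) ≤ ∫ ω in C ∩ H, hoeffdingProcess Y c l (n + 1) ω ∂μ :=
      setIntegral_ge_of_const_le_real (hC.inter hH) (measure_ne_top _ _)
        (fun ω hω => hω.2) (hint.mono_set Set.inter_subset_left)
    rw [hsucc, hcompl,
      measureReal_union (disjoint_compl_left.mono_right Set.inter_subset_left) (hC.inter hH)]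
    calc _ = ε * μ.real Cᶜ + (ε * μ.real (C ∩ H)
          + ∫ ω in C \ H, hoeffdingProcess Y c l (n + 1) ω ∂μ) := by ring
      _ ≤ ε * μ.real Cᶜ + ∫ ω in C, hoeffdingProcess Y c l (n + 1) ω ∂μ := by
        rw [← integral_inter_add_sdiff hH hint]
        gcongr
      _ ≤ ε * μ.real Cᶜ + ∫ ω in C, hoeffdingProcess Y c l n ω ∂μ := by
        linarith [setIntegral_hoeffdingProcess_succ_le (l := l) hindep hmeas hY hCpast]
      _ ≤ 1 := ih

/-- Ville's maximal inequality for `hoeffdingProcess`. -/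
theorem measureReal_exists_le_hoeffdingProcess_le [IsProbabilityMeasure μ]
    (hindep : iIndepFun Y μ) (hmeas : ∀ k, Measurable (Y k))
    (hY : ∀ k, HasSubgaussianMGF (Y k) c μ) {ε : ℝ} (hε : 0 < ε) (n : ℕ) :
    μ.real {ω | ∃ s ∈ Icc 1 n, ε ≤ hoeffdingProcess Y c l s ω} ≤ ε⁻¹ := by
  have h := mul_measureReal_add_setIntegral_hoeffdingProcess_le_one (l := l) hindep hmeas hY ε n
  have hnn : 0 ≤ ∫ ω in {ω | ∀ s ∈ Icc 1 n, hoeffdingProcess Y c l s ω < ε},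
      hoeffdingProcess Y c l n ω ∂μ := integral_nonneg fun ω => (exp_pos _).le
  have hset : {ω | ∃ s ∈ Icc 1 n, ε ≤ hoeffdingProcess Y c l s ω} =
      {ω | ∀ s ∈ Icc 1 n, hoeffdingProcess Y c l s ω < ε}ᶜ := by
    ext; simp [and_assoc]
  rw [hset, ← one_div, le_div_iff₀ hε]
  linarith

theorem measureReal_exists_linear_le_sum_le [IsProbabilityMeasure μ]
    (hindep : iIndepFun Y μ) (hmeas : ∀ k, Measurable (Y k))
    (hY : ∀ k, HasSubgaussianMGF (Y k) c μ) (α : ℝ) {β : ℝ} (hβ : 0 ≤ β) (n : ℕ) :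
    μ.real {ω | ∃ s ∈ Icc 1 n, α + β * s ≤ ∑ k ∈ range s, Y k ω} ≤ exp (-(2 * α * β / c)) := by
  rcases eq_or_ne c 0 with rfl | hc
  · simp [measureReal_le_one]
  have hc' : (0 : ℝ) < c := by positivity
  -- the slope `l` makes the drift of `hoeffdingProcess` cancel the slope `β` of the line
  set l := 2 * β / c
  refine (measureReal_mono ?_).trans
    ((measureReal_exists_le_hoeffdingProcess_le (l := l) hindep hmeas hY (exp_pos _) n).trans
      (exp_neg _).ge)
  rintro ω ⟨s, hs, hcross⟩
  refine ⟨s, hs, ?_⟩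
  rw [hoeffdingProcess, exp_le_exp]
  have hl : 0 ≤ l := by positivity
  calc 2 * α * β / c = l * (α + β * s) - s * (c * l ^ 2 / 2) := by
        simp only [l]; field_simp; ring
    _ ≤ _ := by gcongr

theorem measureReal_exists_le_sum_of_le_le [IsProbabilityMeasure μ]
    (hindep : iIndepFun Y μ) (hmeas : ∀ k, Measurable (Y k))
    (hY : ∀ k, HasSubgaussianMGF (Y k) c μ) {a K : ℝ} (ha : 0 ≤ a) (hK : 0 < K) (n : ℕ) :
    μ.real {ω | ∃ s ∈ Icc 1 n, s ≤ K ∧ a ≤ ∑ k ∈ range s, Y k ω}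
      ≤ exp (-(a ^ 2 / (2 * c * K))) := by
  have h := measureReal_exists_linear_le_sum_le hindep hmeas hY (a / 2)
    (div_nonneg ha (mul_pos two_pos hK).le) n
  refine (measureReal_mono ?_).trans (h.trans_eq ?_)
  · rintro ω ⟨s, hs, hsK, hcross⟩
    refine ⟨s, hs, ?_⟩
    calc a / 2 + a / (2 * K) * s ≤ a / 2 + a / (2 * K) * K := by gcongr
      _ = a := by field_simp; ring
      _ ≤ _ := hcross
  · congr 2; field_simp

theorem measureReal_exists_mul_le_sum_of_le [IsProbabilityMeasure μ]
    (hindep : iIndepFun Y μ) (hmeas : ∀ k, Measurable (Y k))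
    (hY : ∀ k, HasSubgaussianMGF (Y k) c μ) {t : ℝ} (ht : 0 ≤ t) (K : ℝ) (n : ℕ) :
    μ.real {ω | ∃ s ∈ Icc 1 n, K ≤ s ∧ s * t ≤ ∑ k ∈ range s, Y k ω}
      ≤ exp (-(K * t ^ 2 / (2 * c))) := by
  have h := measureReal_exists_linear_le_sum_le hindep hmeas hY (K * t / 2)
    (div_nonneg ht two_pos.le) n
  refine (measureReal_mono ?_).trans (h.trans_eq ?_)
  · rintro ω ⟨s, hs, hKs, hcross⟩
    refine ⟨s, hs, ?_⟩
    calc K * t / 2 + t / 2 * s ≤ s * t / 2 + t / 2 * s := by gcongr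
      _ = s * t := by ring
      _ ≤ _ := hcross
  · congr 2; ring

lemma hasSubgaussianMGF_integral_sub_of_mem_Icc [IsProbabilityMeasure μ] {X : Ω → ℝ}
    (hX : Measurable X) (hb : ∀ ω, X ω ∈ Set.Icc 0 1) :
    HasSubgaussianMGF (fun ω => μ[X] - X ω) 4⁻¹ μ := by
  convert (hasSubgaussianMGF_of_mem_Icc (μ := μ) hX.aemeasurable (ae_of_all _ hb)).neg using 1
  · ext; simp
  · norm_num

end ProbabilityTheory

lemma exists_two_pow_le_le_two_mul {N : ℝ} (hN : 1 ≤ N) : ∃ j : ℕ, 2 ^ j ≤ N ∧ N ≤ 2 * 2 ^ j := by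
  have hfloor : ⌊N⌋₊ ≠ 0 := (Nat.floor_pos.2 hN).ne'
  refine ⟨Nat.log 2 ⌊N⌋₊, ?_, ?_⟩
  · calc (2 : ℝ) ^ Nat.log 2 ⌊N⌋₊ ≤ ⌊N⌋₊ := by exact_mod_cast Nat.pow_log_le_self 2 hfloor
      _ ≤ N := Nat.floor_le (by linarith)
  · have h := Nat.lt_pow_succ_log_self one_lt_two ⌊N⌋₊
    calc N ≤ ⌊N⌋₊ + 1 := (Nat.lt_floor_add_one N).le
      _ ≤ 2 ^ (Nat.log 2 ⌊N⌋₊ + 1) := by exact_mod_cast h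
      _ = 2 * 2 ^ Nat.log 2 ⌊N⌋₊ := pow_succ' _ _

lemma dyadic_peeling {N t x : ℝ} (hN : 0 ≤ N) (ht : 0 ≤ t) {s : ℕ} (hs : 1 ≤ s) (j₁ : ℕ)
    (hx : s * t + √(2 * s * log⁺ (N / s)) ≤ x) :
    ((2 : ℝ) ^ j₁ ≤ s ∧ s * t ≤ x) ∨
      ∃ j < j₁, (s : ℝ) ≤ 2 ^ (j + 1) ∧
        2 ^ j * t + √(2 ^ (j + 1) * log⁺ (N / 2 ^ (j + 1))) ≤ x := by
  by_cases hbig : 2 ^ j₁ ≤ s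
  · exact .inl ⟨by exact_mod_cast hbig, le_of_add_le_of_nonneg_left hx (sqrt_nonneg _)⟩
  right
  set j := Nat.log 2 s
  have hjs : 2 ^ j ≤ s := Nat.pow_log_le_self 2 (by omega)
  have hsj : s < 2 ^ (j + 1) := Nat.lt_pow_succ_log_self one_lt_two s
  have hjs' : (2 : ℝ) ^ j ≤ s := by exact_mod_cast hjs
  have hsj' : (s : ℝ) ≤ 2 ^ (j + 1) := by exact_mod_cast hsj.le
  refine ⟨j, (Nat.pow_lt_pow_iff_right one_lt_two).1 (hjs.trans_lt (not_le.1 hbig)),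
    hsj', le_trans (add_le_add (by gcongr) (sqrt_le_sqrt ?_)) hx⟩
  have hs0 : (0 : ℝ) < s := by exact_mod_cast hs
  gcongr
  · exact posLog_nonneg
  · rw [pow_succ]; linarith

lemma exp_neg_sq_div_two_pow_le {N t : ℝ} (hN : 0 < N) (ht : 0 ≤ t) (j : ℕ) :
    exp (-(2 * (2 ^ j * t + √(2 ^ (j + 1) * log⁺ (N / 2 ^ (j + 1)))) ^ 2 / 2 ^ (j + 1)))
      ≤ (2 ^ (j + 1) / N) ^ 2 * exp (-2 ^ j * t ^ 2) := by
  set K : ℝ := 2 ^ (j + 1)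
  set L := log⁺ (N / K)
  have hK : K = 2 * 2 ^ j := pow_succ' 2 j
  have hL : 0 ≤ L := posLog_nonneg
  have hsq : √(K * L) ^ 2 = K * L := sq_sqrt (by positivity)
  have hlog : exp (-(2 * L)) ≤ (K / N) ^ 2 := by
    calc exp (-(2 * L)) ≤ exp (-(2 * log (N / K))) := by
          gcongr; exact le_max_right _ _
      _ = (K / N) ^ 2 := by
          rw [← Nat.cast_ofNat, ← log_pow, exp_neg, exp_log (by positivity), ← inv_pow, inv_div]
  calc exp (-(2 * (2 ^ j * t + √(K * L)) ^ 2 / K))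
      ≤ exp (-(2 * L)) * exp (-2 ^ j * t ^ 2) := by
        rw [← exp_add, exp_le_exp, neg_le, neg_add, neg_neg, neg_mul, neg_neg,
          le_div_iff₀ (by positivity), add_sq, mul_add, mul_add, hsq]
        have hcross : 0 ≤ 2 * (2 * (2 ^ j * t) * √(K * L)) := by positivity
        have hrhs : (2 * L + 2 ^ j * t ^ 2) * K = 2 * (2 ^ j * t) ^ 2 + 2 * (K * L) := by
          rw [hK]; ring
        linarith
    _ ≤ (K / N) ^ 2 * exp (-2 ^ j * t ^ 2) := by gcongr

noncomputable def peelingTail (N : ℝ) (j₁ : ℕ) (t : ℝ) : ℝ :=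
  exp (-(2 * 2 ^ j₁) * t ^ 2) + ∑ j ∈ range j₁, (2 ^ (j + 1) / N) ^ 2 * exp (-2 ^ j * t ^ 2)

lemma integrableOn_peelingTail (N : ℝ) (j₁ : ℕ) : IntegrableOn (peelingTail N j₁) (Set.Ioi 0) :=
  ((integrable_exp_neg_mul_sq (by positivity)).add
    (integrable_finsetSum _ fun j _ =>
      (integrable_exp_neg_mul_sq (by positivity)).const_mul _)).integrableOn

lemma integral_peelingTail (N : ℝ) (j₁ : ℕ) :
    ∫ t in Set.Ioi 0, peelingTail N j₁ t
      = √(π / (2 * 2 ^ j₁)) / 2 + ∑ j ∈ range j₁, (2 ^ (j + 1) / N) ^ 2 * (√(π / 2 ^ j) / 2) := by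
  have hint : ∀ b : ℝ, 0 < b → IntegrableOn (fun t : ℝ => exp (-b * t ^ 2)) (Set.Ioi 0) :=
    fun b hb => (integrable_exp_neg_mul_sq hb).integrableOn
  simp only [peelingTail]
  rw [integral_add (hint _ (by positivity))
      (integrable_finsetSum _ fun j _ => (hint _ (by positivity)).const_mul _),
    integral_finsetSum _ fun j _ => (hint _ (by positivity)).const_mul _,
    integral_gaussian_Ioi]
  simp only [integral_const_mul, integral_gaussian_Ioi]

lemma sum_range_sq_mul_sqrt_pi_div_le {N : ℝ} {j₁ : ℕ} (hN : 2 ^ j₁ ≤ N) :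
    ∑ j ∈ range j₁, (2 ^ (j + 1) / N) ^ 2 * (√(π / 2 ^ j) / 2)
      ≤ 2 * √π / ((2 * √2 - 1) * √N) := by
  set q := √2
  have hq : q ^ 2 = 2 := sq_sqrt two_pos.le
  have hq3 : q ^ 3 = 2 * q := by rw [pow_succ, hq]
  have hr : 1 < q ^ 3 := by rw [hq3]; linarith [one_lt_sqrt_two]
  have hpow : ∀ j : ℕ, (2 : ℝ) ^ j = (q ^ j) ^ 2 := fun j => by
    rw [← pow_mul, mul_comm, pow_mul, hq]
  have hN0 : 0 < N := lt_of_lt_of_le (by positivity) hN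
  have hterm : ∀ j : ℕ, (2 ^ (j + 1) / N) ^ 2 * (√(π / 2 ^ j) / 2)
      = 2 * √π / N ^ 2 * (q ^ 3) ^ j := fun j => by
    rw [sqrt_div pi_nonneg, hpow j, sqrt_sq (by positivity), pow_succ 2 j, hpow j]
    field_simp
    ring
  have hgeom : ∑ j ∈ range j₁, (q ^ 3) ^ j ≤ (q ^ 3) ^ j₁ / (q ^ 3 - 1) := by
    rw [geom_sum_eq hr.ne']
    gcongr
    linarith
  have htop : (q ^ 3) ^ j₁ ≤ N * √N := by
    rw [← pow_mul, show 3 * j₁ = 2 * j₁ + j₁ by ring, pow_add, pow_mul, hq,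
      ← sqrt_sq (by positivity : 0 ≤ q ^ j₁), ← hpow]
    gcongr
  calc _ = 2 * √π / N ^ 2 * ∑ j ∈ range j₁, (q ^ 3) ^ j := by
        rw [mul_sum]; exact sum_congr rfl fun j _ => hterm j
    _ ≤ 2 * √π / N ^ 2 * ((N * √N) / (q ^ 3 - 1)) :=
        mul_le_mul_of_nonneg_left (hgeom.trans (by gcongr)) (by positivity)
    _ = 2 * √π / ((2 * q - 1) * √N) := by
        obtain ⟨u, hu, rfl⟩ : ∃ u, 0 < u ∧ N = u ^ 2 :=
          ⟨√N, sqrt_pos.2 hN0, (sq_sqrt hN0.le).symm⟩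
        rw [hq3, sqrt_sq hu.le]
        field_simp

lemma integral_peelingTail_le {N : ℝ} {j₁ : ℕ} (h₁ : 2 ^ j₁ ≤ N) (h₂ : N ≤ 2 * 2 ^ j₁) :
    ∫ t in Set.Ioi 0, peelingTail N j₁ t ≤ 3 / √N := by
  have hN : 0 < N := lt_of_lt_of_le (by positivity) h₁
  have hu : 0 < √N := sqrt_pos.2 hN
  have hp : √π < 71 / 40 := by nlinarith [sq_sqrt pi_nonneg, sqrt_nonneg π, pi_lt_d2]
  have hq : 7 / 5 ≤ √2 := by nlinarith [sq_sqrt (zero_le_two (α := ℝ)), sqrt_nonneg 2]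
  have hfirst : √(π / (2 * 2 ^ j₁)) / 2 ≤ √π / 2 / √N := by
    rw [div_right_comm, ← sqrt_div' _ hN.le]
    gcongr
  have hconst : √π / 2 + 2 * √π / (2 * √2 - 1) ≤ 3 := by
    have : 2 * √π / (2 * √2 - 1) ≤ 2 * √π / (9 / 5) := by gcongr; linarith
    linarith
  rw [integral_peelingTail]
  calc _ ≤ √π / 2 / √N + 2 * √π / ((2 * √2 - 1) * √N) :=
        add_le_add hfirst (sum_range_sq_mul_sqrt_pi_div_le h₁)
    _ = (√π / 2 + 2 * √π / (2 * √2 - 1)) / √N := by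
        rw [add_div, div_div, div_div]
    _ ≤ 3 / √N := by gcongr

namespace MeasureTheory

variable {Ω : Type*} {mΩ : MeasurableSpace Ω} {μ : Measure Ω}

lemma integral_le_setIntegral_of_measureReal_lt_le [IsFiniteMeasure μ] {f : Ω → ℝ}
    (hf : 0 ≤ f) (hfi : Integrable f μ) {g : ℝ → ℝ} (hg : IntegrableOn g (Set.Ioi 0))
    (hfg : ∀ t > 0, μ.real {ω | t < f ω} ≤ g t) :
    ∫ ω, f ω ∂μ ≤ ∫ t in Set.Ioi 0, g t := by
  rw [hfi.integral_eq_integral_meas_lt (ae_of_all _ hf)]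
  exact integral_mono_of_nonneg (ae_of_all _ fun _ => measureReal_nonneg) hg
    ((ae_restrict_iff' measurableSet_Ioi).2 (ae_of_all _ hfg))

lemma integrable_max_sub_inf' [IsFiniteMeasure μ] {ι : Type*} {s : Finset ι} (hs : s.Nonempty)
    {f : ι → Ω → ℝ} (hf : ∀ i, Measurable (f i)) (hf0 : ∀ i ω, 0 ≤ f i ω) (a : ℝ) :
    Integrable (fun ω => max (a - s.inf' hs (fun i => f i ω)) 0) μ := by
  have hinf : Measurable fun ω => s.inf' hs (fun i => f i ω) := by
    simp_rw [← Finset.inf'_apply]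
    exact Finset.inf'_induction hs f (p := Measurable) (fun _ hg _ hh => hg.inf hh) fun i _ => hf i
  refine Integrable.of_bound
    ((measurable_const.sub hinf).max measurable_const).aestronglyMeasurable |a|
    (ae_of_all _ fun ω => ?_)
  have : 0 ≤ s.inf' hs (fun i => f i ω) := (Finset.le_inf'_iff hs _).2 fun i _ => hf0 i ω
  rw [norm_of_nonneg (le_max_right _ _)]
  exact max_le (by linarith [le_abs_self a]) (abs_nonneg a)

end MeasureTheory

namespace ProbabilityTheory

variable {Ω : Type*} {mΩ : MeasurableSpace Ω} {μ : Measure Ω} {Y : ℕ → Ω → ℝ}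

theorem measureReal_exists_le_sum_le_peelingTail [IsProbabilityMeasure μ]
    (hindep : iIndepFun Y μ) (hmeas : ∀ k, Measurable (Y k))
    (hY : ∀ k, HasSubgaussianMGF (Y k) 4⁻¹ μ) {N t : ℝ} (hN : 0 < N) (ht : 0 ≤ t) (n j₁ : ℕ) :
    μ.real {ω | ∃ s ∈ Icc 1 n, s * t + √(2 * s * log⁺ (N / s)) ≤ ∑ k ∈ range s, Y k ω}
      ≤ peelingTail N j₁ t := by
  set a : ℕ → ℝ := fun j => 2 ^ j * t + √(2 ^ (j + 1) * log⁺ (N / 2 ^ (j + 1)))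
  set V := {ω | ∃ s ∈ Icc 1 n, (2 : ℝ) ^ j₁ ≤ s ∧ s * t ≤ ∑ k ∈ range s, Y k ω}
  set B := fun j => {ω | ∃ s ∈ Icc 1 n, (s : ℝ) ≤ 2 ^ (j + 1) ∧ a j ≤ ∑ k ∈ range s, Y k ω}
  have hV : μ.real V ≤ exp (-(2 * 2 ^ j₁) * t ^ 2) :=
    (measureReal_exists_mul_le_sum_of_le hindep hmeas hY ht _ n).trans_eq
      (by congr 1; push_cast; ring)
  have hB : ∀ j, μ.real (B j) ≤ (2 ^ (j + 1) / N) ^ 2 * exp (-2 ^ j * t ^ 2) := fun j =>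
    (measureReal_exists_le_sum_of_le_le hindep hmeas hY (by positivity) (by positivity) n).trans
      (le_of_eq_of_le (by congr 2; push_cast; ring) (exp_neg_sq_div_two_pow_le hN ht j))
  calc _ ≤ μ.real (V ∪ ⋃ j ∈ range j₁, B j) := by
        refine measureReal_mono ?_
        rintro ω ⟨s, hs, hx⟩
        rcases dyadic_peeling hN.le ht (mem_Icc.1 hs).1 j₁ hx with h | ⟨j, hj, h⟩
        · exact .inl ⟨s, hs, h⟩
        · exact .inr (Set.mem_biUnion (mem_range.2 hj) ⟨s, hs, h⟩)
    _ ≤ μ.real V + ∑ j ∈ range j₁, μ.real (B j) :=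
        (measureReal_union_le _ _).trans (by gcongr; exact measureReal_biUnion_finset_le _ _)
    _ ≤ peelingTail N j₁ t := add_le_add hV (sum_le_sum fun j _ => hB j)

end ProbabilityTheory

lemma setOf_lt_max_sub_inf'_subset {Ω : Type*} {X : ℕ → Ω → ℝ} {μ₀ M T t : ℝ} (ht : 0 < t) {m : ℕ}
    (hm : (Icc 1 m).Nonempty) :
    {ω | t < max (μ₀ - (Icc 1 m).inf' hm (fun s => (∑ k ∈ range s, X k ω) / s +
        √((2 / s) * max (log (T / (M * s))) 0))) 0}
      ⊆ {ω | ∃ s ∈ Icc 1 m, s * t + √(2 * s * log⁺ (T / M / s)) ≤ ∑ k ∈ range s, (μ₀ - X k ω)} := by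
  intro ω (hω : t < max _ 0)
  have hinf : (Icc 1 m).inf' hm (fun s => (∑ k ∈ range s, X k ω) / s +
      √((2 / s) * max (log (T / (M * s))) 0)) < μ₀ - t := by
    rcases lt_max_iff.1 hω with h | h <;> linarith
  obtain ⟨s, hs, hlt⟩ := (Finset.inf'_lt_iff hm).1 hinf
  refine ⟨s, hs, ?_⟩
  have hs0 : (0 : ℝ) < s := Nat.cast_pos.2 (mem_Icc.1 hs).1
  have hL : max (log (T / (M * s))) 0 = log⁺ (T / M / s) := by rw [posLog, max_comm, div_div]
  have hsqrt : √(2 * s * log⁺ (T / M / s)) = s * √((2 / s) * log⁺ (T / M / s)) := by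
    rw [show 2 * s * log⁺ (T / M / s) = s ^ 2 * ((2 / s) * log⁺ (T / M / s)) by field_simp,
      sqrt_mul (sq_nonneg _), sqrt_sq hs0.le]
  rw [hL] at hlt
  have hmul := mul_lt_mul_of_pos_right hlt hs0
  rw [add_mul, div_mul_cancel₀ _ hs0.ne'] at hmul
  rw [sum_sub_distrib, sum_const, card_range, nsmul_eq_mul, hsqrt]
  linarith

theorem moss_expected_underestimation_general
    {Ω : Type*} [MeasurableSpace Ω] (μ : Measure Ω) [IsProbabilityMeasure μ]
    (X : ℕ → Ω → ℝ) (μ₀ : ℝ)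
    (hmeas : ∀ k, Measurable (X k))
    (hindep : iIndepFun X μ)
    (hbound : ∀ k ω, X k ω ∈ Set.Icc (0 : ℝ) 1)
    (hmean : ∀ k, ∫ ω, X k ω ∂μ = μ₀)
    (M T : ℝ) (hM : 0 < M) (hMT : M ≤ T)
    (m : ℕ) (hm : 1 ≤ m) :
    ∫ ω, max (μ₀ - (Finset.Icc 1 m).inf' (Finset.nonempty_Icc.mpr hm)
        (fun s => (∑ k ∈ Finset.range s, X k ω) / s +
          Real.sqrt ((2 / s) * max (Real.log (T / (M * s))) 0))) 0 ∂μ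
      ≤ 3 * Real.sqrt (M / T) + 6 * M / T := by
  have hN : 1 ≤ T / M := (one_le_div hM).2 hMT
  obtain ⟨j₁, hj₁N, hNj₁⟩ := exists_two_pow_le_le_two_mul hN
  have hY : ∀ k, HasSubgaussianMGF (fun ω => μ₀ - X k ω) 4⁻¹ μ := fun k =>
    hmean k ▸ hasSubgaussianMGF_integral_sub_of_mem_Icc (hmeas k) (hbound k)
  have hindepY : iIndepFun (fun k ω => μ₀ - X k ω) μ :=
    hindep.comp (fun _ x => μ₀ - x) fun _ => measurable_const.sub measurable_id
  have hmeasY : ∀ k, Measurable fun ω => μ₀ - X k ω := fun k => (hmeas k).const_sub μ₀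
  calc _ ≤ ∫ t in Set.Ioi 0, peelingTail (T / M) j₁ t := by
        refine integral_le_setIntegral_of_measureReal_lt_le (fun ω => le_max_right _ _)
          (integrable_max_sub_inf' _ (fun s => by fun_prop) (fun s ω => ?_) μ₀)
          (integrableOn_peelingTail _ j₁) fun t ht => ?_
        · have := sum_nonneg fun k (_ : k ∈ range s) => (hbound k ω).1
          positivity
        · exact (measureReal_mono (setOf_lt_max_sub_inf'_subset ht _)).trans
            (measureReal_exists_le_sum_le_peelingTail hindepY hmeasY hY (by positivity) ht.le m j₁)
    _ ≤ 3 / √(T / M) := integral_peelingTail_le hj₁N hNj₁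
    _ = 3 * √(M / T) := by rw [div_eq_mul_inv, ← sqrt_inv, inv_div]
    _ ≤ 3 * √(M / T) + 6 * M / T :=
        le_add_of_nonneg_right (div_nonneg (by positivity) (hM.le.trans hMT))

/-- **Expected MOSS underestimation bound.** Let `(X k)` be i.i.d. `[0,1]`-valued with mean `μ₀`,
`X̄ s` the empirical mean of the first `s` samples, `0 < M ≤ T` reals, `m ≥ 1`, and
`ζ = μ₀ - min_{1 ≤ s ≤ m} (X̄ s + √((2/s)·max(log(T/(M·s)), 0)))`.
Then `E[max(ζ, 0)] ≤ 3√(M/T) + 6M/T`. -/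
theorem moss_expected_underestimation
    {Ω : Type*} [MeasurableSpace Ω] (μ : Measure Ω) [IsProbabilityMeasure μ]
    (X : ℕ → Ω → ℝ) (μ₀ : ℝ)
    (hmeas : ∀ k, Measurable (X k))
    (hindep : iIndepFun X μ)
    (hident : ∀ k l, IdentDistrib (X k) (X l) μ μ)
    (hbound : ∀ k ω, X k ω ∈ Set.Icc (0 : ℝ) 1)
    (hmean : ∀ k, ∫ ω, X k ω ∂μ = μ₀)
    (M T : ℝ) (hM : 0 < M) (hMT : M ≤ T)
    (m : ℕ) (hm : 1 ≤ m) :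
    ∫ ω, max (μ₀ - (Finset.Icc 1 m).inf' (Finset.nonempty_Icc.mpr hm)
        (fun s => (∑ k ∈ Finset.range s, X k ω) / s +
          Real.sqrt ((2 / s) * max (Real.log (T / (M * s))) 0))) 0 ∂μ
      ≤ 3 * Real.sqrt (M / T) + 6 * M / T :=
  moss_expected_underestimation_general μ X μ₀ hmeas hindep hbound hmean M T hM hMT m hm
end

section
/- Dyadic exponential series bound: For every real y > 0, the series Σ_{j=0}^{∞} 4^{j+1}·e^{−2^{j}·y²} converges and satisfies Σ_{j=0}^{∞} 4^{j+1}·e^{−2^{j}·y²} ≤ 9/y² + 6/y⁴. -/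
/-!
Put `x = y²`, `f u = u² e⁻ᵘ` (`sqMulExpNeg`) and `S x = ∑ⱼ f (2ʲ x)` (`dyadicSum`). The `j`-th
term is `(4 / x²) f (2ʲ x)`, so it suffices to show `S x ≤ 3/2`. From `S x = f x + S (2x)` and
`0 ≤ f u ≤ u²`, doubling `x` does not increase `S x` and does not decrease `S x + x²/3`, which
reduces the claim to `S x + x²/3 ≤ 3/2` for `x ∈ (1/8, 1/4]`. Since `f` increases on `[0, 2]` and
decreases on `[2, ∞)`, there `f (2ʲ x)` is increasing in `x` for `j ≤ 3` and decreasing for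
`j ≥ 4`; on each of eleven subintervals this bounds `S x + x²/3` by finitely many values of `exp`,
certified by Taylor polynomials. Some numerical check is unavoidable: as `x → 0`, `S x`
oscillates around `1 / log 2 ≈ 1.4427`, within 4% of `3/2`.
-/

open Real Finset
open scoped Nat

noncomputable def sqMulExpNeg (u : ℝ) : ℝ := u ^ 2 * exp (-u)

noncomputable def dyadicSum (x : ℝ) : ℝ := ∑' j : ℕ, sqMulExpNeg (2 ^ j * x)

lemma sqMulExpNeg_nonneg (u : ℝ) : 0 ≤ sqMulExpNeg u := by
  unfold sqMulExpNeg; positivity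

lemma sqMulExpNeg_le_sq {u : ℝ} (hu : 0 ≤ u) : sqMulExpNeg u ≤ u ^ 2 :=
  mul_le_of_le_one_right (sq_nonneg u) (exp_le_one_iff.2 (neg_nonpos.2 hu))

lemma sqMulExpNeg_le_six_div {u : ℝ} (hu : 0 < u) : sqMulExpNeg u ≤ 6 / u := by
  have h := pow_div_factorial_le_exp u hu.le 3
  rw [sqMulExpNeg, exp_neg, ← div_eq_mul_inv, div_le_div_iff₀ (exp_pos u) hu]
  norm_num [Nat.factorial] at h
  linarith

lemma sqMulExpNeg_two_mul_le_half {u : ℝ} (hu : 7 ≤ u) :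
    sqMulExpNeg (2 * u) ≤ sqMulExpNeg u / 2 := by
  have h8 : 8 ≤ exp u := by linarith [add_one_le_exp u]
  have hdouble : sqMulExpNeg (2 * u) = 4 * sqMulExpNeg u / exp u := by
    rw [sqMulExpNeg, sqMulExpNeg, show -(2 * u) = -u - u by ring, exp_sub]
    ring
  rw [hdouble, div_le_iff₀ (by positivity)]
  nlinarith [sqMulExpNeg_nonneg u]

lemma hasDerivAt_sqMulExpNeg (u : ℝ) :
    HasDerivAt sqMulExpNeg (u * (2 - u) * exp (-u)) u := by
  have h := (hasDerivAt_pow 2 u).fun_mul (hasDerivAt_neg u).exp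
  exact h.congr_deriv (by norm_num; ring)

lemma differentiable_sqMulExpNeg : Differentiable ℝ sqMulExpNeg :=
  fun u => (hasDerivAt_sqMulExpNeg u).differentiableAt

lemma monotoneOn_sqMulExpNeg : MonotoneOn sqMulExpNeg (Set.Icc 0 2) := by
  refine monotoneOn_of_deriv_nonneg (convex_Icc 0 2)
    differentiable_sqMulExpNeg.continuous.continuousOn
    differentiable_sqMulExpNeg.differentiableOn fun u hu => ?_
  rw [interior_Icc] at hu
  rw [(hasDerivAt_sqMulExpNeg u).deriv]
  exact mul_nonneg (mul_nonneg hu.1.le (by linarith [hu.2])) (exp_pos _).le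

lemma antitoneOn_sqMulExpNeg : AntitoneOn sqMulExpNeg (Set.Ici 2) := by
  refine antitoneOn_of_deriv_nonpos (convex_Ici 2)
    differentiable_sqMulExpNeg.continuous.continuousOn
    differentiable_sqMulExpNeg.differentiableOn fun u hu => ?_
  rw [interior_Ici] at hu
  rw [(hasDerivAt_sqMulExpNeg u).deriv]
  exact mul_nonpos_of_nonpos_of_nonneg
    (mul_nonpos_of_nonneg_of_nonpos (by linarith [hu.out]) (by linarith [hu.out])) (exp_pos _).le

lemma summable_sqMulExpNeg_two_pow_mul {x : ℝ} (hx : 0 < x) :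
    Summable fun j : ℕ => sqMulExpNeg (2 ^ j * x) := by
  refine .of_nonneg_of_le (fun j => sqMulExpNeg_nonneg _) (fun j => ?_)
    (summable_geometric_two.mul_left (6 / x))
  calc sqMulExpNeg (2 ^ j * x) ≤ 6 / (2 ^ j * x) := sqMulExpNeg_le_six_div (by positivity)
    _ = 6 / x * (1 / 2) ^ j := by rw [div_pow, one_pow]; field_simp

lemma dyadicSum_eq_add {x : ℝ} (hx : 0 < x) :
    dyadicSum x = sqMulExpNeg x + dyadicSum (2 * x) := by
  rw [dyadicSum, (summable_sqMulExpNeg_two_pow_mul hx).tsum_eq_zero_add, dyadicSum]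
  simp only [pow_zero, one_mul, pow_succ, mul_assoc]

lemma dyadicSum_two_mul_le {x : ℝ} (hx : 0 < x) : dyadicSum (2 * x) ≤ dyadicSum x := by
  rw [dyadicSum_eq_add hx]
  linarith [sqMulExpNeg_nonneg x]

lemma dyadicSum_add_sq_le_two_mul {x : ℝ} (hx : 0 < x) :
    dyadicSum x + x ^ 2 / 3 ≤ dyadicSum (2 * x) + (2 * x) ^ 2 / 3 := by
  rw [dyadicSum_eq_add hx]
  linarith [sqMulExpNeg_le_sq hx.le]

lemma dyadicSum_two_pow_mul_le {x : ℝ} (hx : 0 < x) (n : ℕ) :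
    dyadicSum (2 ^ n * x) ≤ dyadicSum x := by
  have : Antitone fun n : ℕ => dyadicSum (2 ^ n * x) := antitone_nat_of_succ_le fun n => by
    have := dyadicSum_two_mul_le (x := 2 ^ n * x) (by positivity)
    rwa [← mul_assoc, ← pow_succ'] at this
  simpa using this (Nat.zero_le n)

lemma dyadicSum_add_sq_le_two_pow_mul {x : ℝ} (hx : 0 < x) (n : ℕ) :
    dyadicSum x + x ^ 2 / 3 ≤ dyadicSum (2 ^ n * x) + (2 ^ n * x) ^ 2 / 3 := by
  have : Monotone fun n : ℕ => dyadicSum (2 ^ n * x) + (2 ^ n * x) ^ 2 / 3 :=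
    monotone_nat_of_le_succ fun n => by
      have := dyadicSum_add_sq_le_two_mul (x := 2 ^ n * x) (by positivity)
      rwa [← mul_assoc, ← pow_succ'] at this
  simpa using this (Nat.zero_le n)

lemma dyadicSum_le_two_mul_sqMulExpNeg {v : ℝ} (hv : 7 ≤ v) :
    dyadicSum v ≤ 2 * sqMulExpNeg v := by
  have hterm (j : ℕ) : sqMulExpNeg (2 ^ j * v) ≤ sqMulExpNeg v * (1 / 2) ^ j := by
    induction j with
    | zero => simp
    | succ j ih =>
      have h7 : 7 ≤ 2 ^ j * v :=
        hv.trans (le_mul_of_one_le_left (by linarith) (one_le_pow₀ one_le_two))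
      calc sqMulExpNeg (2 ^ (j + 1) * v) = sqMulExpNeg (2 * (2 ^ j * v)) := by
            rw [pow_succ', mul_assoc]
        _ ≤ sqMulExpNeg (2 ^ j * v) / 2 := sqMulExpNeg_two_mul_le_half h7
        _ ≤ sqMulExpNeg v * (1 / 2) ^ j / 2 := by gcongr
        _ = sqMulExpNeg v * (1 / 2) ^ (j + 1) := by ring
  calc dyadicSum v ≤ ∑' j : ℕ, sqMulExpNeg v * (1 / 2) ^ j :=
        (summable_sqMulExpNeg_two_pow_mul (by linarith)).tsum_le_tsum hterm
          (summable_geometric_two.mul_left _)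
    _ = 2 * sqMulExpNeg v := by rw [tsum_mul_left, tsum_geometric_two, mul_comm]

lemma exp_neg_le_of_one_le_mul_sum {b U : ℝ} (hb : 0 ≤ b) (n : ℕ)
    (h : 1 ≤ U * ∑ k ∈ range n, b ^ k / k !) : exp (-b) ≤ U := by
  have hsum := sum_le_exp_of_nonneg hb n
  have hsum0 : 0 ≤ ∑ k ∈ range n, b ^ k / k ! := sum_nonneg fun _ _ => by positivity
  have hU : 0 ≤ U := by nlinarith
  rw [exp_neg, inv_le_iff_one_le_mul₀ (exp_pos b), mul_comm]
  nlinarith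

lemma sqMulExpNeg_two_pow_mul_le {b U : ℝ} (hU : exp (-b) ≤ U) (j : ℕ) :
    sqMulExpNeg (2 ^ j * b) ≤ (2 ^ j * b) ^ 2 * U ^ 2 ^ j := by
  rw [sqMulExpNeg]
  gcongr
  calc exp (-(2 ^ j * b)) = exp (-b) ^ 2 ^ j := by
        rw [← exp_nat_mul]; push_cast; ring_nf
    _ ≤ U ^ 2 ^ j := by gcongr

noncomputable def windowBound (a Ua b Ub : ℝ) : ℝ :=
  b ^ 2 / 3 + ∑ j ∈ range 4, (2 ^ j * b) ^ 2 * Ub ^ 2 ^ j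
    + ∑ j ∈ range 3, (2 ^ (4 + j) * a) ^ 2 * Ua ^ 2 ^ (4 + j) + 2 * ((2 ^ 7 * a) ^ 2 * Ua ^ 2 ^ 7)

lemma dyadicSum_add_sq_le_windowBound {a Ua b Ub x : ℝ} (ha : 1 / 8 ≤ a) (hb : b ≤ 1 / 4)
    (hUa : exp (-a) ≤ Ua) (hUb : exp (-b) ≤ Ub) (hx : x ∈ Set.Icc a b) :
    dyadicSum x + x ^ 2 / 3 ≤ windowBound a Ua b Ub := by
  obtain ⟨hax, hxb⟩ := hx
  have hx0 : 0 < x := by linarith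
  have hsplit : dyadicSum x = ∑ j ∈ range (4 + 3), sqMulExpNeg (2 ^ j * x)
      + ∑' j : ℕ, sqMulExpNeg (2 ^ j * (2 ^ 7 * x)) := by
    rw [dyadicSum, ← (summable_sqMulExpNeg_two_pow_mul hx0).sum_add_tsum_nat_add 7]
    simp only [pow_add, mul_assoc]
  have hinc : ∀ j ∈ range 4, sqMulExpNeg (2 ^ j * x) ≤ (2 ^ j * b) ^ 2 * Ub ^ 2 ^ j := by
    intro j hj
    have h8 : (2 : ℝ) ^ j ≤ 2 ^ 3 :=
      pow_le_pow_right₀ one_le_two (Nat.le_of_lt_succ (mem_range.1 hj))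
    have hxb' : 2 ^ j * x ≤ 2 ^ j * b := by gcongr
    have hb2 : 2 ^ j * b ≤ 2 := by
      calc 2 ^ j * b ≤ 2 ^ 3 * (1 / 4) := by gcongr; linarith
        _ = 2 := by norm_num
    have hx0' : 0 ≤ 2 ^ j * x := by positivity
    exact (monotoneOn_sqMulExpNeg ⟨hx0', hxb'.trans hb2⟩ ⟨hx0'.trans hxb', hb2⟩ hxb').trans
      (sqMulExpNeg_two_pow_mul_le hUb j)
  have hdec : ∀ j ∈ range 3,
      sqMulExpNeg (2 ^ (4 + j) * x) ≤ (2 ^ (4 + j) * a) ^ 2 * Ua ^ 2 ^ (4 + j) := by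
    intro j _
    have hax' : 2 ^ (4 + j) * a ≤ 2 ^ (4 + j) * x := by gcongr
    have ha2 : 2 ≤ 2 ^ (4 + j) * a := by
      calc (2 : ℝ) = 2 ^ 4 * (1 / 8) := by norm_num
        _ ≤ 2 ^ (4 + j) * a := by gcongr <;> norm_num
    exact (antitoneOn_sqMulExpNeg (Set.mem_Ici.2 ha2) (Set.mem_Ici.2 (ha2.trans hax')) hax').trans
      (sqMulExpNeg_two_pow_mul_le hUa _)
  have htail :
      ∑' j : ℕ, sqMulExpNeg (2 ^ j * (2 ^ 7 * x)) ≤ 2 * ((2 ^ 7 * a) ^ 2 * Ua ^ 2 ^ 7) :=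
    calc _ ≤ 2 * sqMulExpNeg (2 ^ 7 * x) := dyadicSum_le_two_mul_sqMulExpNeg (by linarith)
      _ ≤ 2 * sqMulExpNeg (2 ^ 7 * a) := by
        gcongr 2 * ?_
        exact antitoneOn_sqMulExpNeg (Set.mem_Ici.2 (by linarith)) (Set.mem_Ici.2 (by linarith))
          (by gcongr)
      _ ≤ _ := by gcongr; exact sqMulExpNeg_two_pow_mul_le hUa 7
  have hsq : x ^ 2 / 3 ≤ b ^ 2 / 3 := by gcongr
  rw [hsplit, sum_range_add, windowBound]
  calc _ ≤ _ :=
        add_le_add (add_le_add (add_le_add (sum_le_sum hinc) (sum_le_sum hdec)) htail) hsq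
    _ = _ := by ring

def WindowCertificate : ℝ → ℝ → List (ℝ × ℝ) → Prop
  | a, _, [] => 1 / 4 ≤ a
  | a, Ua, (b, Ub) :: l => a ≤ b ∧ b ≤ 1 / 4 ∧ 1 ≤ Ub * ∑ k ∈ range 7, b ^ k / k ! ∧
      windowBound a Ua b Ub ≤ 3 / 2 ∧ WindowCertificate b Ub l

lemma WindowCertificate.dyadicSum_add_sq_le {a Ua : ℝ} {l : List (ℝ × ℝ)}
    (hl : WindowCertificate a Ua l) (ha : 1 / 8 ≤ a) (hUa : exp (-a) ≤ Ua) {x : ℝ}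
    (hx : x ∈ Set.Ioc a (1 / 4)) : dyadicSum x + x ^ 2 / 3 ≤ 3 / 2 := by
  induction l generalizing a Ua with
  | nil => exact absurd (hx.1.trans_le hx.2) (not_lt.2 hl)
  | cons w l ih =>
    obtain ⟨b, Ub⟩ := w
    obtain ⟨hab, hb, hcert, hbound, hl⟩ := hl
    have hUb : exp (-b) ≤ Ub := exp_neg_le_of_one_le_mul_sum (by linarith) 7 hcert
    rcases le_or_gt x b with hxb | hbx
    · exact (dyadicSum_add_sq_le_windowBound ha hb hUa hUb ⟨hx.1.le, hxb⟩).trans hbound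
    · exact ih hl (ha.trans hab) hUb ⟨hbx, hx.2⟩

lemma dyadicSum_add_sq_le_of_mem_Ioc {x : ℝ} (hx : x ∈ Set.Ioc (1 / 8) (1 / 4)) :
    dyadicSum x + x ^ 2 / 3 ≤ 3 / 2 := by
  have hcert : WindowCertificate (1 / 8) 0.8825
      [(0.135, 0.87372), (0.145, 0.86503), (0.155, 0.85642), (0.165, 0.8479), (0.175, 0.83946),
        (0.185, 0.83111), (0.195, 0.82284), (0.205, 0.81465), (0.22, 0.80252), (0.235, 0.79058),
        (0.25, 0.77881)] := by
    norm_num [WindowCertificate, windowBound, sum_range_succ, Nat.factorial]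
  refine hcert.dyadicSum_add_sq_le le_rfl ?_ hx
  exact exp_neg_le_of_one_le_mul_sum (by norm_num) 7 (by norm_num [sum_range_succ, Nat.factorial])

lemma dyadicSum_le {x : ℝ} (hx : 0 < x) : dyadicSum x ≤ 3 / 2 := by
  obtain ⟨n, hn1, hn2⟩ := exists_mem_Ioc_zpow (by positivity : (0 : ℝ) < 8 * x) one_lt_two
  have h2n : (0 : ℝ) < 2 ^ n := by positivity
  rw [zpow_add_one₀ two_ne_zero] at hn2
  have hwindow := dyadicSum_add_sq_le_of_mem_Ioc (x := x / 2 ^ n)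
    ⟨by rw [lt_div_iff₀ h2n]; linarith, by rw [div_le_iff₀ h2n]; linarith⟩
  obtain ⟨m, rfl | rfl⟩ := Int.eq_nat_or_neg n
  · have hx' : x = 2 ^ m * (x / 2 ^ (m : ℤ)) := by rw [zpow_natCast]; field_simp
    have hmono := dyadicSum_two_pow_mul_le (x := x / 2 ^ (m : ℤ)) (by positivity) m
    rw [← hx'] at hmono
    linarith [sq_nonneg (x / 2 ^ (m : ℤ))]
  · have hx' : x / 2 ^ (-(m : ℤ)) = 2 ^ m * x := by rw [zpow_neg, zpow_natCast]; field_simp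
    rw [hx'] at hwindow
    linarith [dyadicSum_add_sq_le_two_pow_mul hx m, sq_nonneg x]

/-- **Dyadic exponential series bound.** For every real `y > 0`, the series
`∑_{j=0}^∞ 4^{j+1} · e^{-2^j y²}` converges and is at most `9/y² + 6/y⁴`. -/
theorem dyadic_exp_series_bound (y : ℝ) (hy : 0 < y) :
    Summable (fun j : ℕ => (4 : ℝ) ^ (j + 1) * Real.exp (-(2 : ℝ) ^ j * y ^ 2)) ∧
      ∑' j : ℕ, (4 : ℝ) ^ (j + 1) * Real.exp (-(2 : ℝ) ^ j * y ^ 2)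
        ≤ 9 / y ^ 2 + 6 / y ^ 4 := by
  have hx : 0 < y ^ 2 := by positivity
  have hterm : (fun j : ℕ => (4 : ℝ) ^ (j + 1) * exp (-(2 : ℝ) ^ j * y ^ 2))
      = fun j => 4 / (y ^ 2) ^ 2 * sqMulExpNeg (2 ^ j * y ^ 2) := by
    ext j
    have h4 : (4 : ℝ) ^ (j + 1) = 4 * ((2 : ℝ) ^ j) ^ 2 := by
      rw [← pow_mul, mul_comm j, pow_mul, pow_succ]; norm_num; ring
    rw [sqMulExpNeg, h4, neg_mul]
    field_simp
  rw [hterm, tsum_mul_left]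
  refine ⟨(summable_sqMulExpNeg_two_pow_mul hx).mul_left _, ?_⟩
  calc 4 / (y ^ 2) ^ 2 * dyadicSum (y ^ 2) ≤ 4 / (y ^ 2) ^ 2 * (3 / 2) := by
        gcongr; exact dyadicSum_le hx
    _ ≤ 9 / y ^ 2 + 6 / y ^ 4 := by
        have : 4 / (y ^ 2) ^ 2 * (3 / 2) = 6 / y ^ 4 := by ring
        have : 0 ≤ 9 / y ^ 2 := by positivity
        linarith
end

section
/- Truncated tail integral bound: For every real a with 0 < a ≤ 1, ∫_0^∞ min( 1, (9/y² + 6/y⁴)·a² ) dy ≤ 3√a + 6a. -/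
/-!
Split `(0, ∞)` at `c = 2√a`. On `(0, c]` the integrand is at most `1`, contributing `c`; beyond `c`
drop the truncation and integrate the two powers exactly, which gives
`9a²/c + 2a²/c³ = (9/2) a √a + √a / 4`, and `a √a ≤ a` for `a ≤ 1`.
-/

open MeasureTheory Set

lemma rpow_neg_natCast_eq_inv_pow {y : ℝ} (hy : 0 ≤ y) (n : ℕ) : y ^ (-(n : ℝ)) = (y ^ n)⁻¹ := by
  rw [Real.rpow_neg hy, Real.rpow_natCast]

lemma integrableOn_Ioi_inv_pow {n : ℕ} (hn : 2 ≤ n) {c : ℝ} (hc : 0 < c) :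
    IntegrableOn (fun y : ℝ ↦ (y ^ n)⁻¹) (Ioi c) :=
  (integrableOn_Ioi_rpow_of_lt (by norm_cast; omega : -(n : ℝ) < -1) hc).congr_fun
    (fun y hy ↦ rpow_neg_natCast_eq_inv_pow (hc.trans hy).le n) measurableSet_Ioi

lemma integral_Ioi_inv_pow {n : ℕ} (hn : 2 ≤ n) {c : ℝ} (hc : 0 < c) :
    ∫ y in Ioi c, (y ^ n)⁻¹ = ((n - 1) * c ^ (n - 1))⁻¹ := by
  rw [← setIntegral_congr_fun measurableSet_Ioi
      (fun y hy ↦ rpow_neg_natCast_eq_inv_pow (hc.trans hy).le n),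
    integral_Ioi_rpow_of_lt (by norm_cast; omega : -(n : ℝ) < -1) hc]
  obtain ⟨m, rfl⟩ : ∃ m, n = m + 1 := ⟨n - 1, by omega⟩
  rw [show -((m + 1 : ℕ) : ℝ) + 1 = -(m : ℝ) by push_cast; ring, rpow_neg_natCast_eq_inv_pow hc.le]
  simp only [Nat.cast_add, Nat.cast_one, add_sub_cancel_right, Nat.add_sub_cancel]
  rw [neg_div, div_neg, neg_neg, div_eq_mul_inv, mul_inv, mul_comm]

lemma setIntegral_Ioi_min_one_le {f : ℝ → ℝ} {c : ℝ} (hc : 0 ≤ c) (hf : Measurable f)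
    (hf_nonneg : ∀ y, 0 ≤ f y) (hf_int : IntegrableOn f (Ioi c)) :
    ∫ y in Ioi 0, min 1 (f y) ≤ c + ∫ y in Ioi c, f y := by
  have hmin_meas : AEStronglyMeasurable (fun y ↦ min 1 (f y)) :=
    (measurable_const.min hf).aestronglyMeasurable
  have hnorm : ∀ y, ‖min 1 (f y)‖ = min 1 (f y) := fun y ↦
    Real.norm_of_nonneg (le_min zero_le_one (hf_nonneg y))
  have hint_near : IntegrableOn (fun y ↦ min 1 (f y)) (Ioc 0 c) :=
    Measure.integrableOn_of_bounded (measure_Ioc_lt_top (μ := volume)).ne hmin_meas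
      (Filter.Eventually.of_forall fun y ↦ (hnorm y).trans_le (min_le_left _ _))
  have hint_far : IntegrableOn (fun y ↦ min 1 (f y)) (Ioi c) :=
    hf_int.mono' hmin_meas.restrict
      (Filter.Eventually.of_forall fun y ↦ (hnorm y).trans_le (min_le_right _ _))
  have hnear : ∫ y in Ioc 0 c, min 1 (f y) ≤ c := by
    have hbound : ‖∫ y in Ioc 0 c, min 1 (f y)‖ ≤ 1 * volume.real (Ioc 0 c) :=
      norm_setIntegral_le_of_norm_le_const measure_Ioc_lt_top
        fun y _ ↦ (hnorm y).trans_le (min_le_left 1 (f y))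
    rw [Real.volume_real_Ioc, sub_zero, max_eq_left hc, one_mul] at hbound
    exact (Real.le_norm_self _).trans hbound
  have hfar : ∫ y in Ioi c, min 1 (f y) ≤ ∫ y in Ioi c, f y :=
    setIntegral_mono_on hint_far hf_int measurableSet_Ioi fun y _ ↦ min_le_right _ _
  rw [← Ioc_union_Ioi_eq_Ioi hc,
    setIntegral_union (Ioc_disjoint_Ioi le_rfl) measurableSet_Ioi hint_near hint_far]
  exact add_le_add hnear hfar

/-- **Truncated tail integral bound.** For every real `0 < a ≤ 1`,
`∫_0^∞ min(1, (9/y² + 6/y⁴)·a²) dy ≤ 3√a + 6a`. -/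
theorem truncated_tail_integral_bound (a : ℝ) (ha0 : 0 < a) (ha1 : a ≤ 1) :
    ∫ y in Set.Ioi (0 : ℝ), min 1 ((9 / y ^ 2 + 6 / y ^ 4) * a ^ 2)
      ≤ 3 * Real.sqrt a + 6 * a := by
  set s := √a
  have hs0 : 0 < s := Real.sqrt_pos.2 ha0
  have hs1 : s ≤ 1 := Real.sqrt_le_one.mpr ha1
  have ha : a = s ^ 2 := (Real.sq_sqrt ha0.le).symm
  have hc : 0 < 2 * s := by positivity
  have hf_eq : (fun y : ℝ ↦ (9 / y ^ 2 + 6 / y ^ 4) * a ^ 2)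
      = fun y ↦ 9 * a ^ 2 * (y ^ 2)⁻¹ + 6 * a ^ 2 * (y ^ 4)⁻¹ := by
    funext y; ring
  have hint2 := (integrableOn_Ioi_inv_pow le_rfl hc).const_mul (9 * a ^ 2)
  have hint4 := (integrableOn_Ioi_inv_pow (n := 4) (by norm_num) hc).const_mul (6 * a ^ 2)
  calc ∫ y in Ioi 0, min 1 ((9 / y ^ 2 + 6 / y ^ 4) * a ^ 2)
      ≤ 2 * s + ∫ y in Ioi (2 * s), (9 / y ^ 2 + 6 / y ^ 4) * a ^ 2 := by
        refine setIntegral_Ioi_min_one_le hc.le (by fun_prop) (fun y ↦ by positivity) ?_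
        rw [hf_eq]
        exact hint2.add hint4
    _ = 2 * s + (9 / 2 * s ^ 3 + s / 4) := by
        rw [hf_eq, integral_add hint2 hint4, integral_const_mul, integral_const_mul,
          integral_Ioi_inv_pow le_rfl hc, integral_Ioi_inv_pow (by norm_num) hc, ha]
        field_simp
        norm_num
        ring
    _ ≤ 3 * s + 6 * a := by
        rw [ha]
        nlinarith [mul_le_mul_of_nonneg_left hs1 (sq_nonneg s)]
end

section
/- MOSS integral estimate: For every real ζ with 0 < ζ ≤ 2, ∫_ζ^4 1/(1 − e^{−y²/8}) dy ≤ 32/(3ζ). -/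
/-! Since `e^x - 1 ≥ x`, we have `1 / (1 - e^{-x}) = 1 + 1 / (e^x - 1) ≤ 1 + 1 / x`, so the
integrand is at most `1 + 8 / y²`. Integrating gives `8 / ζ + 2 - ζ`, and
`32 / (3ζ) - (8 / ζ + 2 - ζ) = (3 (ζ - 1)² + 5) / (3ζ) > 0`. -/

open Real Set intervalIntegral MeasureTheory

lemma one_div_one_sub_exp_neg_le {x : ℝ} (hx : 0 < x) :
    1 / (1 - exp (-x)) ≤ 1 / x + 1 := by
  have hx_le : x ≤ exp x - 1 := by linarith [add_one_le_exp x]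
  calc 1 / (1 - exp (-x)) = 1 / (exp x - 1) + 1 := by
        have : exp x - 1 ≠ 0 := by linarith
        rw [exp_neg]
        field_simp
        ring
    _ ≤ 1 / x + 1 := by gcongr

section DivSqAddOne

variable {a b : ℝ} (c : ℝ)

lemma ne_zero_of_mem_uIcc_of_pos (ha : 0 < a) (hb : 0 < b) {y : ℝ} (hy : y ∈ uIcc a b) :
    y ≠ 0 :=
  (lt_min ha hb |>.trans_le hy.1).ne'

lemma intervalIntegrable_div_sq_add_one (ha : 0 < a) (hb : 0 < b) :
    IntervalIntegrable (fun y => c / y ^ 2 + 1) volume a b :=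
  ContinuousOn.intervalIntegrable <| by
    fun_prop (disch := exact fun y hy => pow_ne_zero 2 (ne_zero_of_mem_uIcc_of_pos ha hb hy))

lemma integral_div_sq_add_one (ha : 0 < a) (hb : 0 < b) :
    ∫ y in a..b, c / y ^ 2 + 1 = c / a - c / b + (b - a) := by
  have hderiv : ∀ y ∈ uIcc a b, HasDerivAt (fun y => -c * y⁻¹ + y) (c / y ^ 2 + 1) y :=
    fun y hy => (((hasDerivAt_inv (ne_zero_of_mem_uIcc_of_pos ha hb hy)).const_mul (-c)).add
      (hasDerivAt_id y)).congr_deriv (by field_simp)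
  rw [integral_eq_sub_of_hasDerivAt hderiv (intervalIntegrable_div_sq_add_one c ha hb)]
  ring

end DivSqAddOne

/-- **MOSS integral estimate.** For every real `0 < ζ ≤ 2`,
`∫_ζ^4 1/(1 - e^{-y²/8}) dy ≤ 32/(3ζ)`. -/
theorem moss_integral_estimate (ζ : ℝ) (hζ0 : 0 < ζ) (hζ2 : ζ ≤ 2) :
    ∫ y in ζ..4, 1 / (1 - Real.exp (-y ^ 2 / 8)) ≤ 32 / (3 * ζ) := by
  have hζ4 : ζ ≤ 4 := by linarith
  have hpos : ∀ y ∈ uIcc ζ 4, 0 < y := fun y hy => hζ0.trans_le (uIcc_of_le hζ4 ▸ hy).1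
  have hden : ∀ y ∈ uIcc ζ 4, 1 - exp (-y ^ 2 / 8) ≠ 0 := fun y hy => by
    have : exp (-y ^ 2 / 8) < 1 := exp_lt_one_iff.mpr (by nlinarith [hpos y hy])
    linarith
  calc ∫ y in ζ..4, 1 / (1 - exp (-y ^ 2 / 8))
      ≤ ∫ y in ζ..4, 8 / y ^ 2 + 1 := by
        refine integral_mono_on hζ4 ?_ (intervalIntegrable_div_sq_add_one 8 hζ0 four_pos)
          fun y hy => ?_
        · exact ContinuousOn.intervalIntegrable (by fun_prop (disch := exact hden))
        · have hy0 : 0 < y := hpos y (Icc_subset_uIcc hy)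
          have := one_div_one_sub_exp_neg_le (by positivity : 0 < y ^ 2 / 8)
          rwa [one_div_div, ← neg_div] at this
    _ = 8 / ζ - 8 / 4 + (4 - ζ) := integral_div_sq_add_one 8 hζ0 four_pos
    _ ≤ 32 / (3 * ζ) := by
        have : 32 / (3 * ζ) - (8 / ζ - 8 / 4 + (4 - ζ)) = (3 * (ζ - 1) ^ 2 + 5) / (3 * ζ) := by
          field_simp
          ring
        linarith [show 0 ≤ (3 * (ζ - 1) ^ 2 + 5) / (3 * ζ) by positivity]
end

section
/- Integrated MOSS deviation bound: Let (X_k)_{k≥1} be i.i.d. random variables with X_k ∈ [0,1] and mean μ, and let X̄_s = (1/s)Σ_{k=1}^{s} X_k. Let M and T be reals with 0 < 2M ≤ T, let m ≥ 1 be an integer, and set ζ = √(2M/T). Then ∫_ζ^∞ Σ_{s=1}^{m} P( X̄_s + √( (2/s)·max( log(T/(M·s)), 0 ) ) − μ > y ) dy ≤ 19·√(T/M). -/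
/-!
Write `n = T / M`, so that `ζ = √(2 / n)` and the bonus of the `s`-th mean is
`E s = √((2 / s) log⁺ (n / s))`. Hoeffding's inequality bounds the `s`-th integrand by
`exp (-2 s (y - E s)²)` once `y ≥ E s`.

For `s ≤ n`, bounding the integrand by `1` up to `E s + 1 / √(2 s)` and by `1 / (2 s (y - E s)²)`
beyond gives `E s + √(2 / s)`. As `log x ≤ 2 √x`, `E s ≤ 2 n^(1/4) s^(-3/4)`, and the sums of
`s^(-3/4)` and `s^(-1/2)` up to `n` contribute at most `11 √n`.

For `s > n` the bonus vanishes, and `exp (-2 s y²) ≤ 1 / (2 s² y⁴)` integrates over `(ζ, ∞)` to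
`1 / (6 s² ζ³)`; the lower limit `ζ` is what makes the sum of these over `s > n` at most `√n`.
-/

open MeasureTheory ProbabilityTheory Real Set Finset

theorem integrableOn_Ioi_sub_rpow_of_lt {a E b : ℝ} (ha : a < -1) (hb : E < b) :
    IntegrableOn (fun y => (y - E) ^ a) (Ioi b) := by
  simpa [sub_eq_add_neg] using integrableOn_add_rpow_Ioi_of_lt (m := -E) ha (by linarith)

theorem integral_Ioi_sub_rpow_of_lt {a E b : ℝ} (ha : a < -1) (hb : E < b) :
    ∫ y in Ioi b, (y - E) ^ a = -(b - E) ^ (a + 1) / (a + 1) := by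
  have hpre : (fun y => y - E) ⁻¹' Ioi (b - E) = Ioi b := by
    ext y; simp
  rw [← hpre, (measurePreserving_sub_right volume E).setIntegral_preimage_emb
    (measurableEmbedding_subRight E) (fun t => t ^ a), integral_Ioi_rpow_of_lt ha (by linarith)]

theorem inv_sub_sq_eq_rpow {E y : ℝ} (hy : E < y) : ((y - E) ^ 2)⁻¹ = (y - E) ^ (-2 : ℝ) := by
  rw [rpow_neg (by linarith), rpow_two]

section
variable {f : ℝ → ℝ} {E K : ℝ}

theorem integrableOn_Ioi_of_le_one_of_le_div_sq (hf : Measurable f) (hf0 : 0 ≤ f) (hf1 : f ≤ 1)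
    (hfK : ∀ y, E < y → f y ≤ K / (y - E) ^ 2) (ζ : ℝ) : IntegrableOn f (Ioi ζ) := by
  have hnear : IntegrableOn f (Ioc (min ζ (E + 1)) (E + 1)) :=
    Measure.integrableOn_of_bounded (M := 1) measure_Ioc_lt_top.ne hf.aestronglyMeasurable
      (ae_of_all _ fun y => by simpa [abs_of_nonneg (hf0 y)] using hf1 y)
  have hfar : IntegrableOn f (Ioi (E + 1)) := by
    refine ((integrableOn_Ioi_sub_rpow_of_lt (a := -2) (by norm_num)
      (by linarith : E < E + 1)).const_mul K).mono' hf.aestronglyMeasurable ?_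
    filter_upwards [ae_restrict_mem measurableSet_Ioi] with y hy
    have hEy : E < y := by linarith [mem_Ioi.1 hy]
    rw [Real.norm_of_nonneg (hf0 y), ← inv_sub_sq_eq_rpow hEy, ← div_eq_mul_inv]
    exact hfK y hEy
  refine (hnear.union hfar).mono_set fun y hy => ?_
  rcases le_or_gt y (E + 1) with h | h
  · exact Or.inl ⟨min_lt_of_left_lt hy, h⟩
  · exact Or.inr h

theorem setIntegral_Ioi_le_of_le_one_of_le_div_sq (hf : Measurable f) (hf0 : 0 ≤ f) (hf1 : f ≤ 1)
    (hE : 0 ≤ E) (hK : 0 < K) (hfK : ∀ y, E < y → f y ≤ K / (y - E) ^ 2) {ζ : ℝ} (hζ : 0 ≤ ζ) :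
    ∫ y in Ioi ζ, f y ≤ E + 2 * √K := by
  have hint := integrableOn_Ioi_of_le_one_of_le_div_sq hf hf0 hf1 hfK
  set b := E + √K
  have hEb : E < b := by simp [b, hK]
  have hnear : ∫ y in Ioc 0 b, f y ≤ b := by
    calc ∫ y in Ioc 0 b, f y ≤ ∫ _ in Ioc 0 b, (1 : ℝ) :=
          setIntegral_mono_on ((hint 0).mono_set Ioc_subset_Ioi_self) (integrableOn_const
            measure_Ioc_lt_top.ne) measurableSet_Ioc fun y _ => hf1 y
      _ = b := by simp [b, add_nonneg hE (sqrt_nonneg K)]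
  have hfar : ∫ y in Ioi b, f y ≤ √K := by
    calc ∫ y in Ioi b, f y ≤ ∫ y in Ioi b, K * (y - E) ^ (-2 : ℝ) := by
          refine setIntegral_mono_on (hint b)
            ((integrableOn_Ioi_sub_rpow_of_lt (by norm_num) hEb).const_mul K) measurableSet_Ioi
            fun y hy => ?_
          have hEy : E < y := hEb.trans hy
          rw [← inv_sub_sq_eq_rpow hEy, ← div_eq_mul_inv]
          exact hfK y hEy
      _ = √K := by
          rw [integral_const_mul, integral_Ioi_sub_rpow_of_lt (by norm_num) hEb]
          have hsK : 0 < √K := sqrt_pos.2 hK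
          norm_num [b, rpow_neg_one]
          field_simp
          rw [sq_sqrt hK.le]
  calc ∫ y in Ioi ζ, f y ≤ ∫ y in Ioi 0, f y :=
        setIntegral_mono_set (hint 0) (ae_of_all _ hf0) (Ioi_subset_Ioi hζ).eventuallyLE
    _ = (∫ y in Ioc 0 b, f y) + ∫ y in Ioi b, f y := by
        rw [← Ioc_union_Ioi_eq_Ioi (by positivity : (0:ℝ) ≤ b),
          setIntegral_union Ioc_disjoint_Ioi_same measurableSet_Ioi
            ((hint 0).mono_set Ioc_subset_Ioi_self) (hint b)]
    _ ≤ E + 2 * √K := by linarith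
end

theorem setIntegral_Ioi_le_of_le_mul_rpow {f : ℝ → ℝ} {C a ζ : ℝ} (ha : a < -1) (hζ : 0 < ζ)
    (hf0 : 0 ≤ f) (hfC : ∀ y, ζ < y → f y ≤ C * y ^ a) :
    ∫ y in Ioi ζ, f y ≤ C * (-ζ ^ (a + 1) / (a + 1)) := by
  rw [← integral_Ioi_rpow_of_lt ha hζ, ← integral_const_mul]
  refine integral_mono_of_nonneg (ae_of_all _ fun y => hf0 y)
    ((integrableOn_Ioi_rpow_of_lt ha hζ).const_mul C) ?_
  filter_upwards [ae_restrict_mem measurableSet_Ioi] with y hy using hfC y hy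

theorem exp_neg_le_factorial_div_pow {x : ℝ} (hx : 0 < x) (k : ℕ) :
    exp (-x) ≤ k.factorial / x ^ k := by
  rw [exp_neg, inv_le_comm₀ (exp_pos x) (by positivity), inv_div]
  exact pow_div_factorial_le_exp x hx.le k

theorem rpow_sub_one_le_rpow_sub_mul {a q : ℝ} (ha : 1 ≤ a) (hq0 : 0 ≤ q) (hq1 : q ≤ 1) :
    (a - 1) ^ q ≤ a ^ q - q * a ^ (q - 1) := by
  have ha0 : 0 < a := by linarith
  have hinv : a⁻¹ ≤ 1 := inv_le_one_of_one_le₀ ha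
  calc (a - 1) ^ q = a ^ q * (1 + -a⁻¹) ^ q := by
        rw [← mul_rpow ha0.le (by linarith), mul_add, mul_neg, mul_inv_cancel₀ ha0.ne', mul_one,
          ← sub_eq_add_neg]
    _ ≤ a ^ q * (1 + q * -a⁻¹) := by
        gcongr
        exact rpow_one_add_le_one_add_mul_self (by linarith) hq0 hq1
    _ = a ^ q - q * a ^ (q - 1) := by rw [rpow_sub_one ha0.ne']; ring

theorem sum_Icc_rpow_sub_one_le {q : ℝ} (hq0 : 0 < q) (hq1 : q ≤ 1) (N : ℕ) :
    ∑ s ∈ Icc 1 N, (s : ℝ) ^ (q - 1) ≤ (N : ℝ) ^ q / q := by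
  induction N with
  | zero => simp [zero_rpow hq0.ne']
  | succ N ih =>
    rw [sum_Icc_succ_top (by omega), le_div_iff₀ hq0]
    have hstep := rpow_sub_one_le_rpow_sub_mul (a := (N + 1 : ℕ)) (by simp) hq0.le hq1
    rw [Nat.cast_add_one, add_sub_cancel_right] at hstep
    have := (le_div_iff₀ hq0).1 ih
    push_cast
    linarith

theorem sqrt_two_div_mul_max_log_le {n : ℝ} (hn : 0 ≤ n) {s : ℝ} (hs : 0 < s) :
    √((2 / s) * max (log (n / s)) 0) ≤ 2 * n ^ (1 / 4 : ℝ) * s ^ (1 / 4 - 1 : ℝ) := by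
  refine sqrt_le_iff.2 ⟨by positivity, ?_⟩
  have hlog : max (log (n / s)) 0 ≤ (n / s) ^ (1 / 2 : ℝ) / (1 / 2) :=
    max_le (log_le_rpow_div (by positivity) (by norm_num)) (by positivity)
  calc 2 / s * max (log (n / s)) 0 ≤ 2 / s * ((n / s) ^ (1 / 2 : ℝ) / (1 / 2)) := by gcongr
    _ = (2 * n ^ (1 / 4 : ℝ) * s ^ (1 / 4 - 1 : ℝ)) ^ 2 := by
      rw [mul_pow, mul_pow, ← rpow_natCast (n ^ _), ← rpow_mul hn, ← rpow_natCast (s ^ _),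
        ← rpow_mul hs.le, div_rpow hn hs.le]
      norm_num
      rw [rpow_neg hs.le, show (3 / 2 : ℝ) = 1 + 1 / 2 by norm_num, rpow_add hs, rpow_one]
      field_simp
      ring

theorem sum_Icc_sqrt_two_div_mul_max_log_le {n : ℝ} (hn : 0 ≤ n) {N : ℕ} (hN : (N : ℝ) ≤ n) :
    ∑ s ∈ Icc 1 N, √((2 / s) * max (log (n / s)) 0) ≤ 8 * √n := by
  calc ∑ s ∈ Icc 1 N, √((2 / s) * max (log (n / s)) 0)
      ≤ ∑ s ∈ Icc 1 N, 2 * n ^ (1 / 4 : ℝ) * (s : ℝ) ^ (1 / 4 - 1 : ℝ) :=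
        sum_le_sum fun s hs => sqrt_two_div_mul_max_log_le hn (by
          have := (mem_Icc.1 hs).1; positivity)
    _ ≤ 2 * n ^ (1 / 4 : ℝ) * (n ^ (1 / 4 : ℝ) / (1 / 4)) := by
        rw [← mul_sum]
        gcongr
        exact (sum_Icc_rpow_sub_one_le (by norm_num) (by norm_num) N).trans (by gcongr)
    _ = 8 * √n := by
        rw [sqrt_eq_rpow, show (1 / 2 : ℝ) = 1 / 4 + 1 / 4 by norm_num, rpow_add' hn (by norm_num)]
        ring

theorem sum_Icc_sqrt_two_div_le {n : ℝ} {N : ℕ} (hN : (N : ℝ) ≤ n) :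
    ∑ s ∈ Icc 1 N, √(2 / s) ≤ 3 * √n := by
  have hsqrt2 : √2 ≤ 3 / 2 := by rw [sqrt_le_left (by norm_num)]; norm_num
  calc ∑ s ∈ Icc 1 N, √(2 / s) = √2 * ∑ s ∈ Icc 1 N, (s : ℝ) ^ (1 / 2 - 1 : ℝ) := by
        rw [mul_sum]
        refine sum_congr rfl fun s _ => ?_
        rw [sqrt_div zero_le_two, show (1 / 2 - 1 : ℝ) = -(1 / 2) by norm_num,
          rpow_neg s.cast_nonneg, ← sqrt_eq_rpow, div_eq_mul_inv]
    _ ≤ √2 * (√n / (1 / 2)) := by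
        gcongr
        refine (sum_Icc_rpow_sub_one_le (by norm_num) (by norm_num) N).trans ?_
        rw [← sqrt_eq_rpow]
        gcongr
    _ ≤ 3 * √n := by nlinarith [sqrt_nonneg n]

theorem sum_Ioc_inv_sq_le_inv {k : ℕ} (hk : k ≠ 0) (m : ℕ) :
    ∑ i ∈ Ioc k m, ((i : ℝ) ^ 2)⁻¹ ≤ (k : ℝ)⁻¹ := by
  rcases le_total k m with hkm | hmk
  · exact (sum_Ioc_inv_sq_le_sub hk hkm).trans (sub_le_self _ (by positivity))
  · rw [Finset.Ioc_eq_empty_of_le hmk, sum_empty]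
    positivity

theorem sum_Ioc_floor_inv_sq_le {n : ℝ} (hn : 2 ≤ n) (m : ℕ) :
    ∑ s ∈ Ioc ⌊n⌋₊ m, 1 / (6 * (s : ℝ) ^ 2 * √(2 / n) ^ 3) ≤ √n := by
  set ζ := √(2 / n)
  have hζ : 0 < ζ := sqrt_pos.2 (by positivity)
  have hζ2 : ζ ^ 2 = 2 / n := sq_sqrt (by positivity)
  have hζn : ζ * √n = √2 := by rw [← sqrt_mul (by positivity)]; field_simp
  have hN : n / 2 ≤ ⌊n⌋₊ := by linarith [Nat.lt_floor_add_one n]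
  have hN0 : ⌊n⌋₊ ≠ 0 := (Nat.floor_pos.2 (by linarith)).ne'
  calc ∑ s ∈ Ioc ⌊n⌋₊ m, 1 / (6 * (s : ℝ) ^ 2 * ζ ^ 3)
      = 1 / (6 * ζ ^ 3) * ∑ s ∈ Ioc ⌊n⌋₊ m, ((s : ℝ) ^ 2)⁻¹ := by
        rw [mul_sum]
        refine sum_congr rfl fun s _ => ?_
        field_simp
    _ ≤ 1 / (6 * ζ ^ 3) * (⌊n⌋₊ : ℝ)⁻¹ := by gcongr; exact sum_Ioc_inv_sq_le_inv hN0 m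
    _ ≤ √n := by
        rw [← div_eq_mul_inv, div_div, div_le_iff₀ (by positivity)]
        have h1 : 1 ≤ √2 := by rw [one_le_sqrt]; norm_num
        calc (1 : ℝ) ≤ 6 * ((2 / n) * (n / 2)) * √2 := by field_simp; linarith
          _ ≤ 6 * (ζ ^ 2 * ⌊n⌋₊) * (ζ * √n) := by rw [hζ2, hζn]; gcongr
          _ = √n * (6 * ζ ^ 3 * ⌊n⌋₊) := by ring

section
variable {Ω : Type*} [MeasurableSpace Ω] {μ : Measure Ω} {X : ℕ → Ω → ℝ} {μ₀ : ℝ}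

variable (μ X μ₀) in
def HasHoeffdingTail : Prop :=
  ∀ s : ℕ, 0 < s → ∀ t : ℝ, 0 ≤ t →
    μ.real {ω | t < (∑ k ∈ range s, X k ω) / s - μ₀} ≤ exp (-2 * s * t ^ 2)

theorem hasHoeffdingTail_of_iIndepFun [IsProbabilityMeasure μ] (hmeas : ∀ k, Measurable (X k))
    (hindep : iIndepFun X μ) (hbound : ∀ k ω, X k ω ∈ Icc (0 : ℝ) 1)
    (hmean : ∀ k, ∫ ω, X k ω ∂μ = μ₀) :
    HasHoeffdingTail μ X μ₀ := by
  intro s hs t ht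
  set c : NNReal := (‖(1:ℝ) - 0‖₊ / 2) ^ 2 with hc
  have hc' : (c : ℝ) = 1 / 4 := by norm_num [hc]
  have hsub : ∀ k, HasSubgaussianMGF (fun ω => X k ω - μ₀) c μ := fun k =>
    hmean k ▸ hasSubgaussianMGF_of_mem_Icc (hmeas k).aemeasurable (ae_of_all _ (hbound k))
  have hindep' : iIndepFun (fun k ω => X k ω - μ₀) μ :=
    hindep.comp (fun _ x => x - μ₀) fun _ => measurable_id.sub_const μ₀
  have hs' : (0 : ℝ) < s := by exact_mod_cast hs
  calc μ.real {ω | t < (∑ k ∈ range s, X k ω) / s - μ₀}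
      ≤ μ.real {ω | s * t ≤ ∑ k ∈ range s, (X k ω - μ₀)} := by
        refine measureReal_mono (fun ω hω => ?_)
        simp only [Set.mem_ofPred_eq, sum_sub_distrib, sum_const, card_range, nsmul_eq_mul] at hω ⊢
        rw [lt_sub_iff_add_lt, lt_div_iff₀ hs'] at hω
        linarith
    _ ≤ exp (-(s * t) ^ 2 / (2 * s * c)) :=
        HasSubgaussianMGF.measure_sum_range_ge_le_of_iIndepFun hindep' (fun k _ => hsub k)
          (by positivity)
    _ = exp (-2 * s * t ^ 2) := by
        rw [hc']
        congr 1
        field_simp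
        ring

variable (μ X μ₀) in
theorem antitone_measure_mean_add_gt [IsFiniteMeasure μ] (s : ℕ) (c : ℝ) :
    Antitone fun y => (μ {ω | (∑ k ∈ range s, X k ω) / s + c - μ₀ > y}).toReal :=
  fun _ _ hyy' => ENNReal.toReal_mono (measure_ne_top μ _)
    (measure_mono fun _ hω => lt_of_le_of_lt hyy' hω)

theorem measure_mean_add_gt_le (hX : HasHoeffdingTail μ X μ₀) {s : ℕ} (hs : 0 < s)
    {c y : ℝ} (hcy : c ≤ y) :
    (μ {ω | (∑ k ∈ range s, X k ω) / s + c - μ₀ > y}).toReal ≤ exp (-2 * s * (y - c) ^ 2) := by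
  have hset : {ω | (∑ k ∈ range s, X k ω) / s + c - μ₀ > y}
      = {ω | y - c < (∑ k ∈ range s, X k ω) / s - μ₀} := by
    ext ω
    simp only [Set.mem_ofPred_eq]
    constructor <;> intro h <;> linarith
  rw [hset]
  exact hX s hs _ (sub_nonneg.2 hcy)

theorem measure_mean_add_gt_le_div_sq (hX : HasHoeffdingTail μ X μ₀) {s : ℕ} (hs : 0 < s)
    {c y : ℝ} (hcy : c < y) :
    (μ {ω | (∑ k ∈ range s, X k ω) / s + c - μ₀ > y}).toReal ≤ (1 / (2 * s)) / (y - c) ^ 2 := by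
  have hs' : (0 : ℝ) < s := by exact_mod_cast hs
  have hyc : 0 < y - c := sub_pos.2 hcy
  calc _ ≤ exp (-(2 * s * (y - c) ^ 2)) := by
        simpa [neg_mul] using measure_mean_add_gt_le hX hs hcy.le
    _ ≤ (Nat.factorial 1) / (2 * s * (y - c) ^ 2) ^ 1 :=
        exp_neg_le_factorial_div_pow (by positivity) 1
    _ = (1 / (2 * s)) / (y - c) ^ 2 := by
        rw [Nat.factorial_one, Nat.cast_one, pow_one]
        field_simp

theorem integrableOn_measure_mean_add_gt [IsProbabilityMeasure μ] (hX : HasHoeffdingTail μ X μ₀)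
    {s : ℕ} (hs : 0 < s) (c ζ : ℝ) :
    IntegrableOn (fun y => (μ {ω | (∑ k ∈ range s, X k ω) / s + c - μ₀ > y}).toReal) (Ioi ζ) :=
  integrableOn_Ioi_of_le_one_of_le_div_sq (antitone_measure_mean_add_gt μ X μ₀ s c).measurable
    (fun _ => ENNReal.toReal_nonneg) (fun _ => measureReal_le_one)
    (fun _ hy => measure_mean_add_gt_le_div_sq hX hs hy) ζ

theorem setIntegral_measure_mean_add_gt_le [IsProbabilityMeasure μ] (hX : HasHoeffdingTail μ X μ₀)
    {s : ℕ} (hs : 0 < s) {c ζ : ℝ} (hc : 0 ≤ c) (hζ : 0 ≤ ζ) :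
    ∫ y in Ioi ζ, (μ {ω | (∑ k ∈ range s, X k ω) / s + c - μ₀ > y}).toReal ≤ c + √(2 / s) := by
  have hs' : (0 : ℝ) < s := by exact_mod_cast hs
  convert setIntegral_Ioi_le_of_le_one_of_le_div_sq (K := 1 / (2 * s))
    (antitone_measure_mean_add_gt μ X μ₀ s c).measurable (fun _ => ENNReal.toReal_nonneg)
    (fun _ => measureReal_le_one) hc (by positivity)
    (fun _ hy => measure_mean_add_gt_le_div_sq hX hs hy) hζ using 2
  rw [show (2 : ℝ) / s = 2 ^ 2 * (1 / (2 * s)) by field_simp, sqrt_mul (by norm_num),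
    sqrt_sq zero_le_two]

theorem setIntegral_measure_mean_sub_gt_le (hX : HasHoeffdingTail μ X μ₀) {s : ℕ} (hs : 0 < s)
    {ζ : ℝ} (hζ : 0 < ζ) :
    ∫ y in Ioi ζ, (μ {ω | (∑ k ∈ range s, X k ω) / s - μ₀ > y}).toReal
      ≤ 1 / (6 * s ^ 2 * ζ ^ 3) := by
  have hs' : (0 : ℝ) < s := by exact_mod_cast hs
  have hrpow : ∀ {y : ℝ}, 0 < y → ∀ k : ℕ, y ^ (-(k : ℝ)) = (y ^ k)⁻¹ := fun hy k => by
    rw [rpow_neg hy.le, rpow_natCast]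
  calc _ ≤ 1 / (2 * s ^ 2) * (-ζ ^ (-4 + 1 : ℝ) / (-4 + 1)) := by
        refine setIntegral_Ioi_le_of_le_mul_rpow (by norm_num) hζ (fun _ => ENNReal.toReal_nonneg)
          fun y hy => ?_
        have hy0 : 0 < y := hζ.trans hy
        calc _ ≤ exp (-2 * s * y ^ 2) := hX s hs y hy0.le
          _ = exp (-(2 * s * y ^ 2)) := by ring_nf
          _ ≤ (Nat.factorial 2) / (2 * s * y ^ 2) ^ 2 :=
              exp_neg_le_factorial_div_pow (by positivity) 2
          _ = 1 / (2 * s ^ 2) * y ^ (-(4 : ℕ) : ℝ) := by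
              rw [hrpow hy0, Nat.factorial_two, Nat.cast_two]
              field_simp
    _ = 1 / (6 * s ^ 2 * ζ ^ 3) := by
        rw [show (-4 + 1 : ℝ) = -(3 : ℕ) by norm_num, hrpow hζ]
        field_simp
        norm_num

theorem sum_setIntegral_measure_mean_add_bonus_le [IsProbabilityMeasure μ]
    (hX : HasHoeffdingTail μ X μ₀) {n ζ : ℝ} (hn : 0 ≤ n) (hζ : 0 ≤ ζ) {N : ℕ} (hN : (N : ℝ) ≤ n)
    {t : Finset ℕ} (ht : t ⊆ Icc 1 N) :
    ∑ s ∈ t, ∫ y in Ioi ζ, (μ {ω | (∑ k ∈ range s, X k ω) / s +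
      √((2 / s) * max (log (n / s)) 0) - μ₀ > y}).toReal ≤ 11 * √n := by
  calc _ ≤ ∑ s ∈ t, (√((2 / s) * max (log (n / s)) 0) + √(2 / s)) :=
        sum_le_sum fun s hs => setIntegral_measure_mean_add_gt_le hX (mem_Icc.1 (ht hs)).1
          (sqrt_nonneg _) hζ
    _ ≤ ∑ s ∈ Icc 1 N, (√((2 / s) * max (log (n / s)) 0) + √(2 / s)) :=
        sum_le_sum_of_subset_of_nonneg ht fun _ _ _ => by positivity
    _ ≤ 11 * √n := by
        rw [sum_add_distrib]
        linarith [sum_Icc_sqrt_two_div_mul_max_log_le hn hN, sum_Icc_sqrt_two_div_le hN]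

theorem sum_setIntegral_measure_mean_add_bonus_le_of_floor_lt (hX : HasHoeffdingTail μ X μ₀)
    {n : ℝ} (hn : 2 ≤ n) {m : ℕ} {t : Finset ℕ} (ht : t ⊆ Ioc ⌊n⌋₊ m) :
    ∑ s ∈ t, ∫ y in Ioi √(2 / n), (μ {ω | (∑ k ∈ range s, X k ω) / s +
      √((2 / s) * max (log (n / s)) 0) - μ₀ > y}).toReal ≤ √n := by
  have hbonus : ∀ s ∈ t, √((2 / s) * max (log (n / s)) 0) = 0 := fun s hs => by
    have hns : n < s := Nat.lt_of_floor_lt (mem_Ioc.1 (ht hs)).1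
    rw [max_eq_right (log_nonpos (by positivity) ((div_le_one (by linarith)).2 hns.le)),
      mul_zero, sqrt_zero]
  calc _ ≤ ∑ s ∈ t, 1 / (6 * (s : ℝ) ^ 2 * √(2 / n) ^ 3) := by
        refine sum_le_sum fun s hs => ?_
        rw [hbonus s hs]
        simp only [add_zero]
        exact setIntegral_measure_mean_sub_gt_le hX (by have := (mem_Ioc.1 (ht hs)).1; omega)
          (sqrt_pos.2 (by positivity))
    _ ≤ ∑ s ∈ Ioc ⌊n⌋₊ m, 1 / (6 * (s : ℝ) ^ 2 * √(2 / n) ^ 3) :=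
        sum_le_sum_of_subset_of_nonneg ht fun _ _ _ => by positivity
    _ ≤ √n := sum_Ioc_floor_inv_sq_le hn m

end

theorem integrated_moss_deviation_general
    {Ω : Type*} [MeasurableSpace Ω] (μ : Measure Ω) [IsProbabilityMeasure μ]
    (X : ℕ → Ω → ℝ) (μ₀ : ℝ)
    (hmeas : ∀ k, Measurable (X k))
    (hindep : iIndepFun X μ)
    (hbound : ∀ k ω, X k ω ∈ Set.Icc (0 : ℝ) 1)
    (hmean : ∀ k, ∫ ω, X k ω ∂μ = μ₀)
    (M T : ℝ) (hM : 0 < M) (hMT : 2 * M ≤ T)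
    (m : ℕ) :
    ∫ y in Set.Ioi (Real.sqrt (2 * M / T)),
        ∑ s ∈ Finset.Icc 1 m,
          (μ {ω | (∑ k ∈ Finset.range s, X k ω) / s +
            Real.sqrt ((2 / s) * max (Real.log (T / (M * s))) 0) - μ₀ > y}).toReal
      ≤ 19 * Real.sqrt (T / M) := by
  have hX := hasHoeffdingTail_of_iIndepFun hmeas hindep hbound hmean
  have hn : 2 ≤ T / M := (le_div_iff₀ hM).2 (by linarith)
  simp only [div_mul_eq_div_div T M, ← div_div_eq_mul_div 2 T M]
  generalize T / M = n at hn ⊢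
  rw [integral_finsetSum _ fun s hs => integrableOn_measure_mean_add_gt hX (mem_Icc.1 hs).1 _ _,
    ← sum_filter_add_sum_filter_not (Icc 1 m) (· ≤ ⌊n⌋₊)]
  have hhead := sum_setIntegral_measure_mean_add_bonus_le hX (by linarith) (sqrt_nonneg (2 / n))
    (Nat.floor_le (by linarith)) (t := (Finset.Icc 1 m).filter (· ≤ ⌊n⌋₊)) fun s hs => by
      simp only [mem_filter, Finset.mem_Icc] at hs ⊢; omega
  have htail := sum_setIntegral_measure_mean_add_bonus_le_of_floor_lt hX hn (m := m)
    (t := (Finset.Icc 1 m).filter (¬ · ≤ ⌊n⌋₊)) fun s hs => by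
      simp only [mem_filter, Finset.mem_Icc, Finset.mem_Ioc] at hs ⊢; omega
  linarith [sqrt_nonneg n]

/-- **Integrated MOSS deviation bound.** Let `(X k)` be i.i.d. `[0,1]`-valued with mean `μ₀`,
`X̄ s` the empirical mean of the first `s` samples, `M, T` reals with `0 < 2M ≤ T`, `m ≥ 1`,
and `ζ = √(2M/T)`.  Then
`∫_ζ^∞ ∑_{s=1}^m P(X̄ s + √((2/s)·max(log(T/(M·s)), 0)) - μ₀ > y) dy ≤ 19·√(T/M)`. -/
theorem integrated_moss_deviation
    {Ω : Type*} [MeasurableSpace Ω] (μ : Measure Ω) [IsProbabilityMeasure μ]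
    (X : ℕ → Ω → ℝ) (μ₀ : ℝ)
    (hmeas : ∀ k, Measurable (X k))
    (hindep : iIndepFun X μ)
    (hident : ∀ k l, IdentDistrib (X k) (X l) μ μ)
    (hbound : ∀ k ω, X k ω ∈ Set.Icc (0 : ℝ) 1)
    (hmean : ∀ k, ∫ ω, X k ω ∂μ = μ₀)
    (M T : ℝ) (hM : 0 < M) (hMT : 2 * M ≤ T)
    (m : ℕ) (hm : 1 ≤ m) :
    ∫ y in Set.Ioi (Real.sqrt (2 * M / T)),
        ∑ s ∈ Finset.Icc 1 m,
          (μ {ω | (∑ k ∈ Finset.range s, X k ω) / s +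
            Real.sqrt ((2 / s) * max (Real.log (T / (M * s))) 0) - μ₀ > y}).toReal
      ≤ 19 * Real.sqrt (T / M) :=
  integrated_moss_deviation_general μ X μ₀ hmeas hindep hbound hmean M T hM hMT m
end

section
/- Integrated UCB deviation bound: Let (X_k)_{k≥1} be i.i.d. random variables with X_k ∈ [0,1] and mean μ, and let X̄_s = (1/s)Σ_{k=1}^{s} X_k. Let T ≥ 2 be a real number, m ≥ 1 an integer, and ζ > 0. Then ∫_ζ^∞ Σ_{s=1}^{m} P( X̄_s + √(log T / s) − μ > y ) dy ≤ 3·log T/ζ + 4/(T·ζ). -/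
/-!
Hoeffding's inequality bounds the `s`-th probability at level `y > 0` by
`exp (-2 s (y - √(log T / s))²)`, and `2 (u - v)² ≥ u² - 2 v²` turns this into
`min 1 (exp (2 log T - s y²))`. Comparing the sum over `s` with the integral of this antitone
function gives at most `(2 log T + 1) / y²`; its integral over `(ζ, ∞)` is `(2 log T + 1) / ζ`,
and `1 ≤ log T + 1 / T` finishes the proof.
-/

open MeasureTheory ProbabilityTheory Real Set

lemma measureReal_sum_range_sub_ge_le_of_mem_Icc {Ω : Type*} [MeasurableSpace Ω]
    {μ : Measure Ω} [IsProbabilityMeasure μ] {X : ℕ → Ω → ℝ} {μ₀ a b : ℝ}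
    (hmeas : ∀ k, AEMeasurable (X k) μ) (hindep : iIndepFun X μ)
    (hbound : ∀ k, ∀ᵐ ω ∂μ, X k ω ∈ Icc a b) (hmean : ∀ k, μ[X k] = μ₀) (n : ℕ) {ε : ℝ}
    (hε : 0 ≤ ε) :
    μ.real {ω | ε ≤ ∑ k ∈ Finset.range n, (X k ω - μ₀)}
      ≤ exp (-2 * ε ^ 2 / (n * (b - a) ^ 2)) := by
  have hsubG : ∀ k < n, HasSubgaussianMGF (fun ω ↦ X k ω - μ₀) ((‖b - a‖₊ / 2) ^ 2) μ :=
    fun k _ ↦ hmean k ▸ hasSubgaussianMGF_of_mem_Icc (hmeas k) (hbound k)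
  have hindep' : iIndepFun (fun k ω ↦ X k ω - μ₀) μ :=
    hindep.comp (fun _ x ↦ x - μ₀) fun _ ↦ measurable_id.sub_const μ₀
  refine (HasSubgaussianMGF.measure_sum_range_ge_le_of_iIndepFun hindep' hsubG hε).trans_eq ?_
  congr 1
  push_cast
  rw [Real.norm_eq_abs, div_pow, sq_abs,
    show 2 * (n : ℝ) * ((b - a) ^ 2 / 2 ^ 2) = n * (b - a) ^ 2 / 2 by ring, div_div_eq_mul_div]
  ring

lemma sum_Icc_min_one_exp_le {a b : ℝ} (ha : 0 ≤ a) (hb : 0 < b) (m : ℕ) :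
    ∑ s ∈ Finset.Icc 1 m, min 1 (exp (a - b * s)) ≤ (a + 1) / b := by
  set f : ℝ → ℝ := fun x ↦ min 1 (exp (a - b * x))
  have hf_anti : Antitone f := fun x y hxy ↦
    min_le_min_left _ (exp_le_exp.2 (by nlinarith))
  have hf_cont : Continuous f := by fun_prop
  -- Enlarging `m` to `M ≥ a / b` lets the integral split where `exp (a - b x)` crosses `1`.
  set σ := a / b
  set M := max m ⌈σ⌉₊
  have hσ : 0 ≤ σ := by positivity
  have hσM : σ ≤ M := (Nat.le_ceil σ).trans (by exact_mod_cast le_max_right m ⌈σ⌉₊)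
  have hexp : ∫ x in σ..M, exp (a - b * x) = (1 - exp (a - b * M)) / b := by
    rw [intervalIntegral.integral_comp_sub_mul _ hb.ne', integral_exp,
      show a - b * σ = 0 by simp only [σ]; field_simp; ring, exp_zero, smul_eq_mul]
    ring
  calc ∑ s ∈ Finset.Icc 1 m, f s
      ≤ ∑ s ∈ Finset.Icc 1 M, f s :=
        Finset.sum_le_sum_of_subset_of_nonneg (Finset.Icc_subset_Icc_right (le_max_left _ _))
          fun _ _ _ ↦ by positivity
    _ = ∑ i ∈ Finset.range M, f (0 + (i + 1 : ℕ)) := by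
        rw [← Finset.Ico_add_one_right_eq_Icc, Finset.sum_Ico_eq_sum_range]
        simp [add_comm]
    _ ≤ ∫ x in (0 : ℝ)..0 + M, f x := (hf_anti.antitoneOn _).sum_le_integral
    _ = (∫ x in (0 : ℝ)..σ, f x) + ∫ x in σ..M, f x := by
        rw [zero_add, intervalIntegral.integral_add_adjacent_intervals
          (hf_cont.intervalIntegrable _ _) (hf_cont.intervalIntegrable _ _)]
    _ ≤ (∫ _ in (0 : ℝ)..σ, (1 : ℝ)) + ∫ x in σ..M, exp (a - b * x) := by
        gcongr
        · exact intervalIntegral.integral_mono_on hσ (hf_cont.intervalIntegrable _ _)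
            intervalIntegrable_const fun x _ ↦ min_le_left _ _
        · exact intervalIntegral.integral_mono_on hσM (hf_cont.intervalIntegrable _ _)
            ((by fun_prop : Continuous fun x ↦ exp (a - b * x)).intervalIntegrable _ _)
            fun x _ ↦ min_le_right _ _
    _ ≤ σ + 1 / b := by
        rw [intervalIntegral.integral_const, hexp, smul_eq_mul, mul_one, sub_zero]
        gcongr
        linarith [exp_pos (a - b * M)]
    _ = (a + 1) / b := by ring

lemma integral_Ioi_div_sq (c : ℝ) {ζ : ℝ} (hζ : 0 < ζ) :
    ∫ y in Ioi ζ, c / y ^ 2 = c / ζ := by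
  have h : EqOn (fun y : ℝ ↦ c / y ^ 2) (fun y ↦ c * y ^ (-2 : ℝ)) (Ioi ζ) := fun y hy ↦ by
    simp [rpow_neg (hζ.trans hy).le, div_eq_mul_inv]
  rw [setIntegral_congr_fun measurableSet_Ioi h, integral_const_mul,
    integral_Ioi_rpow_of_lt (by norm_num) hζ]
  norm_num [rpow_neg_one, div_eq_mul_inv]

lemma integrableOn_Ioi_div_sq (c : ℝ) {ζ : ℝ} (hζ : 0 < ζ) :
    IntegrableOn (fun y : ℝ ↦ c / y ^ 2) (Ioi ζ) := by
  refine IntegrableOn.congr_fun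
    ((integrableOn_Ioi_rpow_of_lt (by norm_num : (-2 : ℝ) < -1) hζ).const_mul c)
    (fun y hy ↦ ?_) measurableSet_Ioi
  simp [rpow_neg (hζ.trans hy).le, div_eq_mul_inv]

section UCB

variable {Ω : Type*} [MeasurableSpace Ω] {μ : Measure Ω} [IsProbabilityMeasure μ]
  {X : ℕ → Ω → ℝ} {μ₀ : ℝ}

lemma measureReal_ucb_gt_le_exp (hmeas : ∀ k, AEMeasurable (X k) μ) (hindep : iIndepFun X μ)
    (hbound : ∀ k, ∀ᵐ ω ∂μ, X k ω ∈ Icc (0 : ℝ) 1) (hmean : ∀ k, μ[X k] = μ₀)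
    {s : ℕ} (hs : 1 ≤ s) {L y : ℝ} (hL : 0 ≤ L) (hy : 0 ≤ y) :
    μ.real {ω | (∑ k ∈ Finset.range s, X k ω) / s + √(L / s) - μ₀ > y}
      ≤ exp (2 * L - y ^ 2 * s) := by
  have hs0 : (0 : ℝ) < s := by exact_mod_cast hs
  set w := √(L / s)
  have hLw : L = s * w ^ 2 := by rw [sq_sqrt (by positivity)]; field_simp
  rcases le_or_gt w y with hwy | hyw
  · have hsub : {ω | (∑ k ∈ Finset.range s, X k ω) / s + w - μ₀ > y}
        ⊆ {ω | s * (y - w) ≤ ∑ k ∈ Finset.range s, (X k ω - μ₀)} := fun ω hω ↦ by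
      simp only [mem_ofPred_eq, gt_iff_lt, Finset.sum_sub_distrib, Finset.sum_const,
        Finset.card_range, nsmul_eq_mul] at hω ⊢
      have := (lt_div_iff₀ hs0).1
        (show y - w + μ₀ < (∑ k ∈ Finset.range s, X k ω) / s by linarith)
      linarith
    calc μ.real {ω | (∑ k ∈ Finset.range s, X k ω) / s + w - μ₀ > y}
        ≤ exp (-2 * (s * (y - w)) ^ 2 / (s * (1 - 0) ^ 2)) :=
          (measureReal_mono hsub).trans <| measureReal_sum_range_sub_ge_le_of_mem_Icc hmeas hindep
            hbound hmean s (mul_nonneg hs0.le (sub_nonneg.2 hwy))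
      _ ≤ exp (2 * L - y ^ 2 * s) := by
          refine exp_le_exp.2 ?_
          rw [hLw, le_sub_iff_add_le, div_add' _ _ _ (by positivity), div_le_iff₀ (by positivity)]
          nlinarith [mul_nonneg hs0.le (sq_nonneg (y - 2 * w))]
  · have hyL : y ^ 2 * s < L := by
      rw [hLw, mul_comm]
      exact mul_lt_mul_of_pos_left (pow_lt_pow_left₀ hyw hy two_ne_zero) hs0
    calc μ.real _ ≤ 1 := measureReal_le_one
      _ ≤ exp (2 * L - y ^ 2 * s) := one_le_exp (by linarith)

lemma sum_measureReal_ucb_gt_le (hmeas : ∀ k, AEMeasurable (X k) μ) (hindep : iIndepFun X μ)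
    (hbound : ∀ k, ∀ᵐ ω ∂μ, X k ω ∈ Icc (0 : ℝ) 1) (hmean : ∀ k, μ[X k] = μ₀)
    (m : ℕ) {L y : ℝ} (hL : 0 ≤ L) (hy : 0 < y) :
    ∑ s ∈ Finset.Icc 1 m, μ.real {ω | (∑ k ∈ Finset.range s, X k ω) / s + √(L / s) - μ₀ > y}
      ≤ (2 * L + 1) / y ^ 2 := by
  refine (Finset.sum_le_sum fun s hs ↦ le_min measureReal_le_one
    (measureReal_ucb_gt_le_exp hmeas hindep hbound hmean (Finset.mem_Icc.1 hs).1 hL hy.le)).trans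
    (sum_Icc_min_one_exp_le (by positivity) (by positivity) m)

end UCB

lemma two_mul_log_add_one_le {T : ℝ} (hT : 0 < T) : 2 * log T + 1 ≤ 3 * log T + 4 / T := by
  rw [div_eq_mul_inv]
  linarith [one_sub_inv_le_log_of_pos hT, inv_pos.2 hT]

theorem integrated_ucb_deviation_general
    {Ω : Type*} [MeasurableSpace Ω] (μ : Measure Ω) [IsProbabilityMeasure μ]
    (X : ℕ → Ω → ℝ) (μ₀ : ℝ)
    (hmeas : ∀ k, Measurable (X k))
    (hindep : iIndepFun X μ)
    (hbound : ∀ k ω, X k ω ∈ Set.Icc (0 : ℝ) 1)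
    (hmean : ∀ k, ∫ ω, X k ω ∂μ = μ₀)
    (T : ℝ) (hT : 2 ≤ T) (m : ℕ) (ζ : ℝ) (hζ : 0 < ζ) :
    ∫ y in Set.Ioi ζ,
        ∑ s ∈ Finset.Icc 1 m,
          (μ {ω | (∑ k ∈ Finset.range s, X k ω) / s +
            Real.sqrt (Real.log T / s) - μ₀ > y}).toReal
      ≤ 3 * Real.log T / ζ + 4 / (T * ζ) := by
  have hL : 0 ≤ log T := log_nonneg (by linarith)
  calc _ ≤ ∫ y in Ioi ζ, (2 * log T + 1) / y ^ 2 :=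
        integral_mono_of_nonneg
          (ae_of_all _ fun _ ↦ Finset.sum_nonneg fun _ _ ↦ ENNReal.toReal_nonneg)
          (integrableOn_Ioi_div_sq _ hζ) <| (ae_restrict_iff' measurableSet_Ioi).2 <|
            ae_of_all _ fun y hy ↦ sum_measureReal_ucb_gt_le (fun k ↦ (hmeas k).aemeasurable)
              hindep (fun k ↦ ae_of_all _ (hbound k)) hmean m hL (hζ.trans hy)
    _ = (2 * log T + 1) / ζ := integral_Ioi_div_sq _ hζ
    _ ≤ (3 * log T + 4 / T) / ζ := by gcongr ?_ / _; exact two_mul_log_add_one_le (by linarith)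
    _ = 3 * log T / ζ + 4 / (T * ζ) := by field_simp

/-- **Integrated UCB deviation bound.** Let `(X k)` be i.i.d. `[0,1]`-valued with mean `μ₀`,
`X̄ s` the empirical mean of the first `s` samples, `T ≥ 2` real, `m ≥ 1`, `ζ > 0`.  Then
`∫_ζ^∞ ∑_{s=1}^m P(X̄ s + √(log T / s) - μ₀ > y) dy ≤ 3·log T/ζ + 4/(Tζ)`. -/
theorem integrated_ucb_deviation
    {Ω : Type*} [MeasurableSpace Ω] (μ : Measure Ω) [IsProbabilityMeasure μ]
    (X : ℕ → Ω → ℝ) (μ₀ : ℝ)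
    (hmeas : ∀ k, Measurable (X k))
    (hindep : iIndepFun X μ)
    (hident : ∀ k l, IdentDistrib (X k) (X l) μ μ)
    (hbound : ∀ k ω, X k ω ∈ Set.Icc (0 : ℝ) 1)
    (hmean : ∀ k, ∫ ω, X k ω ∂μ = μ₀)
    (T : ℝ) (hT : 2 ≤ T) (m : ℕ) (hm : 1 ≤ m) (ζ : ℝ) (hζ : 0 < ζ) :
    ∫ y in Set.Ioi ζ,
        ∑ s ∈ Finset.Icc 1 m,
          (μ {ω | (∑ k ∈ Finset.range s, X k ω) / s +
            Real.sqrt (Real.log T / s) - μ₀ > y}).toReal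
      ≤ 3 * Real.log T / ζ + 4 / (T * ζ) :=
  integrated_ucb_deviation_general μ X μ₀ hmeas hindep hbound hmean T hT m ζ hζ
end

section
/- Logarithmic moment-to-mean inequality: For all reals ν, γ, θ with 0 < γ ≤ ν and θ ≥ 0, setting r = γ/(ν² + ν·γ/3), one has (1/r)·log( 1 + (2/(r·γ))·e^{r(ν + θ)} ) ≤ (3ν²/γ)·log(2ν/γ) + ν + θ. -/
set_option maxHeartbeats 1000000 in
/-- **Logarithmic moment-to-mean inequality.** For reals `0 < γ ≤ ν` and `θ ≥ 0`, with
`r = γ / (ν² + νγ/3)`, one has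
`(1/r) · log(1 + (2/(rγ)) · exp(r(ν + θ))) ≤ (3ν²/γ) · log(2ν/γ) + ν + θ`. -/
theorem log_moment_to_mean (ν γ θ : ℝ) (hγ : 0 < γ) (hνγ : γ ≤ ν) (hθ : 0 ≤ θ) :
    (1 / (γ / (ν ^ 2 + ν * γ / 3))) *
        Real.log (1 + 2 / ((γ / (ν ^ 2 + ν * γ / 3)) * γ) *
          Real.exp ((γ / (ν ^ 2 + ν * γ / 3)) * (ν + θ)))
      ≤ 3 * ν ^ 2 / γ * Real.log (2 * ν / γ) + ν + θ := by
  have hν : 0 < ν := lt_of_lt_of_le hγ hνγ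
  have hD : (0:ℝ) < ν ^ 2 + ν * γ / 3 := by positivity
  set D := ν ^ 2 + ν * γ / 3 with hDdef
  set r := γ / D with hrdef
  have hr : 0 < r := div_pos hγ hD
  set A := 2 / (r * γ) with hAdef
  have hA : 0 < A := by positivity
  have hAval : A = 2 * D / γ ^ 2 := by
    rw [hAdef, hrdef]
    field_simp
  set x := r * (ν + θ) with hxdef
  have hx : 0 ≤ x := by positivity
  have hex : (1:ℝ) ≤ Real.exp x := Real.one_le_exp hx
  have hexpos : 0 < Real.exp x := Real.exp_pos x
  -- Step 1: 1 + A e^x ≤ (1+A) e^x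
  have h1 : 1 + A * Real.exp x ≤ (1 + A) * Real.exp x := by nlinarith
  have hpos1 : 0 < 1 + A * Real.exp x := by positivity
  have hlog1 : Real.log (1 + A * Real.exp x) ≤ Real.log (1 + A) + x := by
    calc Real.log (1 + A * Real.exp x) ≤ Real.log ((1 + A) * Real.exp x) :=
          Real.log_le_log hpos1 h1
      _ = Real.log (1 + A) + x := by
          rw [Real.log_mul (by positivity) (ne_of_gt hexpos), Real.log_exp]
  -- Step 2: (1+A)^4 ≤ (2ν/γ)^9
  have htν : 2 * ν / γ ≥ 2 := by
    rw [ge_iff_le, le_div_iff₀ hγ]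
    nlinarith
  have hlog2ν : 0 ≤ Real.log (2 * ν / γ) :=
    Real.log_nonneg (by linarith)
  have hbound : 1 + A ≤ 11 / 3 * (ν / γ) ^ 2 := by
    have hγ2 : (0:ℝ) < γ ^ 2 := by positivity
    rw [hAval, hDdef, div_pow, ← sub_nonneg]
    have heq : 11 / 3 * (ν ^ 2 / γ ^ 2) - (1 + 2 * (ν ^ 2 + ν * γ / 3) / γ ^ 2)
        = (11 / 3 * ν ^ 2 - γ ^ 2 - 2 * (ν ^ 2 + ν * γ / 3)) / γ ^ 2 := by
      field_simp; ring
    rw [heq]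
    apply div_nonneg _ (le_of_lt hγ2)
    nlinarith [mul_pos hν hγ]
  have hpow : (1 + A) ^ 4 ≤ (2 * ν / γ) ^ 9 := by
    have h14 : (1 + A) ^ 4 ≤ (11 / 3 * (ν / γ) ^ 2) ^ 4 := by
      apply pow_le_pow_left₀ (by positivity) hbound
    have hνγ' : 0 < ν / γ := by positivity
    have h1t : 1 ≤ ν / γ := (one_le_div hγ).mpr hνγ
    calc (1 + A) ^ 4 ≤ (11 / 3 * (ν / γ) ^ 2) ^ 4 := h14
      _ = (14641 / 81) * (ν / γ) ^ 8 := by ring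
      _ ≤ 512 * (ν / γ) ^ 9 := by
          nlinarith [pow_le_pow_right₀ h1t (show 8 ≤ 9 by norm_num),
            pow_pos hνγ' 8, pow_pos hνγ' 9]
      _ = (2 * ν / γ) ^ 9 := by
          rw [mul_div_assoc]
          ring
  have hlog2 : Real.log (1 + A) ≤ 9 / 4 * Real.log (2 * ν / γ) := by
    have h4 : 4 * Real.log (1 + A) ≤ 9 * Real.log (2 * ν / γ) := by
      have := Real.log_le_log (by positivity) hpow
      rw [Real.log_pow, Real.log_pow] at this
      push_cast at this
      linarith
    linarith
  -- Step 3: combine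
  have hDle : 9 / 4 * D ≤ 3 * ν ^ 2 := by
    rw [hDdef]; nlinarith
  have h1r : 1 / r = D / γ := by
    rw [hrdef, one_div_div]
  have hxr : 1 / r * x = ν + θ := by
    rw [hxdef]
    field_simp
  have hlogA : 0 ≤ Real.log (1 + A) := Real.log_nonneg (by linarith)
  have key : 1 / r * Real.log (1 + A) ≤ 3 * ν ^ 2 / γ * Real.log (2 * ν / γ) := by
    rw [h1r]
    calc D / γ * Real.log (1 + A) ≤ D / γ * (9 / 4 * Real.log (2 * ν / γ)) := by
          apply mul_le_mul_of_nonneg_left hlog2 (by positivity)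
      _ = (9 / 4 * D) / γ * Real.log (2 * ν / γ) := by ring
      _ ≤ 3 * ν ^ 2 / γ * Real.log (2 * ν / γ) := by
          apply mul_le_mul_of_nonneg_right _ hlog2ν
          exact (div_le_div_iff_of_pos_right hγ).mpr hDle
  calc 1 / r * Real.log (1 + A * Real.exp x)
      ≤ 1 / r * (Real.log (1 + A) + x) := by
        apply mul_le_mul_of_nonneg_left hlog1 (by positivity)
    _ = 1 / r * Real.log (1 + A) + 1 / r * x := by ring
    _ ≤ 3 * ν ^ 2 / γ * Real.log (2 * ν / γ) + (ν + θ) := by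
        rw [hxr]; linarith
    _ = 3 * ν ^ 2 / γ * Real.log (2 * ν / γ) + ν + θ := by ring
end

section
/- Square-root Lyapunov drift step: Let d ≥ 1, let q ∈ ℝ^d with ‖q‖₂ ≥ θ for some θ > 0, let β ≥ 0 and C ≥ 0, and let Y be a random vector in ℝ^d with E[‖Y‖₂²] ≤ ‖q‖₂² − 2β·‖q‖₁ + 2C. Then E[‖Y‖₂] ≤ ‖q‖₂ − β + C/θ. -/
/-!
By Jensen, `(E‖Y‖)² ≤ E‖Y‖²`. Since `‖q‖₂ ≤ ‖q‖₁` and `C ≤ (C/θ)‖q‖₂`, the drift bound gives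
`E‖Y‖² ≤ ‖q‖₂² - 2β‖q‖₂ + 2(C/θ)‖q‖₂ ≤ (‖q‖₂ - β + C/θ)²`, and taking square roots concludes.
-/

open MeasureTheory ProbabilityTheory

lemma EuclideanSpace.norm_le_sum_abs {ι : Type*} [Fintype ι] (x : EuclideanSpace ℝ ι) :
    ‖x‖ ≤ ∑ i, |x i| := by
  conv_lhs => rw [← (EuclideanSpace.basisFun ι ℝ).sum_repr x]
  refine (norm_sum_le _ _).trans_eq ?_
  simp [norm_smul]

lemma sq_integral_le_integral_sq {Ω : Type*} [MeasurableSpace Ω] {μ : Measure Ω}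
    [IsProbabilityMeasure μ] {f : Ω → ℝ} (hf : MemLp f 2 μ) :
    (∫ ω, f ω ∂μ) ^ 2 ≤ ∫ ω, f ω ^ 2 ∂μ := by
  have h := variance_nonneg f μ
  rw [variance_eq_sub hf] at h
  simpa [sub_nonneg] using h

lemma le_sub_add_div_of_sq_le {x a β C θ : ℝ} (hθ : 0 < θ) (ha : θ ≤ a)
    (hC : 0 ≤ C) (h : x ^ 2 ≤ a ^ 2 - 2 * β * a + 2 * C) : x ≤ a - β + C / θ := by
  set c := C / θ
  have hCa : C ≤ c * a := by
    rw [div_mul_eq_mul_div, le_div_iff₀ hθ]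
    exact mul_le_mul_of_nonneg_left ha hC
  have hsq : x ^ 2 ≤ (a - β + c) ^ 2 := by nlinarith [sq_nonneg (β - c)]
  -- otherwise `β > a + c`, and the right side of `h` would be below `-a² < 0`
  have hpos : 0 ≤ a - β + c := by nlinarith
  exact (abs_le_of_sq_le_sq' hsq hpos).2

theorem sqrt_lyapunov_drift_step_general {d : ℕ}
    {Ω : Type*} [MeasurableSpace Ω] (μ : Measure Ω) [IsProbabilityMeasure μ]
    (q : EuclideanSpace ℝ (Fin d)) (θ β C : ℝ)
    (hθ : 0 < θ) (hq : θ ≤ ‖q‖) (hβ : 0 ≤ β) (hC : 0 ≤ C)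
    (Y : Ω → EuclideanSpace ℝ (Fin d)) (hYmeas : Measurable Y)
    (hYint : Integrable (fun ω : Ω => ‖Y ω‖ ^ 2) μ)
    (hdrift : ∫ ω, ‖Y ω‖ ^ 2 ∂μ ≤ ‖q‖ ^ 2 - 2 * β * (∑ i, |q i|) + 2 * C) :
    ∫ ω, ‖Y ω‖ ∂μ ≤ ‖q‖ - β + C / θ := by
  have hY : MemLp (fun ω => ‖Y ω‖) 2 μ :=
    (memLp_two_iff_integrable_sq hYmeas.norm.aestronglyMeasurable).2 hYint
  refine le_sub_add_div_of_sq_le hθ hq hC ?_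
  calc (∫ ω, ‖Y ω‖ ∂μ) ^ 2 ≤ ∫ ω, ‖Y ω‖ ^ 2 ∂μ := sq_integral_le_integral_sq hY
    _ ≤ ‖q‖ ^ 2 - 2 * β * (∑ i, |q i|) + 2 * C := hdrift
    _ ≤ ‖q‖ ^ 2 - 2 * β * ‖q‖ + 2 * C := by
      gcongr
      exact EuclideanSpace.norm_le_sum_abs q

/-- **Square-root Lyapunov drift step.** Let `d ≥ 1`, `q ∈ ℝ^d` with `‖q‖₂ ≥ θ > 0`,
`β ≥ 0`, `C ≥ 0`, and let `Y` be a random vector in `ℝ^d` with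
`E[‖Y‖₂²] ≤ ‖q‖₂² - 2β‖q‖₁ + 2C`.  Then `E[‖Y‖₂] ≤ ‖q‖₂ - β + C/θ`. -/
theorem sqrt_lyapunov_drift_step {d : ℕ} (hd : 1 ≤ d)
    {Ω : Type*} [MeasurableSpace Ω] (μ : Measure Ω) [IsProbabilityMeasure μ]
    (q : EuclideanSpace ℝ (Fin d)) (θ β C : ℝ)
    (hθ : 0 < θ) (hq : θ ≤ ‖q‖) (hβ : 0 ≤ β) (hC : 0 ≤ C)
    (Y : Ω → EuclideanSpace ℝ (Fin d)) (hYmeas : Measurable Y)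
    (hYint : Integrable (fun ω : Ω => ‖Y ω‖ ^ 2) μ)
    (hdrift : ∫ ω, ‖Y ω‖ ^ 2 ∂μ ≤ ‖q‖ ^ 2 - 2 * β * (∑ i, |q i|) + 2 * C) :
    ∫ ω, ‖Y ω‖ ∂μ ≤ ‖q‖ - β + C / θ :=
  sqrt_lyapunov_drift_step_general μ q θ β C hθ hq hβ hC Y hYmeas hYint hdrift
end
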